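/- arXiv:math/0511708 — 10 statements merged into one kernel-verified Lean document; each statement's English description precedes it below -/
import Mathlib

section
/- Let F be a real Banach space, λ₀ ∈ ℝ, M ∈ (0,∞), and let (G_λ)_{λ>λ₀} be a pseudo-resolvent on F such that ‖λ G_λ f‖ ≤ M‖f‖ for all λ > λ₀ and all f ∈ F. Then the set of strong continuity F_G := {f ∈ F : ‖λ G_λ f − f‖ → 0 as λ → ∞} is a closed linear subspace of F and, for every μ > λ₀, F_G equals the norm closure of the range G_μ(F). -/
open Filter Topology

/-!
The operators `λ G_λ` are uniformly bounded, so the family is equicontinuous and the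
set where `λ G_λ f → f` is closed. The resolvent identity gives `G_λ x = G_μ (x + (μ - λ) G_λ x)`,
hence `λ G_λ f = G_λ (λ f)` lies in the range of `G_μ` and every point of strong continuity is in
its closure. Conversely it gives `λ G_λ G_μ g = G_μ g + (λ - μ)⁻¹ (μ G_μ g - λ G_λ g)`, whose last
term tends to `0` because `λ G_λ g` stays bounded; so the range of `G_μ` consists of points of
strong continuity, and so does its closure.
-/

section Equicontinuity

variable {𝕜 E F ι : Type*} [NontriviallyNormedField 𝕜] [NormedAddCommGroup E] [NormedSpace 𝕜 E]
  [NormedAddCommGroup F] [NormedSpace 𝕜 F]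

theorem isClosed_setOf_tendsto_of_eventually_norm_apply_le {l : Filter ι} {T : ι → E →L[𝕜] F}
    {C : ℝ} (hT : ∀ᶠ i in l, ∀ x, ‖T i x‖ ≤ C * ‖x‖) {u : E → F} (hu : Continuous u) :
    IsClosed {x | Tendsto (T · x) l (𝓝 (u x))} := by
  obtain ⟨s, hs, hTs⟩ := hT.exists_mem
  have hequi : Equicontinuous ((↑) ∘ fun i : s => T i) :=
    ((NormedSpace.equicontinuous_TFAE fun i : s => T i).out 3 1).mp
      (⟨C, fun i => hTs i i.2⟩ : ∃ C, ∀ (i : s) x, ‖T i x‖ ≤ C * ‖x‖)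
  have hrestrict : ∀ x, Tendsto (T · x) l (𝓝 (u x)) ↔
      Tendsto (fun i : s => T i x) (comap (↑) l) (𝓝 (u x)) := fun x => by
    conv_lhs => rw [← map_comap_of_mem (f := l) (m := ((↑) : s → ι)) (by rwa [Subtype.range_coe])]
    exact tendsto_map'_iff
  simp_rw [hrestrict]
  exact hequi.isClosed_setOfPred_tendsto hu

end Equicontinuity

section PseudoResolvent

variable {F : Type*} [NormedAddCommGroup F] [NormedSpace ℝ F]

def strongContinuitySubmodule (G : ℝ → F →L[ℝ] F) : Submodule ℝ F where
  carrier := {f | Tendsto (fun lam : ℝ => lam • G lam f) atTop (𝓝 f)}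
  zero_mem' := by simp
  add_mem' {f g} hf hg := by
    simpa only [Set.mem_ofPred_eq, map_add, smul_add] using hf.add hg
  smul_mem' c f hf := by
    simpa only [Set.mem_ofPred_eq, map_smul, smul_comm _ c] using hf.const_smul c

theorem coe_strongContinuitySubmodule (G : ℝ → F →L[ℝ] F) :
    (strongContinuitySubmodule G : Set F) =
      {f | Tendsto (fun lam : ℝ => lam • G lam f) atTop (𝓝 f)} :=
  rfl

theorem isClosed_strongContinuitySubmodule {G : ℝ → F →L[ℝ] F} {M : ℝ}
    (hbdd : ∀ᶠ lam in atTop, ∀ f, ‖lam • G lam f‖ ≤ M * ‖f‖) :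
    IsClosed (strongContinuitySubmodule G : Set F) :=
  isClosed_setOf_tendsto_of_eventually_norm_apply_le (T := fun lam => lam • G lam) hbdd
    continuous_id

def IsPseudoResolvent (lam₀ : ℝ) (G : ℝ → F →L[ℝ] F) : Prop :=
  ∀ lam mu : ℝ, lam₀ < lam → lam₀ < mu → G lam - G mu = (mu - lam) • (G mu).comp (G lam)

namespace IsPseudoResolvent

variable {lam₀ lam mu : ℝ} {G : ℝ → F →L[ℝ] F}

theorem sub_apply_eq (hG : IsPseudoResolvent lam₀ G) (hlam : lam₀ < lam) (hmu : lam₀ < mu)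
    (x : F) : G lam x - G mu x = (mu - lam) • G mu (G lam x) :=
  congr($(hG lam mu hlam hmu) x)

theorem range_subset_range (hG : IsPseudoResolvent lam₀ G) (hlam : lam₀ < lam)
    (hmu : lam₀ < mu) : Set.range (G lam) ⊆ Set.range (G mu) := by
  rintro _ ⟨x, rfl⟩
  refine ⟨x + (mu - lam) • G lam x, ?_⟩
  rw [map_add, map_smul, ← hG.sub_apply_eq hlam hmu]
  abel

theorem tendsto_smul_apply_apply (hG : IsPseudoResolvent lam₀ G) (hmu : lam₀ < mu) {g : F}
    (hbdd : IsBoundedUnder (· ≤ ·) atTop fun lam : ℝ => ‖lam • G lam g‖) :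
    Tendsto (fun lam : ℝ => lam • G lam (G mu g)) atTop (𝓝 (G mu g)) := by
  have hsmall : Tendsto (fun lam : ℝ => (lam - mu)⁻¹ • (mu • G mu g - lam • G lam g)) atTop
      (𝓝 0) := by
    refine (tendsto_atTop_add_const_right _ (-mu) tendsto_id).inv_tendsto_atTop
      |>.zero_smul_isBoundedUnder_le ?_
    obtain ⟨C, hC⟩ := hbdd
    refine ⟨‖mu • G mu g‖ + C, eventually_map.mpr ?_⟩
    filter_upwards [eventually_map.mp hC] with lam hlam
    exact (norm_sub_le _ _).trans (add_le_add_right hlam _)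
  have hlim : Tendsto (fun lam : ℝ => G mu g + (lam - mu)⁻¹ • (mu • G mu g - lam • G lam g))
      atTop (𝓝 (G mu g)) := by
    simpa only [add_zero] using hsmall.const_add (G mu g)
  refine hlim.congr' ?_
  filter_upwards [eventually_gt_atTop (max lam₀ mu)] with lam hlam
  rw [max_lt_iff] at hlam
  have hne : lam - mu ≠ 0 := sub_ne_zero.mpr hlam.2.ne'
  have hcomp : G lam (G mu g) = (lam - mu)⁻¹ • (G mu g - G lam g) := by
    rw [hG.sub_apply_eq hmu hlam.1, inv_smul_smul₀ hne]
  rw [hcomp]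
  match_scalars <;> field_simp
  ring

theorem strongContinuitySubmodule_subset_closure_range (hG : IsPseudoResolvent lam₀ G)
    (hmu : lam₀ < mu) : (strongContinuitySubmodule G : Set F) ⊆ closure (Set.range (G mu)) := by
  intro f hf
  refine mem_closure_of_tendsto hf ?_
  filter_upwards [eventually_gt_atTop lam₀] with lam hlam
  rw [← map_smul]
  exact hG.range_subset_range hlam hmu ⟨lam • f, rfl⟩

end IsPseudoResolvent

end PseudoResolvent

theorem pseudoResolvent_strong_continuity_set_eq_closure_range_general
    {F : Type*} [NormedAddCommGroup F] [NormedSpace ℝ F]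
    (lam₀ M : ℝ) (G : ℝ → F →L[ℝ] F)
    (hres : ∀ lam mu : ℝ, lam₀ < lam → lam₀ < mu →
      G lam - G mu = (mu - lam) • ((G mu).comp (G lam)))
    (hbdd : ∀ lam : ℝ, lam₀ < lam → ∀ f : F, ‖lam • G lam f‖ ≤ M * ‖f‖) :
    IsClosed {f : F | Tendsto (fun lam : ℝ => lam • G lam f) atTop (𝓝 f)} ∧
    (∀ f g : F,
        f ∈ {f : F | Tendsto (fun lam : ℝ => lam • G lam f) atTop (𝓝 f)} →
        g ∈ {f : F | Tendsto (fun lam : ℝ => lam • G lam f) atTop (𝓝 f)} →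
        f + g ∈ {f : F | Tendsto (fun lam : ℝ => lam • G lam f) atTop (𝓝 f)}) ∧
    (∀ (c : ℝ) (f : F),
        f ∈ {f : F | Tendsto (fun lam : ℝ => lam • G lam f) atTop (𝓝 f)} →
        c • f ∈ {f : F | Tendsto (fun lam : ℝ => lam • G lam f) atTop (𝓝 f)}) ∧
    (∀ mu : ℝ, lam₀ < mu →
        {f : F | Tendsto (fun lam : ℝ => lam • G lam f) atTop (𝓝 f)} =
          closure (Set.range (G mu))) := by
  set S := strongContinuitySubmodule G
  have hG : IsPseudoResolvent lam₀ G := hres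
  have hbdd' : ∀ᶠ lam in atTop, ∀ f, ‖lam • G lam f‖ ≤ M * ‖f‖ :=
    (eventually_gt_atTop lam₀).mono hbdd
  have hclosed : IsClosed (S : Set F) := isClosed_strongContinuitySubmodule hbdd'
  simp only [← coe_strongContinuitySubmodule G, SetLike.mem_coe]
  refine ⟨hclosed, fun f g => S.add_mem, fun c f => S.smul_mem c, fun mu hmu => ?_⟩
  refine (hG.strongContinuitySubmodule_subset_closure_range hmu).antisymm
    (closure_minimal ?_ hclosed)
  rintro _ ⟨g, rfl⟩
  exact hG.tendsto_smul_apply_apply hmu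
    ⟨M * ‖g‖, eventually_map.mpr (hbdd'.mono fun lam h => h g)⟩

/-- Let `F` be a real Banach space, `λ₀ ∈ ℝ`, `M ∈ (0,∞)`, and let
`(G_λ)_{λ>λ₀}` be a pseudo-resolvent on `F` (i.e. `G_λ - G_μ = (μ - λ) G_μ G_λ` for
`λ, μ > λ₀`) such that `‖λ G_λ f‖ ≤ M ‖f‖` for all `λ > λ₀` and `f ∈ F`.  Then the set
of strong continuity `F_G := {f : λ G_λ f → f as λ → ∞}` is a closed linear subspace
of `F`, and for every `μ > λ₀` it equals the norm closure of the range of `G_μ`. -/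
theorem pseudoResolvent_strong_continuity_set_eq_closure_range
    {F : Type*} [NormedAddCommGroup F] [NormedSpace ℝ F] [CompleteSpace F]
    (lam₀ M : ℝ) (hM : 0 < M) (G : ℝ → F →L[ℝ] F)
    (hres : ∀ lam mu : ℝ, lam₀ < lam → lam₀ < mu →
      G lam - G mu = (mu - lam) • ((G mu).comp (G lam)))
    (hbdd : ∀ lam : ℝ, lam₀ < lam → ∀ f : F, ‖lam • G lam f‖ ≤ M * ‖f‖) :
    IsClosed {f : F | Tendsto (fun lam : ℝ => lam • G lam f) atTop (𝓝 f)} ∧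
    (∀ f g : F,
        f ∈ {f : F | Tendsto (fun lam : ℝ => lam • G lam f) atTop (𝓝 f)} →
        g ∈ {f : F | Tendsto (fun lam : ℝ => lam • G lam f) atTop (𝓝 f)} →
        f + g ∈ {f : F | Tendsto (fun lam : ℝ => lam • G lam f) atTop (𝓝 f)}) ∧
    (∀ (c : ℝ) (f : F),
        f ∈ {f : F | Tendsto (fun lam : ℝ => lam • G lam f) atTop (𝓝 f)} →
        c • f ∈ {f : F | Tendsto (fun lam : ℝ => lam • G lam f) atTop (𝓝 f)}) ∧
    (∀ mu : ℝ, lam₀ < mu →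
        {f : F | Tendsto (fun lam : ℝ => lam • G lam f) atTop (𝓝 f)} =
          closure (Set.range (G mu))) :=
  pseudoResolvent_strong_continuity_set_eq_closure_range_general lam₀ M G hres hbdd
end

section
/- Let X be a completely regular topological space and V : X → [1,∞] a function all of whose level sets {V ≤ R}, R ∈ [0,∞), are compact and metrizable. Let A ⊆ C_V be an algebra of bounded continuous functions on X_V (closed under addition, multiplication and scalar multiplication, and containing the constant functions) whose generated σ-algebra equals the Borel σ-algebra of X_V. Then A is dense in (C_V, ‖·‖_V). -/
open MeasureTheory Filter
open scoped ENNReal NNReal Topology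

/-- For `V : X → [1,∞]`, the set `X_V = {V < ∞}` (as a subtype, carrying the subspace
topology). -/
abbrev finitePart {X : Type*} (V : X → ℝ≥0∞) : Type _ := {x : X // V x < ⊤}

/-- Membership in the weighted space `C_V`: `f : X_V → ℝ` restricted to each level set
`{V ≤ R}` is continuous, and `sup_{{V ≥ R}} |f|/V → 0` as `R → ∞`. -/
def memCV {X : Type*} [TopologicalSpace X] (V : X → ℝ≥0∞)
    (f : finitePart V → ℝ) : Prop :=
  (∀ R : ℝ≥0, ContinuousOn f {x : finitePart V | V x.1 ≤ R}) ∧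
  ∀ ε : ℝ, 0 < ε → ∃ R : ℝ≥0, ∀ x : finitePart V, (R : ℝ≥0∞) ≤ V x.1 →
    |f x| ≤ ε * (V x.1).toReal

/-- The weighted sup norm `‖f‖_V = sup_{X_V} |f|/V` on `C_V`. -/
noncomputable def normCV {X : Type*} (V : X → ℝ≥0∞) (f : finitePart V → ℝ) : ℝ :=
  ⨆ x : finitePart V, |f x| / (V x.1).toReal

/-- If `g ∈ A` and `A` is closed under `+`, `*` and contains constants, then any
polynomial in `g` lies in `A`. -/
lemma poly_mem_aux {Y : Type*} (A : Set (Y → ℝ))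
    (hAadd : ∀ f ∈ A, ∀ g ∈ A, f + g ∈ A)
    (hAmul : ∀ f ∈ A, ∀ g ∈ A, f * g ∈ A)
    (hAconst : ∀ c : ℝ, (fun _ : Y => c) ∈ A)
    {g : Y → ℝ} (hg : g ∈ A) (p : Polynomial ℝ) :
    (fun z => p.eval (g z)) ∈ A := by
  induction p using Polynomial.induction_on with
  | C a => simpa using hAconst a
  | add p q hp hq =>
      have h := hAadd _ hp _ hq
      convert h using 1
      funext z; simp
  | monomial n a hn =>
      have h := hAmul _ hn _ hg
      convert h using 1
      funext z; simp [Pi.mul_apply]; ring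

/-- If two points agree under every function of `A`, and the σ-algebra generated by `A`
is the Borel σ-algebra, then no open set separates the two points. -/
lemma open_iff_of_agree {Y : Type*} [TopologicalSpace Y] (A : Set (Y → ℝ))
    (hAgen : (⨆ f ∈ A, MeasurableSpace.comap f (borel ℝ)) = borel Y)
    {a b : Y} (hab : ∀ g ∈ A, g a = g b) {s : Set Y} (hs : IsOpen s) :
    (a ∈ s ↔ b ∈ s) := by
  let m : MeasurableSpace Y :=
    { MeasurableSet' := fun s => (a ∈ s ↔ b ∈ s)
      measurableSet_empty := Iff.rfl
      measurableSet_compl := fun s hs => by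
        simpa [Set.mem_compl_iff] using not_congr hs
      measurableSet_iUnion := fun s hs => by
        simp only [Set.mem_iUnion]; exact exists_congr hs }
  have h1 : borel Y ≤ m := by
    rw [← hAgen]
    refine iSup_le fun g => iSup_le fun hg => ?_
    rintro _ ⟨t, -, rfl⟩
    show a ∈ g ⁻¹' t ↔ b ∈ g ⁻¹' t
    simp [Set.mem_preimage, hab g hg]
  exact h1 _ (MeasurableSpace.measurableSet_generateFrom hs)

/-- Let `X` be completely regular and `V : X → [1,∞]` have compact
metrizable level sets.  An algebra `A ⊆ C_V` of bounded continuous functions on `X_V`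
(containing the constants) which generates the Borel σ-algebra of `X_V` is dense in
`(C_V, ‖·‖_V)`. -/
theorem algebra_dense_in_weighted_space
    {X : Type*} [TopologicalSpace X] [CompletelyRegularSpace X]
    (V : X → ℝ≥0∞) (hV1 : ∀ x, 1 ≤ V x)
    (hcomp : ∀ R : ℝ≥0, IsCompact {x : X | V x ≤ R})
    (hmetr : ∀ R : ℝ≥0, TopologicalSpace.MetrizableSpace {x : X | V x ≤ (R : ℝ≥0∞)})
    (A : Set (finitePart V → ℝ))
    (hAsub : ∀ f ∈ A, memCV V f)
    (hAcont : ∀ f ∈ A, Continuous f)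
    (hAbdd : ∀ f ∈ A, ∃ C : ℝ, ∀ x, |f x| ≤ C)
    (hAadd : ∀ f ∈ A, ∀ g ∈ A, f + g ∈ A)
    (hAmul : ∀ f ∈ A, ∀ g ∈ A, f * g ∈ A)
    (hAsmul : ∀ (c : ℝ), ∀ f ∈ A, c • f ∈ A)
    (hAconst : ∀ c : ℝ, (fun _ : finitePart V => c) ∈ A)
    (hAgen : (⨆ f ∈ A, MeasurableSpace.comap f (borel ℝ)) = borel (finitePart V)) :
    ∀ f, memCV V f → ∀ ε : ℝ, 0 < ε → ∃ g ∈ A, normCV V (f - g) < ε := by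
  intro f hf ε hε
  obtain ⟨hfc, hfs⟩ := hf
  have hε6 : 0 < ε / 6 := by positivity
  obtain ⟨R0, hR0⟩ := hfs (ε / 6) hε6
  have hfin : ∀ {x : X} {S : ℝ≥0}, V x ≤ (S : ℝ≥0∞) → V x < ⊤ :=
    fun h => lt_of_le_of_lt h ENNReal.coe_lt_top
  -- level sets inside `finitePart V` are compact
  have hcomp' : ∀ S : ℝ≥0, IsCompact {z : finitePart V | V z.1 ≤ (S : ℝ≥0∞)} := by
    intro S
    have h1 : Continuous (fun w : {x : X | V x ≤ (S : ℝ≥0∞)} =>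
        (⟨w.1, hfin w.2⟩ : finitePart V)) :=
      Continuous.subtype_mk continuous_subtype_val _
    have h2 := (isCompact_iff_isCompact_univ.mp (hcomp S)).image h1
    have h3 : (fun w : {x : X | V x ≤ (S : ℝ≥0∞)} =>
        (⟨w.1, hfin w.2⟩ : finitePart V)) '' Set.univ
        = {z : finitePart V | V z.1 ≤ (S : ℝ≥0∞)} := by
      ext z
      constructor
      · rintro ⟨w, -, rfl⟩; exact w.2
      · intro hz; exact ⟨⟨z.1, hz⟩, trivial, Subtype.ext rfl⟩
    rwa [h3] at h2
  -- bound for f on the level set R0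
  obtain ⟨M0, hM0⟩ := (hcomp' R0).exists_bound_of_continuousOn (hfc R0)
  set M0' : ℝ := max M0 0 with hM0'def
  have hM0'0 : 0 ≤ M0' := le_max_right _ _
  have hM0' : ∀ z : finitePart V, V z.1 ≤ (R0 : ℝ≥0∞) → |f z| ≤ M0' := by
    intro z hz
    have := hM0 z hz
    rw [Real.norm_eq_abs] at this
    exact this.trans (le_max_left _ _)
  -- choose the radius R
  set R : ℝ≥0 := R0 + 1 + Real.toNNReal (3 * M0' / ε) with hRdef
  have hRR0 : (R0 : ℝ≥0∞) ≤ (R : ℝ≥0∞) := by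
    refine ENNReal.coe_le_coe.mpr ?_
    calc R0 ≤ R0 + 1 := le_self_add
    _ ≤ R0 + 1 + _ := le_self_add
  have hRcoe : (R : ℝ) = (R0 : ℝ) + 1 + max (3 * M0' / ε) 0 := by
    simp [hRdef, NNReal.coe_add, Real.coe_toNNReal']
  have hR1 : (1 : ℝ) ≤ (R : ℝ) := by
    rw [hRcoe]
    have h1 := R0.coe_nonneg
    have h2 := le_max_right (3 * M0' / ε) 0
    linarith
  have hRM : M0' ≤ ε / 3 * (R : ℝ) := by
    rw [hRcoe]
    have h1 : 3 * M0' / ε ≤ max (3 * M0' / ε) 0 := le_max_left _ _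
    have h2 : ε / 3 * (3 * M0' / ε) = M0' := by field_simp
    have h3 := R0.coe_nonneg
    nlinarith
  -- the compact metrizable level set K
  set K := {x : X | V x ≤ (R : ℝ≥0∞)} with hKdef
  haveI : CompactSpace K := isCompact_iff_compactSpace.mp (hcomp R)
  haveI : TopologicalSpace.MetrizableSpace K := hmetr R
  set ι : K → finitePart V := fun w => ⟨w.1, hfin w.2⟩ with hιdef
  have hι : Continuous ι := Continuous.subtype_mk continuous_subtype_val _
  have hfι : Continuous fun w : K => f (ι w) :=
    ContinuousOn.comp_continuous (hfc R) hι fun w => w.2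
  -- the subalgebra B of C(K, ℝ)
  let Φ : {g : finitePart V → ℝ // g ∈ A} → C(K, ℝ) :=
    fun g => ⟨fun w => g.1 (ι w), (hAcont g.1 g.2).comp hι⟩
  let B : Subalgebra ℝ C(K, ℝ) :=
    { carrier := Set.range Φ
      mul_mem' := by
        rintro _ _ ⟨g1, rfl⟩ ⟨g2, rfl⟩
        exact ⟨⟨g1.1 * g2.1, hAmul _ g1.2 _ g2.2⟩, by ext w; simp [Φ]⟩
      add_mem' := by
        rintro _ _ ⟨g1, rfl⟩ ⟨g2, rfl⟩
        exact ⟨⟨g1.1 + g2.1, hAadd _ g1.2 _ g2.2⟩, by ext w; simp [Φ]⟩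
      algebraMap_mem' := fun r =>
        ⟨⟨fun _ => r, hAconst r⟩, by ext w; simp [Φ]⟩ }
  -- B separates points of K
  have hsep : B.SeparatesPoints := by
    intro x y hxy
    obtain ⟨U, U', hU, hU', hxU, hyU', hdisj⟩ := t2_separation hxy
    obtain ⟨W, hW, hWU⟩ := isOpen_induced_iff.mp hU
    have hsuff : ∃ g ∈ A, g (ι x) ≠ g (ι y) := by
      by_contra hcon
      push_neg at hcon
      have key := open_iff_of_agree A hAgen hcon
        (s := Subtype.val ⁻¹' W) (hW.preimage continuous_subtype_val)
      have hxW : ι x ∈ Subtype.val ⁻¹' W := by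
        have : x ∈ Subtype.val ⁻¹' W := hWU ▸ hxU
        exact this
      have hyW : ι y ∉ Subtype.val ⁻¹' W := by
        intro hmem
        have hyU : y ∈ U := by rw [← hWU]; exact hmem
        exact (Set.disjoint_left.mp hdisj hyU) hyU'
      exact hyW (key.mp hxW)
    obtain ⟨g, hg, hne⟩ := hsuff
    exact ⟨_, ⟨Φ ⟨g, hg⟩, ⟨⟨g, hg⟩, rfl⟩, rfl⟩, hne⟩
  -- Stone–Weierstrass
  obtain ⟨gB, hgB⟩ := ContinuousMap.exists_mem_subalgebra_near_continuous_of_separatesPoints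
    B hsep (fun w => f (ι w)) hfι (ε / 6) hε6
  obtain ⟨⟨g, hgA⟩, hΦ⟩ := gB.2
  have hgK : ∀ z : finitePart V, V z.1 ≤ (R : ℝ≥0∞) → |g z - f z| < ε / 6 := by
    intro z hz
    have h := hgB ⟨z.1, hz⟩
    rw [← hΦ] at h
    have he : ι ⟨z.1, hz⟩ = z := Subtype.ext rfl
    simpa [Φ, he, Real.norm_eq_abs] using h
  obtain ⟨C, hC⟩ := hAbdd g hgA
  -- bound of f on level set R
  set M : ℝ := max M0' (ε / 6 * (R : ℝ)) with hMdef
  have hM0 : 0 ≤ M := le_trans hM0'0 (le_max_left _ _)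
  have hMf : ∀ z : finitePart V, V z.1 ≤ (R : ℝ≥0∞) → |f z| ≤ M := by
    intro z hz
    rcases le_total (V z.1) (R0 : ℝ≥0∞) with h | h
    · exact (hM0' z h).trans (le_max_left _ _)
    · have h1 := hR0 z h
      have h2 : (V z.1).toReal ≤ (R : ℝ) := by
        have := ENNReal.toReal_mono ENNReal.coe_ne_top hz
        simpa using this
      refine le_trans h1 (le_trans ?_ (le_max_right _ _))
      nlinarith
  set c : ℝ := M + ε / 6 with hcdef
  have hc0 : 0 ≤ c := by positivity
  set D : ℝ := max C c with hDdef
  -- clamp function and its polynomial approximation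
  set clamp : ℝ → ℝ := fun t => max (-c) (min c t) with hclampdef
  have hclampcont : Continuous clamp := by
    apply Continuous.max continuous_const
    exact Continuous.min continuous_const continuous_id
  obtain ⟨p, hp⟩ := exists_polynomial_near_of_continuousOn (-D) D clamp
    hclampcont.continuousOn (ε / 6) hε6
  set h : finitePart V → ℝ := fun z => p.eval (g z) with hhdef
  have hhA : h ∈ A := poly_mem_aux A hAadd hAmul hAconst hgA p
  have hgD : ∀ z : finitePart V, g z ∈ Set.Icc (-D) D := by
    intro z
    have h1 := abs_le.mp ((hC z).trans (le_max_left C c))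
    exact ⟨h1.1, h1.2⟩
  have hclampbd : ∀ t : ℝ, |clamp t| ≤ c := by
    intro t
    refine abs_le.mpr ⟨le_max_left _ _, max_le (neg_le_self hc0) (min_le_left _ _)⟩
  have hclampeq : ∀ t : ℝ, |t| ≤ c → clamp t = t := by
    intro t ht
    obtain ⟨h1, h2⟩ := abs_le.mp ht
    simp only [hclampdef]
    rw [min_eq_right h2, max_eq_right h1]
  -- pointwise facts about V
  have ht1 : ∀ z : finitePart V, 1 ≤ (V z.1).toReal := by
    intro z
    have := ENNReal.toReal_mono z.2.ne (hV1 z.1)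
    simpa using this
  have ht0 : ∀ z : finitePart V, 0 < (V z.1).toReal :=
    fun z => lt_of_lt_of_le zero_lt_one (ht1 z)
  -- key pointwise estimate
  have key : ∀ z : finitePart V, |f z - h z| ≤ 5 * ε / 6 * (V z.1).toReal := by
    intro z
    set t := (V z.1).toReal with htdef
    have h1t : 1 ≤ t := ht1 z
    by_cases hz : V z.1 ≤ (R : ℝ≥0∞)
    · -- on the level set
      have hgf := le_of_lt (hgK z hz)
      have hfM := hMf z hz
      have hgc : |g z| ≤ c := by
        have : |g z| ≤ |g z - f z| + |f z| := by
          have := abs_sub_abs_le_abs_sub (g z) (f z)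
          have h2 := abs_add_le (g z - f z) (f z)
          calc |g z| = |(g z - f z) + f z| := by ring_nf
          _ ≤ |g z - f z| + |f z| := abs_add_le _ _
        calc |g z| ≤ |g z - f z| + |f z| := this
        _ ≤ ε / 6 + M := add_le_add hgf hfM
        _ = c := by rw [hcdef]; ring
      have hce : clamp (g z) = g z := hclampeq _ hgc
      have hph := le_of_lt (hp (g z) (hgD z))
      rw [hce] at hph
      have : |f z - h z| ≤ ε / 3 := by
        calc |f z - h z| = |(f z - g z) + (g z - p.eval (g z))| := by rw [hhdef]; ring_nf
        _ ≤ |f z - g z| + |g z - p.eval (g z)| := abs_add_le _ _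
        _ ≤ ε / 6 + ε / 6 := by
            refine add_le_add ?_ ?_
            · rw [abs_sub_comm]; exact hgf
            · rw [abs_sub_comm]; exact hph
        _ = ε / 3 := by ring
      refine this.trans ?_
      nlinarith
    · -- off the level set
      have hz' : (R : ℝ≥0∞) ≤ V z.1 := le_of_not_ge hz
      have htR : (R : ℝ) ≤ t := by
        have := ENNReal.toReal_mono z.2.ne hz'
        simpa [htdef] using this
      have hfz : |f z| ≤ ε / 6 * t := hR0 z (le_trans hRR0 hz')
      have hhz : |h z| ≤ ε / 6 + c := by
        have hph := le_of_lt (hp (g z) (hgD z))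
        calc |h z| = |(p.eval (g z) - clamp (g z)) + clamp (g z)| := by rw [hhdef]; ring_nf
        _ ≤ |p.eval (g z) - clamp (g z)| + |clamp (g z)| := abs_add_le _ _
        _ ≤ ε / 6 + c := add_le_add hph (hclampbd _)
      have hMle : M ≤ ε / 3 * t := by
        refine max_le ?_ ?_
        · refine hRM.trans ?_
          nlinarith
        · nlinarith
      have : |f z - h z| ≤ |f z| + |h z| := abs_sub _ _
      rw [hcdef] at hhz
      nlinarith
  -- conclude
  refine ⟨h, hhA, ?_⟩
  have hle : normCV V (f - h) ≤ 5 * ε / 6 := by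
    refine Real.iSup_le ?_ (by positivity)
    intro z
    rw [Pi.sub_apply, div_le_iff₀ (ht0 z)]
    exact key z
  linarith
end

section
/- Let X be a completely regular topological space and V, Θ : X → [1,∞] functions all of whose level sets are compact and metrizable. Assume V ≤ cΘ on X for some c ∈ (0,∞), and that for every R > 0 there exists R' ≥ R such that {V ≤ R} is contained in the closure of {V ≤ R'} ∩ X_Θ. Then X_Θ ⊆ X_V, the restriction map f ↦ f|_{X_Θ} is a well-defined injective bounded linear map from C_V into C_Θ, and its range is dense in C_Θ. -/
open MeasureTheory Filter
open scoped ENNReal NNReal Topology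

/-- When `V ≤ c Θ` (so that `X_Θ ⊆ X_V`), the restriction to `X_Θ` of a function on
`X_V`. -/
def restrCV {X : Type*} (V Θ : X → ℝ≥0∞) (c : ℝ)
    (hle : ∀ x, V x ≤ ENNReal.ofReal c * Θ x)
    (f : finitePart V → ℝ) (y : finitePart Θ) : ℝ :=
  f ⟨y.1, by
    have hfin : ENNReal.ofReal c * Θ y.1 ≠ ⊤ :=
      ENNReal.mul_ne_top ENNReal.ofReal_ne_top y.2.ne
    exact lt_of_le_of_lt (hle y.1) (lt_top_iff_ne_top.2 hfin)⟩

section Auxiliary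

variable {X : Type*} [TopologicalSpace X]

/-- The level set `{V ≤ R}`, viewed inside the subtype `finitePart V`, is compact
whenever the level set in `X` is compact. -/
lemma finitePart_level_compact (V : X → ℝ≥0∞) {R : ℝ≥0}
    (h : IsCompact {x : X | V x ≤ (R : ℝ≥0∞)}) :
    IsCompact {z : finitePart V | V z.1 ≤ (R : ℝ≥0∞)} := by
  haveI : CompactSpace {x : X | V x ≤ (R : ℝ≥0∞)} := isCompact_iff_compactSpace.mp h
  have hc : Continuous (fun k : {x : X | V x ≤ (R : ℝ≥0∞)} =>
      (⟨k.1, lt_of_le_of_lt k.2 ENNReal.coe_lt_top⟩ : finitePart V)) :=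
    Continuous.subtype_mk continuous_subtype_val _
  have himg : (fun k : {x : X | V x ≤ (R : ℝ≥0∞)} =>
      (⟨k.1, lt_of_le_of_lt k.2 ENNReal.coe_lt_top⟩ : finitePart V)) '' Set.univ
      = {z : finitePart V | V z.1 ≤ (R : ℝ≥0∞)} := by
    ext z
    constructor
    · rintro ⟨k, -, rfl⟩; exact k.2
    · intro hz; exact ⟨⟨z.1, hz⟩, trivial, Subtype.ext rfl⟩
  rw [← himg]
  exact isCompact_univ.image hc

/-- A function in `C_V` is bounded on every level set. -/
lemma memCV_bound (V : X → ℝ≥0∞) {f : finitePart V → ℝ} (hf : memCV V f)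
    (hVcomp : ∀ R : ℝ≥0, IsCompact {x : X | V x ≤ (R : ℝ≥0∞)}) (R : ℝ≥0) :
    ∃ M : ℝ, 0 ≤ M ∧ ∀ z : finitePart V, V z.1 ≤ (R : ℝ≥0∞) → |f z| ≤ M := by
  obtain ⟨C, hC⟩ :=
    (finitePart_level_compact V (hVcomp R)).exists_bound_of_continuousOn (hf.1 R)
  refine ⟨max C 0, le_max_right _ _, fun z hz => ?_⟩
  have := hC z hz
  rw [Real.norm_eq_abs] at this
  exact this.trans (le_max_left _ _)

lemma one_le_toReal_of (V : X → ℝ≥0∞) (hV1 : ∀ x, 1 ≤ V x) (z : finitePart V) :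
    (1 : ℝ) ≤ (V z.1).toReal := by
  have := ENNReal.toReal_mono z.2.ne (hV1 z.1)
  simpa using this

/-- The family of quotients defining the weighted norm of a function of `C_V`
is bounded above. -/
lemma memCV_bddAbove (V : X → ℝ≥0∞) {f : finitePart V → ℝ} (hV1 : ∀ x, 1 ≤ V x)
    (hVcomp : ∀ R : ℝ≥0, IsCompact {x : X | V x ≤ (R : ℝ≥0∞)}) (hf : memCV V f) :
    BddAbove (Set.range fun z : finitePart V => |f z| / (V z.1).toReal) := by
  obtain ⟨R₀, hR₀⟩ := hf.2 1 one_pos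
  obtain ⟨M, hM0, hM⟩ := memCV_bound V hf hVcomp R₀
  refine ⟨max M 1, ?_⟩
  rintro r ⟨z, rfl⟩
  have ht : (1 : ℝ) ≤ (V z.1).toReal := one_le_toReal_of V hV1 z
  have htpos : 0 < (V z.1).toReal := lt_of_lt_of_le one_pos ht
  rcases le_total (V z.1) (R₀ : ℝ≥0∞) with h | h
  · have h1 := hM z h
    refine le_trans ?_ (le_max_left M 1)
    rw [div_le_iff₀ htpos]
    nlinarith [abs_nonneg (f z)]
  · have h1 := hR₀ z h
    refine le_trans ?_ (le_max_right M 1)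
    rw [div_le_iff₀ htpos]
    linarith

lemma normCV_nonneg (V : X → ℝ≥0∞) (f : finitePart V → ℝ) : 0 ≤ normCV V f :=
  Real.iSup_nonneg fun z => div_nonneg (abs_nonneg _) ENNReal.toReal_nonneg

lemma le_normCV_mul (V : X → ℝ≥0∞) {f : finitePart V → ℝ} (hV1 : ∀ x, 1 ≤ V x)
    (hb : BddAbove (Set.range fun z : finitePart V => |f z| / (V z.1).toReal))
    (z : finitePart V) : |f z| ≤ normCV V f * (V z.1).toReal := by
  have htpos : 0 < (V z.1).toReal :=
    lt_of_lt_of_le one_pos (one_le_toReal_of V hV1 z)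
  have h := le_ciSup hb z
  rw [div_le_iff₀ htpos] at h
  exact h

lemma clamp_abs_le (M a : ℝ) (hM : 0 ≤ M) : |max (-M) (min M a)| ≤ M := by
  rw [abs_le]
  refine ⟨le_max_left _ _, max_le (by linarith) (min_le_left _ _)⟩

lemma clamp_sub_le (M a b : ℝ) (hb : |b| ≤ M) :
    |max (-M) (min M a) - b| ≤ |a - b| := by
  rcases abs_le.mp hb with ⟨h1, h2⟩
  rcases le_total M a with hMa | hMa
  · rw [min_eq_left hMa, max_eq_right (by linarith : -M ≤ M)]
    rw [abs_of_nonneg (by linarith), abs_of_nonneg (by linarith)]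
    linarith
  · rw [min_eq_right hMa]
    rcases le_total a (-M) with h | h
    · rw [max_eq_left h, abs_of_nonpos (by linarith), abs_of_nonpos (by linarith)]
      linarith
    · rw [max_eq_right h]

end Auxiliary

/-- Let `X` be completely regular, `V, Θ : X → [1,∞]` with compact
metrizable level sets, `V ≤ c Θ` for some `c ∈ (0,∞)`, and assume every level set
`{V ≤ R}` is contained in the closure of `{V ≤ R'} ∩ X_Θ` for some `R' ≥ R`.  Then
`X_Θ ⊆ X_V` and restriction to `X_Θ` is a well-defined injective bounded linear map
from `C_V` into `C_Θ` with dense range. -/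
theorem weighted_space_embedding_dense
    {X : Type*} [TopologicalSpace X] [CompletelyRegularSpace X]
    (V Θ : X → ℝ≥0∞) (hV1 : ∀ x, 1 ≤ V x) (hΘ1 : ∀ x, 1 ≤ Θ x)
    (hVcomp : ∀ R : ℝ≥0, IsCompact {x : X | V x ≤ R})
    (hVmetr : ∀ R : ℝ≥0, TopologicalSpace.MetrizableSpace {x : X | V x ≤ (R : ℝ≥0∞)})
    (hΘcomp : ∀ R : ℝ≥0, IsCompact {x : X | Θ x ≤ R})
    (hΘmetr : ∀ R : ℝ≥0, TopologicalSpace.MetrizableSpace {x : X | Θ x ≤ (R : ℝ≥0∞)})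
    (c : ℝ) (hc : 0 < c) (hle : ∀ x, V x ≤ ENNReal.ofReal c * Θ x)
    (hdense : ∀ R : ℝ≥0, 0 < R → ∃ R' : ℝ≥0, R ≤ R' ∧
      {x : X | V x ≤ R} ⊆ closure ({x : X | V x ≤ R'} ∩ {x : X | Θ x < ⊤})) :
    (∀ x : X, Θ x < ⊤ → V x < ⊤) ∧
    (∀ f, memCV V f → memCV Θ (restrCV V Θ c hle f)) ∧
    (∀ f g, memCV V f → memCV V g →
      restrCV V Θ c hle f = restrCV V Θ c hle g → f = g) ∧
    (∃ C : ℝ, ∀ f, memCV V f → normCV Θ (restrCV V Θ c hle f) ≤ C * normCV V f) ∧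
    (∀ g, memCV Θ g → ∀ ε : ℝ, 0 < ε →
      ∃ f, memCV V f ∧ normCV Θ (restrCV V Θ c hle f - g) < ε) := by
  classical
  -- X_Θ ⊆ X_V
  have hΘV : ∀ x : X, Θ x < ⊤ → V x < ⊤ := by
    intro x hx
    refine lt_of_le_of_lt (hle x) ?_
    exact ENNReal.mul_lt_top ENNReal.ofReal_lt_top hx
  -- the inclusion map
  set ι : finitePart Θ → finitePart V := fun y => ⟨y.1, hΘV y.1 y.2⟩ with hι
  have hιcont : Continuous ι := Continuous.subtype_mk continuous_subtype_val _
  have hrestr : ∀ f y, restrCV V Θ c hle f y = f (ι y) := fun f y => rfl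
  -- toReal comparison
  have hVΘreal : ∀ y : finitePart Θ, (V y.1).toReal ≤ c * (Θ y.1).toReal := by
    intro y
    have hfin : ENNReal.ofReal c * Θ y.1 ≠ ⊤ :=
      ENNReal.mul_ne_top ENNReal.ofReal_ne_top y.2.ne
    have h := ENNReal.toReal_mono hfin (hle y.1)
    rwa [ENNReal.toReal_mul, ENNReal.toReal_ofReal hc.le] at h
  have hΘpos : ∀ y : finitePart Θ, 0 < (Θ y.1).toReal := fun y =>
    lt_of_lt_of_le one_pos (one_le_toReal_of Θ hΘ1 y)
  -- membership of the restriction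
  have hmem : ∀ f, memCV V f → memCV Θ (restrCV V Θ c hle f) := by
    intro f hf
    constructor
    · intro R
      have hmaps : Set.MapsTo ι {y : finitePart Θ | Θ y.1 ≤ (R : ℝ≥0∞)}
          {z : finitePart V | V z.1 ≤ ((c.toNNReal * R : ℝ≥0) : ℝ≥0∞)} := by
        intro y hy
        have : V y.1 ≤ ENNReal.ofReal c * (R : ℝ≥0∞) :=
          (hle y.1).trans (mul_le_mul_right hy _)
        simpa [ENNReal.coe_mul, ENNReal.ofReal] using this
      exact (hf.1 (c.toNNReal * R)).comp hιcont.continuousOn hmaps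
    · intro ε hε
      obtain ⟨R₀, hR₀⟩ := hf.2 (ε / c) (div_pos hε hc)
      obtain ⟨M, hM0, hM⟩ := memCV_bound V hf hVcomp R₀
      refine ⟨(M / ε).toNNReal, fun y hy => ?_⟩
      have hΘt : (((M / ε).toNNReal : ℝ≥0) : ℝ) ≤ (Θ y.1).toReal := by
        have := ENNReal.toReal_mono y.2.ne hy
        simpa using this
      have hMε : M / ε ≤ (((M / ε).toNNReal : ℝ≥0) : ℝ) := Real.le_coe_toNNReal _
      rw [hrestr]
      rcases le_total (R₀ : ℝ≥0∞) (V (ι y).1) with h | h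
      · calc |f (ι y)| ≤ (ε / c) * (V (ι y).1).toReal := hR₀ _ h
          _ ≤ (ε / c) * (c * (Θ y.1).toReal) := by
              exact mul_le_mul_of_nonneg_left (hVΘreal y) (by positivity)
          _ = ε * (Θ y.1).toReal := by field_simp
      · have h1 := hM (ι y) h
        have h2 : M ≤ ε * (Θ y.1).toReal := by
          have h3 : M / ε ≤ (Θ y.1).toReal := hMε.trans hΘt
          calc M = ε * (M / ε) := by field_simp
            _ ≤ ε * (Θ y.1).toReal := mul_le_mul_of_nonneg_left h3 hε.le
        exact h1.trans h2
  refine ⟨hΘV, hmem, ?_, ?_, ?_⟩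
  · -- injectivity
    intro f g hf hg heq
    funext x
    set R : ℝ≥0 := (V x.1).toNNReal with hR
    have hRpos : 0 < R := by
      have h1 : (1 : ℝ≥0∞).toNNReal ≤ (V x.1).toNNReal :=
        ENNReal.toNNReal_mono x.2.ne (hV1 x.1)
      simpa [hR] using lt_of_lt_of_le one_pos h1
    have hxR : V x.1 ≤ (R : ℝ≥0∞) := by
      rw [hR, ENNReal.coe_toNNReal x.2.ne]
    obtain ⟨R', hRR', hsub⟩ := hdense R hRpos
    have hxcl : x.1 ∈ closure ({x : X | V x ≤ (R' : ℝ≥0∞)} ∩ {x : X | Θ x < ⊤}) :=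
      hsub hxR
    set A : Set (finitePart V) := {z | V z.1 ≤ (R' : ℝ≥0∞) ∧ Θ z.1 < ⊤} with hA
    have himg : Subtype.val '' A =
        {x : X | V x ≤ (R' : ℝ≥0∞)} ∩ {x : X | Θ x < ⊤} := by
      ext a
      constructor
      · rintro ⟨z, hz, rfl⟩; exact ⟨hz.1, hz.2⟩
      · rintro ⟨h1, h2⟩
        exact ⟨⟨a, lt_of_le_of_lt h1 ENNReal.coe_lt_top⟩, ⟨h1, h2⟩, rfl⟩
    have hxcl' : x ∈ closure A := by
      rw [closure_subtype, himg]; exact hxcl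
    have hAsub : A ⊆ {z : finitePart V | V z.1 ≤ (R' : ℝ≥0∞)} := fun z hz => hz.1
    have hx' : x ∈ {z : finitePart V | V z.1 ≤ (R' : ℝ≥0∞)} :=
      le_trans hxR (by exact_mod_cast hRR')
    have hcont : ContinuousWithinAt (fun z => f z - g z)
        {z : finitePart V | V z.1 ≤ (R' : ℝ≥0∞)} x :=
      ((hf.1 R').sub (hg.1 R')) x hx'
    haveI hne : (𝓝[A] x).NeBot := mem_closure_iff_nhdsWithin_neBot.mp hxcl'
    have h1 : Tendsto (fun z => f z - g z) (𝓝[A] x) (𝓝 (f x - g x)) :=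
      hcont.mono_left (nhdsWithin_mono x hAsub)
    have h0 : ∀ z ∈ A, f z - g z = 0 := by
      intro z hz
      have h3 : f z = g z := congrFun heq ⟨z.1, hz.2⟩
      linarith
    have h2 : Tendsto (fun z => f z - g z) (𝓝[A] x) (𝓝 0) := by
      refine tendsto_const_nhds.congr' ?_
      filter_upwards [self_mem_nhdsWithin] with z hz
      exact (h0 z hz).symm
    have := tendsto_nhds_unique h1 h2
    exact sub_eq_zero.mp this
  · -- boundedness
    refine ⟨c, fun f hf => ?_⟩
    have hb := memCV_bddAbove V hV1 hVcomp hf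
    have hn : 0 ≤ normCV V f := normCV_nonneg V f
    refine Real.iSup_le (fun y => ?_) (mul_nonneg hc.le hn)
    rw [div_le_iff₀ (hΘpos y), hrestr]
    calc |f (ι y)| ≤ normCV V f * (V (ι y).1).toReal := le_normCV_mul V hV1 hb (ι y)
      _ ≤ normCV V f * (c * (Θ y.1).toReal) :=
          mul_le_mul_of_nonneg_left (hVΘreal y) hn
      _ = c * normCV V f * (Θ y.1).toReal := by ring
  · -- density
    intro g hg ε hε
    set ε' : ℝ := ε / 4 with hε'
    have hε'pos : 0 < ε' := by positivity
    obtain ⟨S₀, hS₀⟩ := hg.2 ε' hε'pos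
    set S₁ : ℝ≥0 := max S₀ 1 with hS₁
    obtain ⟨M₀, hM₀0, hM₀⟩ := memCV_bound Θ hg hΘcomp S₁
    set S : ℝ≥0 := max S₁ (M₀ / ε').toNNReal with hS
    have hS1 : (1 : ℝ≥0) ≤ S := le_trans (le_max_right S₀ 1) (le_max_left _ _)
    have hS1' : (1 : ℝ) ≤ (S : ℝ) := by exact_mod_cast hS1
    have hgbound : ∀ y : finitePart Θ, Θ y.1 ≤ (S : ℝ≥0∞) → |g y| ≤ ε' * (S : ℝ) := by
      intro y hy
      rcases le_total (Θ y.1) ((S₁ : ℝ≥0) : ℝ≥0∞) with h | h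
      · have h1 := hM₀ y h
        have h2 : (M₀ / ε' : ℝ) ≤ (((M₀ / ε').toNNReal : ℝ≥0) : ℝ) :=
          Real.le_coe_toNNReal _
        have h3 : (((M₀ / ε').toNNReal : ℝ≥0) : ℝ) ≤ (S : ℝ) := by
          exact_mod_cast le_max_right S₁ (M₀ / ε').toNNReal
        have h4 : M₀ ≤ ε' * (S : ℝ) := by
          calc M₀ = ε' * (M₀ / ε') := by field_simp
            _ ≤ ε' * (S : ℝ) :=
              mul_le_mul_of_nonneg_left (h2.trans h3) hε'pos.le
        linarith
      · have hS₀le : (S₀ : ℝ≥0∞) ≤ Θ y.1 :=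
          le_trans (by exact_mod_cast le_max_left S₀ 1) h
        have h1 := hS₀ y hS₀le
        have hts : (Θ y.1).toReal ≤ (S : ℝ) := by
          have := ENNReal.toReal_mono ENNReal.coe_ne_top hy
          simpa using this
        nlinarith
    -- the compact metrizable level set of Θ
    haveI hKcs : CompactSpace {x : X | Θ x ≤ (S : ℝ≥0∞)} :=
      isCompact_iff_compactSpace.mp (hΘcomp S)
    haveI hKm := hΘmetr S
    set K := {x : X | Θ x ≤ (S : ℝ≥0∞)} with hK
    -- target function on K
    set e : K → finitePart Θ := fun z => ⟨z.1, lt_of_le_of_lt z.2 ENNReal.coe_lt_top⟩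
      with he
    have hecont : Continuous e := Continuous.subtype_mk continuous_subtype_val _
    have hGcont : Continuous fun z : K => g (e z) := by
      refine (hg.1 S).comp_continuous hecont ?_
      intro z; exact z.2
    -- the subalgebra of restrictions of global continuous functions
    set incl : C(K, X) := ⟨Subtype.val, continuous_subtype_val⟩ with hincl
    set A : Subalgebra ℝ C(K, ℝ) := (ContinuousMap.compRightAlgHom ℝ ℝ incl).range
      with hAdef
    have hsep : A.SeparatesPoints := by
      intro z w hzw
      have hzw1 : z.1 ≠ w.1 := fun h => hzw (Subtype.ext h)
      obtain ⟨U, W, hU, hW, hzU, hwW, hUW⟩ := t2_separation hzw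
      obtain ⟨U', hU', hU'eq⟩ := isOpen_induced_iff.mp hU
      have hzU' : z.1 ∈ U' := by
        have : z ∈ Subtype.val ⁻¹' U' := by rw [hU'eq]; exact hzU
        exact this
      have hwU' : w.1 ∉ U' := by
        intro hw
        have : w ∈ U := by rw [← hU'eq]; exact hw
        exact (Set.disjoint_left.mp hUW this) hwW
      obtain ⟨φ, hφc, hφz, hφ1⟩ :=
        CompletelyRegularSpace.completely_regular z.1 U'ᶜ hU'.isClosed_compl
          (by simpa using hzU')
      set F : C(X, ℝ) := ⟨fun x => (φ x : ℝ), (continuous_subtype_val.comp hφc)⟩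
        with hF
      refine ⟨(ContinuousMap.compRightAlgHom ℝ ℝ incl F : C(K, ℝ)), ?_, ?_⟩
      · exact ⟨ContinuousMap.compRightAlgHom ℝ ℝ incl F, ⟨F, rfl⟩, rfl⟩
      · have h1 : (φ z.1 : ℝ) = 0 := by rw [hφz]; rfl
        have h2 : (φ w.1 : ℝ) = 1 := by rw [hφ1 hwU']; rfl
        simp only [ContinuousMap.compRightAlgHom_apply, ContinuousMap.comp_apply]
        show (φ z.1 : ℝ) ≠ (φ w.1 : ℝ)
        rw [h1, h2]; norm_num
    obtain ⟨Fhat, hFhat⟩ :=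
      ContinuousMap.exists_mem_subalgebra_near_continuous_of_separatesPoints A hsep
        (fun z : K => g (e z)) hGcont ε' hε'pos
    obtain ⟨F, hF⟩ := Fhat.2
    have hFnear : ∀ z : K, |F z.1 - g (e z)| < ε' := by
      intro z
      have := hFhat z
      rw [Real.norm_eq_abs] at this
      have happ : (Fhat.1 : K → ℝ) z = F z.1 := by
        rw [← hF]; rfl
      rwa [happ] at this
    -- the approximating function
    set M' : ℝ := ε' * (S : ℝ) + ε' with hM'
    have hM'0 : 0 ≤ M' := by positivity
    set f : finitePart V → ℝ := fun x => max (-M') (min M' (F x.1)) with hf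
    have hfabs : ∀ x : finitePart V, |f x| ≤ M' := fun x => clamp_abs_le M' _ hM'0
    have hfmem : memCV V f := by
      constructor
      · intro R
        have : Continuous f := by
          refine Continuous.max continuous_const (Continuous.min continuous_const ?_)
          exact F.continuous.comp continuous_subtype_val
        exact this.continuousOn
      · intro δ hδ
        refine ⟨(M' / δ).toNNReal, fun x hx => ?_⟩
        have h1 : (((M' / δ).toNNReal : ℝ≥0) : ℝ) ≤ (V x.1).toReal := by
          have := ENNReal.toReal_mono x.2.ne hx
          simpa using this
        have h2 : M' / δ ≤ (((M' / δ).toNNReal : ℝ≥0) : ℝ) := Real.le_coe_toNNReal _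
        have h3 : M' ≤ δ * (V x.1).toReal := by
          calc M' = δ * (M' / δ) := by field_simp
            _ ≤ δ * (V x.1).toReal :=
              mul_le_mul_of_nonneg_left (h2.trans h1) hδ.le
        exact (hfabs x).trans h3
    refine ⟨f, hfmem, ?_⟩
    have hkey : ∀ y : finitePart Θ, |f (ι y) - g y| / (Θ y.1).toReal ≤ 3 * ε' := by
      intro y
      have htpos := hΘpos y
      have ht1 : (1 : ℝ) ≤ (Θ y.1).toReal := one_le_toReal_of Θ hΘ1 y
      rw [div_le_iff₀ htpos]
      rcases le_total (Θ y.1) (S : ℝ≥0∞) with h | h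
      · -- on K, f is ε'-close to g
        have hyK : y.1 ∈ K := h
        have hclose : |f (ι y) - g y| ≤ ε' := by
          have hgb : |g y| ≤ M' := by
            have := hgbound y h
            rw [hM']; linarith
          have h4 : |f (ι y) - g y| ≤ |F y.1 - g y| :=
            clamp_sub_le M' (F y.1) (g y) hgb
          have h5 := hFnear ⟨y.1, hyK⟩
          have h6 : g (e ⟨y.1, hyK⟩) = g y := rfl
          rw [h6] at h5
          exact h4.trans h5.le
        nlinarith
      · -- off K, both f and g are small
        have hSt : (S : ℝ) ≤ (Θ y.1).toReal := by
          have := ENNReal.toReal_mono y.2.ne h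
          simpa using this
        have hS₀le : (S₀ : ℝ≥0∞) ≤ Θ y.1 := by
          refine le_trans ?_ h
          exact_mod_cast le_trans (le_max_left S₀ 1) (le_max_left S₁ _)
        have hgs := hS₀ y hS₀le
        have hfs : |f (ι y)| ≤ 2 * (ε' * (Θ y.1).toReal) := by
          have h7 : M' ≤ 2 * (ε' * (Θ y.1).toReal) := by
            rw [hM']; nlinarith
          exact (hfabs (ι y)).trans h7
        have htriangle : |f (ι y) - g y| ≤ |f (ι y)| + |g y| := abs_sub _ _
        nlinarith
    have hfinal : normCV Θ (restrCV V Θ c hle f - g) ≤ 3 * ε' := by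
      refine Real.iSup_le (fun y => ?_) (by positivity)
      have : (restrCV V Θ c hle f - g) y = f (ι y) - g y := rfl
      rw [this]
      exact hkey y
    calc normCV Θ (restrCV V Θ c hle f - g) ≤ 3 * ε' := hfinal
      _ < ε := by rw [hε']; linarith
end

section
/- Let N ∈ ℕ, let V : ℝ^N → [1,∞) be convex, let Γ be a symmetric invertible N×N real matrix, and let f : ℝ^N → ℝ be continuously differentiable. Then, as an identity in [0,∞], sup_{x ∈ ℝ^N} |Γ ∇f(x)| / V(x) = sup { (V(y₁) ∨ V(y₂))^{-1} · |f(y₁) − f(y₂)| / |Γ^{-1}(y₁ − y₂)| : y₁, y₂ ∈ ℝ^N, y₁ ≠ y₂ }. -/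
/-!
Since `Γ` is self-adjoint, `|Γ ∇f(x)|` is the norm of the functional `Df(x) ∘ Γ`, i.e. of the
differential of `f ∘ Γ` at `Γ⁻¹ x`; substituting `y = Γ z` therefore reduces the identity to
`Γ = 1`. Both suprema are then the least `C ≥ 0` with `‖Df(x)‖ ≤ C V(x)` for all `x`, resp.
`|f(y₁) - f(y₂)| ≤ C (V(y₁) ∨ V(y₂)) |y₁ - y₂|` for all `y₁, y₂`, and these two bounds are
equivalent. Convexity gives `V ≤ V(y₁) ∨ V(y₂)` on the segment `[y₁, y₂]`, so the mean value
inequality yields the second bound from the first; conversely, dividing the second bound at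
`y₁ = x + t w`, `y₂ = x` by `t` and letting `t → 0⁺` yields the first, because convexity also
gives `V(x + t w) ≤ V(x) + t (V(x + w) - V(x))`.
-/

open scoped ENNReal Gradient
open Set Filter Topology

theorem ENNReal.le_of_forall_le_ofReal_imp {a b : ℝ≥0∞}
    (h : ∀ C : ℝ, 0 ≤ C → b ≤ ENNReal.ofReal C → a ≤ ENNReal.ofReal C) : a ≤ b := by
  rcases eq_or_ne b ⊤ with rfl | hb
  · exact le_top
  · simpa only [ENNReal.ofReal_toReal hb] using
      h b.toReal ENNReal.toReal_nonneg (ENNReal.ofReal_toReal hb).ge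

theorem ENNReal.eq_of_forall_le_ofReal_iff {a b : ℝ≥0∞}
    (h : ∀ C : ℝ, 0 ≤ C → (a ≤ ENNReal.ofReal C ↔ b ≤ ENNReal.ofReal C)) : a = b :=
  le_antisymm (le_of_forall_le_ofReal_imp fun C hC => (h C hC).2)
    (le_of_forall_le_ofReal_imp fun C hC => (h C hC).1)

section WeightedLipschitz

variable {E F : Type*} [NormedAddCommGroup E] [NormedSpace ℝ E] [NormedAddCommGroup F]
  [NormedSpace ℝ F] {V f : E → ℝ} {C : ℝ}

theorem abs_sub_le_mul_max_of_norm_fderiv_le (hV : ConvexOn ℝ univ V) (hf : Differentiable ℝ f)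
    (hC : 0 ≤ C) (h : ∀ x, ‖fderiv ℝ f x‖ ≤ C * V x) (y₁ y₂ : E) :
    |f y₁ - f y₂| ≤ C * max (V y₁) (V y₂) * ‖y₁ - y₂‖ := by
  have bound : ∀ z ∈ segment ℝ y₁ y₂, ‖fderiv ℝ f z‖ ≤ C * max (V y₁) (V y₂) := fun z hz =>
    (h z).trans (by gcongr; exact hV.le_on_segment trivial trivial hz)
  exact (convex_segment y₁ y₂).norm_image_sub_le_of_norm_fderiv_le (fun z _ => hf z) bound
    (right_mem_segment ℝ y₁ y₂) (left_mem_segment ℝ y₁ y₂)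

theorem ConvexOn.le_add_mul_sub (hV : ConvexOn ℝ univ V) (x w : E) {t : ℝ} (ht₀ : 0 ≤ t)
    (ht₁ : t ≤ 1) : V (x + t • w) ≤ V x + t * (V (x + w) - V x) := by
  have h := hV.2 (mem_univ x) (mem_univ (x + w)) (sub_nonneg.2 ht₁) ht₀ (sub_add_cancel 1 t)
  have hpt : (1 - t) • x + t • (x + w) = x + t • w := by module
  rw [hpt, smul_eq_mul, smul_eq_mul] at h
  linarith

theorem abs_fderiv_apply_le_of_abs_sub_le_mul_max (hV : ConvexOn ℝ univ V) {x : E}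
    (hf : DifferentiableAt ℝ f x) (hC : 0 ≤ C)
    (h : ∀ y₁ y₂, |f y₁ - f y₂| ≤ C * max (V y₁) (V y₂) * ‖y₁ - y₂‖) (w : E) :
    |fderiv ℝ f x w| ≤ C * V x * ‖w‖ := by
  set g : ℝ → ℝ := fun t => f (x + t • w)
  have hg : HasDerivAt g (fderiv ℝ f x w) 0 := by
    have hline : HasDerivAt (fun t : ℝ => x + t • w) w 0 := by
      simpa using ((hasDerivAt_id (0 : ℝ)).smul_const w).const_add x
    exact hf.hasFDerivAt.comp_hasDerivAt_of_eq 0 hline (by simp)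
  have slope_lim : Tendsto (fun t => |slope g 0 t|) (𝓝[>] 0) (𝓝 |fderiv ℝ f x w|) :=
    ((hasDerivAt_iff_tendsto_slope.1 hg).mono_left
      (nhdsWithin_mono _ fun t ht => ne_of_gt ht)).abs
  have bound_lim : Tendsto (fun t => C * max (V x + t * (V (x + w) - V x)) (V x) * ‖w‖)
      (𝓝[>] 0) (𝓝 (C * V x * ‖w‖)) := by
    have hcont : Continuous fun t => C * max (V x + t * (V (x + w) - V x)) (V x) * ‖w‖ := by
      fun_prop
    simpa using (hcont.continuousWithinAt (s := Ioi 0) (x := 0)).tendsto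
  refine le_of_tendsto_of_tendsto slope_lim bound_lim ?_
  filter_upwards [Ioc_mem_nhdsGT one_pos] with t ⟨ht₀, ht₁⟩
  have hmax : max (V (x + t • w)) (V x) ≤ max (V x + t * (V (x + w) - V x)) (V x) :=
    max_le_max_right _ (hV.le_add_mul_sub x w ht₀.le ht₁)
  have hlip := h (x + t • w) x
  rw [add_sub_cancel_left, norm_smul, Real.norm_of_nonneg ht₀.le] at hlip
  rw [slope_def_field, sub_zero, abs_div, abs_of_pos ht₀, div_le_iff₀ ht₀]
  calc |g t - g 0| = |f (x + t • w) - f x| := by simp [g]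
    _ ≤ C * max (V (x + t • w)) (V x) * (t * ‖w‖) := hlip
    _ ≤ C * max (V x + t * (V (x + w) - V x)) (V x) * ‖w‖ * t := by
      rw [mul_comm t, ← mul_assoc]; gcongr

theorem norm_fderiv_le_of_abs_sub_le_mul_max (hV : ConvexOn ℝ univ V) {x : E} (hVx : 0 ≤ V x)
    (hf : DifferentiableAt ℝ f x) (hC : 0 ≤ C)
    (h : ∀ y₁ y₂, |f y₁ - f y₂| ≤ C * max (V y₁) (V y₂) * ‖y₁ - y₂‖) :
    ‖fderiv ℝ f x‖ ≤ C * V x :=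
  (fderiv ℝ f x).opNorm_le_bound (by positivity)
    (abs_fderiv_apply_le_of_abs_sub_le_mul_max hV hf hC h)

theorem forall_norm_fderiv_le_iff (hV : ConvexOn ℝ univ V) (hV₀ : ∀ x, 0 ≤ V x)
    (hf : Differentiable ℝ f) (hC : 0 ≤ C) :
    (∀ x, ‖fderiv ℝ f x‖ ≤ C * V x) ↔
      ∀ y₁ y₂, |f y₁ - f y₂| ≤ C * max (V y₁) (V y₂) * ‖y₁ - y₂‖ :=
  ⟨abs_sub_le_mul_max_of_norm_fderiv_le hV hf hC,
    fun h x => norm_fderiv_le_of_abs_sub_le_mul_max hV (hV₀ x) (hf x) hC h⟩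

theorem forall_norm_fderiv_comp_le_iff (A : F ≃L[ℝ] E) (hV : ConvexOn ℝ univ V)
    (hV₀ : ∀ x, 0 ≤ V x) (hf : Differentiable ℝ f) (hC : 0 ≤ C) :
    (∀ x, ‖(fderiv ℝ f x).comp (A : F →L[ℝ] E)‖ ≤ C * V x) ↔
      ∀ y₁ y₂, |f y₁ - f y₂| ≤ C * max (V y₁) (V y₂) * ‖A.symm (y₁ - y₂)‖ := by
  have key := forall_norm_fderiv_le_iff (hV.comp_linearMap (A : F →ₗ[ℝ] E)) (fun z => hV₀ (A z))
    (hf.comp A.differentiable) hC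
  simp only [A.comp_right_fderiv, Function.comp_apply] at key
  rw [A.surjective.forall, A.surjective.forall₂]
  simpa only [← map_sub, A.symm_apply_apply, LinearEquiv.coe_coe,
    ContinuousLinearEquiv.coe_toLinearEquiv] using key

theorem iSup_ofReal_norm_fderiv_comp_div_eq (A : F ≃L[ℝ] E) (hV : ConvexOn ℝ univ V)
    (hV₀ : ∀ x, 0 < V x) (hf : Differentiable ℝ f) :
    ⨆ x, ENNReal.ofReal (‖(fderiv ℝ f x).comp (A : F →L[ℝ] E)‖ / V x) =
      ⨆ (y₁) (y₂) (_ : y₁ ≠ y₂),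
        ENNReal.ofReal (|f y₁ - f y₂| / (max (V y₁) (V y₂) * ‖A.symm (y₁ - y₂)‖)) := by
  refine ENNReal.eq_of_forall_le_ofReal_iff fun C hC => ?_
  simp only [iSup_le_iff, ENNReal.ofReal_le_ofReal_iff hC, div_le_iff₀ (hV₀ _)]
  rw [forall_norm_fderiv_comp_le_iff A hV (fun x => (hV₀ x).le) hf hC]
  refine forall₂_congr fun y₁ y₂ => ?_
  rcases eq_or_ne y₁ y₂ with rfl | hne
  · simp
  · have hden : 0 < max (V y₁) (V y₂) * ‖A.symm (y₁ - y₂)‖ :=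
      mul_pos (lt_max_of_lt_left (hV₀ y₁)) (by simpa [sub_eq_zero] using hne)
    rw [div_le_iff₀ hden, mul_assoc]
    exact ⟨fun h _ => h, fun h => h hne⟩

end WeightedLipschitz

theorem norm_fderiv_comp_eq_norm_apply_gradient {E : Type*} [NormedAddCommGroup E]
    [InnerProductSpace ℝ E] [CompleteSpace E] {A : E →L[ℝ] E} (hA : IsSelfAdjoint A)
    (f : E → ℝ) (x : E) : ‖(fderiv ℝ f x).comp A‖ = ‖A (∇ f x)‖ := by
  have hdual : (fderiv ℝ f x).comp A = InnerProductSpace.toDual ℝ E (A (∇ f x)) := by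
    ext w
    calc fderiv ℝ f x (A w) = inner ℝ (∇ f x) (A w) := InnerProductSpace.toDual_symm_apply.symm
      _ = inner ℝ (A (∇ f x)) w := (hA.isSymmetric _ _).symm
  rw [hdual, LinearIsometryEquiv.norm_map]

theorem EuclideanSpace.ofLp_gradient {n : Type*} [Fintype n] [DecidableEq n]
    (f : EuclideanSpace ℝ n → ℝ) (x : EuclideanSpace ℝ n) :
    (∇ f x).ofLp = fun j => fderiv ℝ f x (EuclideanSpace.single j 1) := by
  funext j
  rw [← InnerProductSpace.toDual_symm_apply, real_inner_comm, EuclideanSpace.inner_single_left]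
  simp [gradient]

theorem EuclideanSpace.real_norm_eq {n : Type*} [Fintype n] (x : EuclideanSpace ℝ n) :
    ‖x‖ = √(∑ i, x i ^ 2) := by
  simp [EuclideanSpace.norm_eq]

noncomputable def Matrix.toEuclideanCLE {𝕜 n : Type*} [RCLike 𝕜] [Fintype n] [DecidableEq n]
    (Γ : Matrix n n 𝕜) (hΓ : IsUnit Γ.det) : EuclideanSpace 𝕜 n ≃L[𝕜] EuclideanSpace 𝕜 n :=
  .equivOfInverse (Matrix.toEuclideanCLM (n := n) (𝕜 := 𝕜) Γ)
    (Matrix.toEuclideanCLM (n := n) (𝕜 := 𝕜) Γ⁻¹)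
    (fun v => by ext; simp [Matrix.mulVec_mulVec, Matrix.nonsing_inv_mul _ hΓ])
    (fun v => by ext; simp [Matrix.mulVec_mulVec, Matrix.mul_nonsing_inv _ hΓ])

/-- For a convex `V : ℝ^N → [1,∞)`, a symmetric invertible matrix `Γ`
and a `C¹` function `f : ℝ^N → ℝ`, one has the identity (in `[0,∞]`)
`sup_x |Γ ∇f(x)|/V(x)
   = sup_{y₁ ≠ y₂} (V(y₁) ∨ V(y₂))⁻¹ |f(y₁) - f(y₂)| / |Γ⁻¹(y₁ - y₂)|`. -/
theorem weighted_gradient_sup_eq_lipschitz_sup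
    (N : ℕ)
    (V : EuclideanSpace ℝ (Fin N) → ℝ)
    (hV1 : ∀ x, 1 ≤ V x)
    (hVconv : ConvexOn ℝ Set.univ V)
    (Γ : Matrix (Fin N) (Fin N) ℝ) (hΓsymm : Γ.IsSymm) (hΓinv : IsUnit Γ.det)
    (f : EuclideanSpace ℝ (Fin N) → ℝ) (hf : ContDiff ℝ 1 f) :
    (⨆ x : EuclideanSpace ℝ (Fin N),
        ENNReal.ofReal
          (Real.sqrt (∑ i,
              (Γ.mulVec (fun j => fderiv ℝ f x (EuclideanSpace.single j 1)) i) ^ 2)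
            / V x)) =
      ⨆ (y₁ : EuclideanSpace ℝ (Fin N)) (y₂ : EuclideanSpace ℝ (Fin N))
          (_ : y₁ ≠ y₂),
        ENNReal.ofReal
          (|f y₁ - f y₂| /
            (max (V y₁) (V y₂) *
              Real.sqrt (∑ i, (Γ⁻¹.mulVec (fun j => y₁ j - y₂ j) i) ^ 2))) := by
  set A := Γ.toEuclideanCLE hΓinv
  have hA : IsSelfAdjoint (A : EuclideanSpace ℝ (Fin N) →L[ℝ] EuclideanSpace ℝ (Fin N)) :=
    (Matrix.isHermitian_iff_isSymm.2 hΓsymm).isSelfAdjoint.map _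
  have hgrad : ∀ x, √(∑ i, (Γ.mulVec (fun j => fderiv ℝ f x (EuclideanSpace.single j 1)) i) ^ 2)
      = ‖(fderiv ℝ f x).comp (A : EuclideanSpace ℝ (Fin N) →L[ℝ] EuclideanSpace ℝ (Fin N))‖ := by
    intro x
    rw [norm_fderiv_comp_eq_norm_apply_gradient hA, EuclideanSpace.real_norm_eq,
      ← EuclideanSpace.ofLp_gradient]
    rfl
  have hdiff : ∀ y₁ y₂ : EuclideanSpace ℝ (Fin N),
      √(∑ i, (Γ⁻¹.mulVec (fun j => y₁ j - y₂ j) i) ^ 2) = ‖A.symm (y₁ - y₂)‖ := by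
    intro y₁ y₂
    rw [EuclideanSpace.real_norm_eq]
    rfl
  simp only [hgrad, hdiff]
  exact iSup_ofReal_norm_fderiv_comp_div_eq A hVconv (fun x => one_pos.trans_le (hV1 x))
    (hf.differentiable one_ne_zero)
end

section
/- Let N ∈ ℕ, let A : ℝ^N → ℝ^{N×N} be a Borel measurable map taking values in the symmetric nonnegative definite matrices, and let B : ℝ^N → ℝ^N be Borel measurable. For u ∈ C²(ℝ^N) set L_{A,B}u(x) := Tr(A(x) D²u(x)) + ⟨B(x), ∇u(x)⟩. Let μ be a Borel probability measure on ℝ^N such that x ↦ ‖A(x)‖ and x ↦ |B(x)| are locally μ-integrable and ∫ L_{A,B}u dμ = 0 for every compactly supported u ∈ C²(ℝ^N). Let V : ℝ^N → [0,∞) be twice continuously differentiable with compact level sets {V ≤ c}, c ∈ [0,∞), let Θ : ℝ^N → [0,∞) be Borel measurable, and let Q ∈ L¹(μ) satisfy L_{A,B}V(x) ≤ Q(x) − Θ(x) for all x ∈ ℝ^N. Then Θ ∈ L¹(μ) and ∫ Θ dμ ≤ ∫ Q dμ. -/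
/-!
Test the invariance identity against `ψₙ ∘ V`, where `ψₙ` is the primitive vanishing at `n + 1`
of a smooth cutoff `φₙ` that equals `1` on `(-∞, n]` and `0` on `[n + 1, ∞)`. Since `V` has
compact sublevel sets, `ψₙ ∘ V` is compactly supported, and since `ψₙ` is concave and `A ≥ 0`,
the chain rule gives `L (ψₙ ∘ V) ≤ φₙ(V) L V ≤ φₙ(V) (Q - Θ)`; hence
`∫ φₙ(V) Θ dμ ≤ ∫ φₙ(V) Q dμ`. As `n → ∞`, monotone convergence yields `Θ ∈ L¹(μ)` and
dominated convergence the inequality.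
-/

open MeasureTheory

/-- The Kolmogorov operator `L_{A,B} u = Tr(A D²u) + ⟨B, ∇u⟩` on `ℝ^N`. -/
noncomputable def kolmogorovOp (N : ℕ)
    (A : EuclideanSpace ℝ (Fin N) → Matrix (Fin N) (Fin N) ℝ)
    (B : EuclideanSpace ℝ (Fin N) → Fin N → ℝ)
    (u : EuclideanSpace ℝ (Fin N) → ℝ) (x : EuclideanSpace ℝ (Fin N)) : ℝ :=
  Matrix.trace
      (A x * Matrix.of fun i j =>
        fderiv ℝ (fun y => fderiv ℝ u y (EuclideanSpace.single j 1)) x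
          (EuclideanSpace.single i 1))
    + ∑ i, B x i * fderiv ℝ u x (EuclideanSpace.single i 1)

open Real Filter Topology

noncomputable def smoothCutoff (n : ℕ) (s : ℝ) : ℝ := smoothTransition ((n : ℝ) + 1 - s)

noncomputable def smoothCutoffPrimitive (n : ℕ) (t : ℝ) : ℝ :=
  ∫ s in ((n : ℝ) + 1)..t, smoothCutoff n s

section SmoothCutoff

variable (n : ℕ)

lemma contDiff_smoothCutoff {k : ℕ∞} : ContDiff ℝ k (smoothCutoff n) :=
  smoothTransition.contDiff.comp (contDiff_const.sub contDiff_id)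

lemma continuous_smoothCutoff : Continuous (smoothCutoff n) :=
  (contDiff_smoothCutoff n (k := 0)).continuous

lemma smoothCutoff_nonneg (s : ℝ) : 0 ≤ smoothCutoff n s := smoothTransition.nonneg _

lemma smoothCutoff_le_one (s : ℝ) : smoothCutoff n s ≤ 1 := smoothTransition.le_one _

lemma smoothCutoff_eq_one {s : ℝ} (h : s ≤ n) : smoothCutoff n s = 1 :=
  smoothTransition.one_of_one_le (by linarith)

lemma smoothCutoff_eq_zero {s : ℝ} (h : (n : ℝ) + 1 ≤ s) : smoothCutoff n s = 0 :=
  smoothTransition.zero_of_nonpos (by linarith)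

lemma antitone_smoothCutoff : Antitone (smoothCutoff n) :=
  fun _ _ hst => smoothTransition.monotone (by linarith)

lemma smoothCutoff_mono_left {m : ℕ} (hmn : m ≤ n) (s : ℝ) : smoothCutoff m s ≤ smoothCutoff n s :=
  smoothTransition.monotone (by gcongr)

lemma hasDerivAt_smoothCutoffPrimitive (t : ℝ) :
    HasDerivAt (smoothCutoffPrimitive n) (smoothCutoff n t) t :=
  ((continuous_smoothCutoff n).integral_hasStrictDerivAt _ t).hasDerivAt

lemma deriv_smoothCutoffPrimitive : deriv (smoothCutoffPrimitive n) = smoothCutoff n :=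
  funext fun t => (hasDerivAt_smoothCutoffPrimitive n t).deriv

lemma contDiff_smoothCutoffPrimitive : ContDiff ℝ 2 (smoothCutoffPrimitive n) := by
  rw [show (2 : WithTop ℕ∞) = 1 + 1 from rfl, contDiff_succ_iff_deriv, deriv_smoothCutoffPrimitive]
  exact ⟨fun t => (hasDerivAt_smoothCutoffPrimitive n t).differentiableAt, by simp,
    contDiff_smoothCutoff n⟩

lemma deriv_deriv_smoothCutoffPrimitive_nonpos (t : ℝ) :
    deriv (deriv (smoothCutoffPrimitive n)) t ≤ 0 := by
  rw [deriv_smoothCutoffPrimitive]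
  exact (antitone_smoothCutoff n).deriv_nonpos

lemma smoothCutoffPrimitive_eq_zero {t : ℝ} (h : (n : ℝ) + 1 ≤ t) :
    smoothCutoffPrimitive n t = 0 := by
  rw [smoothCutoffPrimitive, intervalIntegral.integral_congr (g := fun _ => 0),
    intervalIntegral.integral_zero]
  intro s hs
  rw [Set.uIcc_of_le h] at hs
  exact smoothCutoff_eq_zero n hs.1

end SmoothCutoff

section ChainRule

variable {E : Type*} [NormedAddCommGroup E] [NormedSpace ℝ E] {ψ : ℝ → ℝ} {V : E → ℝ}

lemma fderiv_real_comp (hψ : Differentiable ℝ ψ) (hV : Differentiable ℝ V) (y : E) :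
    fderiv ℝ (fun z => ψ (V z)) y = deriv ψ (V y) • fderiv ℝ V y :=
  ((hψ (V y)).hasDerivAt.comp_hasFDerivAt y (hV y).hasFDerivAt).fderiv

lemma fderiv_fderiv_real_comp_apply (hψ : ContDiff ℝ 2 ψ) (hV : ContDiff ℝ 2 V) (x v w : E) :
    fderiv ℝ (fun y => fderiv ℝ (fun z => ψ (V z)) y w) x v
      = deriv (deriv ψ) (V x) * (fderiv ℝ V x v * fderiv ℝ V x w)
        + deriv ψ (V x) * fderiv ℝ (fun y => fderiv ℝ V y w) x v := by
  have hψ' : Differentiable ℝ (deriv ψ) :=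
    (contDiff_succ_iff_deriv (n := 1).1 hψ).2.2.differentiable one_ne_zero
  have hVd : Differentiable ℝ V := hV.differentiable two_ne_zero
  have hψVd : DifferentiableAt ℝ (fun y => deriv ψ (V y)) x := (hψ' (V x)).comp x (hVd x)
  have hV'd : DifferentiableAt ℝ (fun y => fderiv ℝ V y w) x :=
    ((hV.fderiv_right le_rfl).differentiable one_ne_zero x).clm_apply (differentiableAt_const w)
  simp_rw [fderiv_real_comp (hψ.differentiable two_ne_zero) hVd, smul_apply, smul_eq_mul]
  rw [fderiv_fun_mul hψVd hV'd, fderiv_real_comp hψ' hVd]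
  simp only [add_apply, smul_apply, smul_eq_mul]
  ring

end ChainRule

lemma abs_le_sqrt_sum_sq {ι : Type*} [Fintype ι] (f : ι → ℝ) (i : ι) :
    |f i| ≤ √(∑ j, f j ^ 2) :=
  Real.abs_le_sqrt (Finset.single_le_sum (fun j _ => sq_nonneg (f j)) (Finset.mem_univ i))

lemma Matrix.norm_apply_le_norm_toEuclideanCLM {𝕜 n : Type*} [RCLike 𝕜] [Fintype n]
    [DecidableEq n] (M : Matrix n n 𝕜) (i k : n) :
    ‖M i k‖ ≤ ‖Matrix.toEuclideanCLM (𝕜 := 𝕜) M‖ := by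
  set T := Matrix.toEuclideanCLM (𝕜 := 𝕜) M
  calc ‖M i k‖ = ‖T (EuclideanSpace.single k 1) i‖ := by simp [T, Matrix.mulVec_single]
    _ ≤ ‖T (EuclideanSpace.single k 1)‖ := PiLp.norm_apply_le _ i
    _ ≤ ‖T‖ * ‖EuclideanSpace.single k (1 : 𝕜)‖ := T.le_opNorm _
    _ = ‖T‖ := by simp

section Kolmogorov

open scoped Matrix

variable {N : ℕ} (A : EuclideanSpace ℝ (Fin N) → Matrix (Fin N) (Fin N) ℝ)
  (B : EuclideanSpace ℝ (Fin N) → Fin N → ℝ)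

lemma kolmogorovOp_eq_sum (u : EuclideanSpace ℝ (Fin N) → ℝ) (x : EuclideanSpace ℝ (Fin N)) :
    kolmogorovOp N A B u x
      = ∑ i, ∑ j, A x i j *
          fderiv ℝ (fun y => fderiv ℝ u y (EuclideanSpace.single i 1)) x
            (EuclideanSpace.single j 1)
        + ∑ i, B x i * fderiv ℝ u x (EuclideanSpace.single i 1) :=
  rfl

lemma kolmogorovOp_comp {ψ : ℝ → ℝ} (hψ : ContDiff ℝ 2 ψ) {V : EuclideanSpace ℝ (Fin N) → ℝ}
    (hV : ContDiff ℝ 2 V) (x : EuclideanSpace ℝ (Fin N)) :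
    kolmogorovOp N A B (fun z => ψ (V z)) x
      = deriv ψ (V x) * kolmogorovOp N A B V x
        + deriv (deriv ψ) (V x) *
          ((fun i => fderiv ℝ V x (EuclideanSpace.single i 1)) ⬝ᵥ
            A x *ᵥ fun i => fderiv ℝ V x (EuclideanSpace.single i 1)) := by
  simp only [kolmogorovOp_eq_sum, fderiv_fderiv_real_comp_apply hψ hV]
  simp only [fderiv_real_comp (hψ.differentiable two_ne_zero) (hV.differentiable two_ne_zero),
    smul_apply, smul_eq_mul, dotProduct, Matrix.mulVec, Finset.mul_sum, mul_add,
    Finset.sum_add_distrib]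
  rw [add_rotate]
  congr 1
  · congr 1
    · exact Finset.sum_congr rfl fun i _ => Finset.sum_congr rfl fun j _ => by ring
    · exact Finset.sum_congr rfl fun i _ => by ring
  · exact Finset.sum_congr rfl fun i _ => Finset.sum_congr rfl fun j _ => by ring

lemma kolmogorovOp_comp_le {x : EuclideanSpace ℝ (Fin N)} (hA : (A x).PosSemidef) {ψ : ℝ → ℝ}
    (hψ : ContDiff ℝ 2 ψ) {V : EuclideanSpace ℝ (Fin N) → ℝ} (hV : ContDiff ℝ 2 V)
    (hψ'' : deriv (deriv ψ) (V x) ≤ 0) :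
    kolmogorovOp N A B (fun z => ψ (V z)) x ≤ deriv ψ (V x) * kolmogorovOp N A B V x := by
  have hquad := hA.dotProduct_mulVec_nonneg fun i => fderiv ℝ V x (EuclideanSpace.single i 1)
  rw [star_trivial] at hquad
  rw [kolmogorovOp_comp A B hψ hV]
  linarith [mul_nonpos_of_nonpos_of_nonneg hψ'' hquad]

lemma integrable_kolmogorovOp {μ : Measure (EuclideanSpace ℝ (Fin N))}
    (hA : ∀ i j, LocallyIntegrable (fun x => A x i j) μ)
    (hB : ∀ i, LocallyIntegrable (fun x => B x i) μ) {u : EuclideanSpace ℝ (Fin N) → ℝ}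
    (hu : ContDiff ℝ 2 u) (hcs : HasCompactSupport u) : Integrable (kolmogorovOp N A B u) μ := by
  have hDu : ContDiff ℝ 1 (fderiv ℝ u) := hu.fderiv_right le_rfl
  have hpartial (v : EuclideanSpace ℝ (Fin N)) : ContDiff ℝ 1 fun x => fderiv ℝ u x v :=
    hDu.clm_apply contDiff_const
  simp_rw [funext (kolmogorovOp_eq_sum A B u)]
  refine (integrable_finsetSum _ fun i _ => integrable_finsetSum _ fun j _ => ?_).add
    (integrable_finsetSum _ fun i _ => ?_)
  · exact (hA i j).integrable_smul_right_of_hasCompactSupport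
      (((hpartial _).continuous_fderiv one_ne_zero).clm_apply continuous_const)
      ((hcs.fderiv_apply ℝ _).fderiv_apply ℝ _)
  · exact (hB i).integrable_smul_right_of_hasCompactSupport (hpartial _).continuous
      (hcs.fderiv_apply ℝ _)

end Kolmogorov

section Truncation

variable {α : Type*} [MeasurableSpace α] {μ : Measure α}

lemma integrable_of_monotone_of_integral_le {f : ℕ → α → ℝ} {F : α → ℝ}
    (hf : ∀ n, Integrable (f n) μ) (hf0 : ∀ n x, 0 ≤ f n x) (hmono : ∀ x, Monotone fun n => f n x)
    (hlim : ∀ x, Tendsto (fun n => f n x) atTop (𝓝 (F x))) {C : ℝ}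
    (hC : ∀ n, ∫ x, f n x ∂μ ≤ C) : Integrable F μ := by
  have hF0 (x : α) : 0 ≤ F x := ge_of_tendsto' (hlim x) fun n => hf0 n x
  refine ⟨aestronglyMeasurable_of_tendsto_ae atTop (fun n => (hf n).1) (ae_of_all _ hlim), ?_⟩
  rw [hasFiniteIntegral_iff_ofReal (ae_of_all _ hF0)]
  have hlint : Tendsto (fun n => ∫⁻ x, ENNReal.ofReal (f n x) ∂μ) atTop
      (𝓝 (∫⁻ x, ENNReal.ofReal (F x) ∂μ)) :=
    lintegral_tendsto_of_tendsto_of_monotone (fun n => (hf n).aemeasurable.ennreal_ofReal)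
      (ae_of_all _ fun x _ _ hmn => ENNReal.ofReal_le_ofReal (hmono x hmn))
      (ae_of_all _ fun x => (ENNReal.continuous_ofReal.tendsto _).comp (hlim x))
  refine (le_of_tendsto' hlint fun n => ?_).trans_lt (ENNReal.ofReal_lt_top (r := C))
  rw [← ofReal_integral_eq_lintegral_ofReal (hf n) (ae_of_all _ (hf0 n))]
  exact ENNReal.ofReal_le_ofReal (hC n)

lemma integrable_and_integral_le_of_le_sub {f g h : α → ℝ} (hf : AEStronglyMeasurable f μ)
    (hf0 : ∀ x, 0 ≤ f x) (hg : Integrable g μ) (hh : Integrable h μ) (hh0 : ∫ x, h x ∂μ = 0)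
    (hfgh : ∀ x, f x ≤ g x - h x) : Integrable f μ ∧ ∫ x, f x ∂μ ≤ ∫ x, g x ∂μ := by
  have hf_int : Integrable f μ :=
    (hg.sub hh).mono' hf (ae_of_all _ fun x => (Real.norm_of_nonneg (hf0 x)).trans_le (hfgh x))
  refine ⟨hf_int, ?_⟩
  calc ∫ x, f x ∂μ ≤ ∫ x, g x - h x ∂μ := integral_mono hf_int (hg.sub hh) hfgh
    _ = ∫ x, g x ∂μ := by rw [integral_sub hg hh, hh0, sub_zero]

lemma integrable_and_integral_le_of_cutoff {χ : ℕ → α → ℝ}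
    (hχ : ∀ n, AEStronglyMeasurable (χ n) μ) (hχ0 : ∀ n x, 0 ≤ χ n x) (hχ1 : ∀ n x, χ n x ≤ 1)
    (hχmono : ∀ x, Monotone fun n => χ n x) (hχlim : ∀ x, ∀ᶠ n in atTop, χ n x = 1)
    {Θ Q : α → ℝ} (hΘ0 : ∀ x, 0 ≤ Θ x) (hQ : Integrable Q μ)
    (hcut : ∀ n, Integrable (fun x => χ n x * Θ x) μ ∧
      ∫ x, χ n x * Θ x ∂μ ≤ ∫ x, χ n x * Q x ∂μ) :
    Integrable Θ μ ∧ ∫ x, Θ x ∂μ ≤ ∫ x, Q x ∂μ := by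
  have hlim (f : α → ℝ) (x : α) : Tendsto (fun n => χ n x * f x) atTop (𝓝 (f x)) :=
    tendsto_const_nhds.congr' ((hχlim x).mono fun n hn => by simp [hn])
  have hχΘmono (x : α) : Monotone fun n => χ n x * Θ x :=
    fun _ _ hmn => mul_le_mul_of_nonneg_right (hχmono x hmn) (hΘ0 x)
  have hχQ_le (n : ℕ) (x : α) : ‖χ n x * Q x‖ ≤ ‖Q x‖ := by
    rw [norm_mul, Real.norm_of_nonneg (hχ0 n x)]
    exact mul_le_of_le_one_left (norm_nonneg _) (hχ1 n x)
  have hχQ (n : ℕ) : Integrable (fun x => χ n x * Q x) μ :=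
    hQ.norm.mono' ((hχ n).mul hQ.1) (ae_of_all _ (hχQ_le n))
  have hΘ : Integrable Θ μ :=
    integrable_of_monotone_of_integral_le (fun n => (hcut n).1)
      (fun n x => mul_nonneg (hχ0 n x) (hΘ0 x)) hχΘmono (hlim Θ) fun n =>
        (hcut n).2.trans (integral_mono (hχQ n) hQ.norm fun x => (le_abs_self _).trans (hχQ_le n x))
  refine ⟨hΘ, le_of_tendsto_of_tendsto' (b := atTop) ?_ ?_ fun n => (hcut n).2⟩
  · exact integral_tendsto_of_tendsto_of_monotone (fun n => (hcut n).1) hΘ (ae_of_all _ hχΘmono)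
      (ae_of_all _ (hlim Θ))
  · exact tendsto_integral_of_dominated_convergence (‖Q ·‖) (fun n => (hχQ n).1) hQ.norm
      (fun n => ae_of_all _ (hχQ_le n)) (ae_of_all _ (hlim Q))

end Truncation

lemma integral_smoothCutoff_comp_mul_le {N : ℕ}
    {A : EuclideanSpace ℝ (Fin N) → Matrix (Fin N) (Fin N) ℝ}
    {B : EuclideanSpace ℝ (Fin N) → Fin N → ℝ} {μ : Measure (EuclideanSpace ℝ (Fin N))}
    (hApos : ∀ x, (A x).PosSemidef)
    (hL : ∀ u, ContDiff ℝ 2 u → HasCompactSupport u → Integrable (kolmogorovOp N A B u) μ)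
    (hinv : ∀ u : EuclideanSpace ℝ (Fin N) → ℝ, ContDiff ℝ 2 u → HasCompactSupport u →
      ∫ x, kolmogorovOp N A B u x ∂μ = 0)
    {V : EuclideanSpace ℝ (Fin N) → ℝ} (hV : ContDiff ℝ 2 V)
    (hVlev : ∀ c : ℝ, IsCompact {x | V x ≤ c})
    {Θ Q : EuclideanSpace ℝ (Fin N) → ℝ} (hΘmeas : Measurable Θ) (hΘpos : ∀ x, 0 ≤ Θ x)
    (hQ : Integrable Q μ) (hLV : ∀ x, kolmogorovOp N A B V x ≤ Q x - Θ x) (n : ℕ) :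
    Integrable (fun x => smoothCutoff n (V x) * Θ x) μ ∧
      ∫ x, smoothCutoff n (V x) * Θ x ∂μ ≤ ∫ x, smoothCutoff n (V x) * Q x ∂μ := by
  set u := fun x => smoothCutoffPrimitive n (V x)
  have hu : ContDiff ℝ 2 u := (contDiff_smoothCutoffPrimitive n).comp hV
  have hucs : HasCompactSupport u := HasCompactSupport.intro (hVlev (n + 1)) fun x hx =>
    smoothCutoffPrimitive_eq_zero n (not_le.1 hx).le
  have hχ : Continuous fun x => smoothCutoff n (V x) :=
    (continuous_smoothCutoff n).comp hV.continuous
  have hχQ : Integrable (fun x => smoothCutoff n (V x) * Q x) μ :=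
    hQ.bdd_mul hχ.aestronglyMeasurable (c := 1) (ae_of_all _ fun x => by
      rw [Real.norm_of_nonneg (smoothCutoff_nonneg n _)]
      exact smoothCutoff_le_one n _)
  refine integrable_and_integral_le_of_le_sub (hχ.measurable.mul hΘmeas).aestronglyMeasurable
    (fun x => mul_nonneg (smoothCutoff_nonneg n _) (hΘpos x)) hχQ (hL u hu hucs)
    (hinv u hu hucs) fun x => ?_
  have hLu := kolmogorovOp_comp_le A B (hApos x) (contDiff_smoothCutoffPrimitive n) hV
    (deriv_deriv_smoothCutoffPrimitive_nonpos n _)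
  rw [deriv_smoothCutoffPrimitive] at hLu
  nlinarith [mul_le_mul_of_nonneg_left (hLV x) (smoothCutoff_nonneg n (V x))]

theorem lyapunov_integrability_of_infinitesimally_invariant_general
    (N : ℕ)
    (A : EuclideanSpace ℝ (Fin N) → Matrix (Fin N) (Fin N) ℝ)
    (hAmeas : ∀ i j, Measurable fun x => A x i j)
    (hApos : ∀ x, (A x).PosSemidef)
    (B : EuclideanSpace ℝ (Fin N) → Fin N → ℝ) (hBmeas : Measurable B)
    (μ : Measure (EuclideanSpace ℝ (Fin N)))
    (hAloc : LocallyIntegrable (fun x => ‖Matrix.toEuclideanCLM (𝕜 := ℝ) (A x)‖) μ)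
    (hBloc : LocallyIntegrable (fun x => Real.sqrt (∑ i, (B x i) ^ 2)) μ)
    (hinv : ∀ u : EuclideanSpace ℝ (Fin N) → ℝ, ContDiff ℝ 2 u → HasCompactSupport u →
      ∫ x, kolmogorovOp N A B u x ∂μ = 0)
    (V : EuclideanSpace ℝ (Fin N) → ℝ) (hV : ContDiff ℝ 2 V)
    (hVlev : ∀ c : ℝ, IsCompact {x | V x ≤ c})
    (Θ : EuclideanSpace ℝ (Fin N) → ℝ) (hΘmeas : Measurable Θ) (hΘpos : ∀ x, 0 ≤ Θ x)
    (Q : EuclideanSpace ℝ (Fin N) → ℝ) (hQ : Integrable Q μ)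
    (hLV : ∀ x, kolmogorovOp N A B V x ≤ Q x - Θ x) :
    Integrable Θ μ ∧ ∫ x, Θ x ∂μ ≤ ∫ x, Q x ∂μ := by
  have hA (i j : Fin N) : LocallyIntegrable (fun x => A x i j) μ :=
    hAloc.mono (hAmeas i j).aestronglyMeasurable (ae_of_all _ fun x => by
      simpa using (A x).norm_apply_le_norm_toEuclideanCLM i j)
  have hB (i : Fin N) : LocallyIntegrable (fun x => B x i) μ :=
    hBloc.mono ((measurable_pi_apply i).comp hBmeas).aestronglyMeasurable (ae_of_all _ fun x => by
      simpa [abs_of_nonneg (Real.sqrt_nonneg _)] using abs_le_sqrt_sum_sq (B x) i)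
  have hχlim (x : EuclideanSpace ℝ (Fin N)) : ∀ᶠ n : ℕ in atTop, smoothCutoff n (V x) = 1 :=
    eventually_atTop.2 ⟨⌈V x⌉₊, fun n hn =>
      smoothCutoff_eq_one n ((Nat.le_ceil _).trans (by exact_mod_cast hn))⟩
  exact integrable_and_integral_le_of_cutoff
    (fun n => ((continuous_smoothCutoff n).comp hV.continuous).aestronglyMeasurable)
    (fun n _ => smoothCutoff_nonneg n _) (fun n _ => smoothCutoff_le_one n _)
    (fun _ _ n hmn => smoothCutoff_mono_left n hmn _) hχlim hΘpos hQ
    (integral_smoothCutoff_comp_mul_le hApos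
      (fun _ hu hcs => integrable_kolmogorovOp A B hA hB hu hcs) hinv hV hVlev hΘmeas hΘpos hQ hLV)

/-- If `μ` is a probability measure on `ℝ^N` with `L_{A,B}^* μ = 0`
(infinitesimal invariance on compactly supported `C²` functions), `V ≥ 0` is `C²` with
compact level sets, `Θ ≥ 0` is Borel, `Q ∈ L¹(μ)` and `L_{A,B} V ≤ Q - Θ`, then
`Θ ∈ L¹(μ)` and `∫ Θ dμ ≤ ∫ Q dμ`. -/
theorem lyapunov_integrability_of_infinitesimally_invariant
    (N : ℕ)
    (A : EuclideanSpace ℝ (Fin N) → Matrix (Fin N) (Fin N) ℝ)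
    (hAmeas : ∀ i j, Measurable fun x => A x i j)
    (hAsymm : ∀ x, (A x).IsSymm) (hApos : ∀ x, (A x).PosSemidef)
    (B : EuclideanSpace ℝ (Fin N) → Fin N → ℝ) (hBmeas : Measurable B)
    (μ : Measure (EuclideanSpace ℝ (Fin N))) [IsProbabilityMeasure μ]
    (hAloc : LocallyIntegrable (fun x => ‖Matrix.toEuclideanCLM (𝕜 := ℝ) (A x)‖) μ)
    (hBloc : LocallyIntegrable (fun x => Real.sqrt (∑ i, (B x i) ^ 2)) μ)
    (hinv : ∀ u : EuclideanSpace ℝ (Fin N) → ℝ, ContDiff ℝ 2 u → HasCompactSupport u →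
      ∫ x, kolmogorovOp N A B u x ∂μ = 0)
    (V : EuclideanSpace ℝ (Fin N) → ℝ) (hV : ContDiff ℝ 2 V) (hVpos : ∀ x, 0 ≤ V x)
    (hVlev : ∀ c : ℝ, IsCompact {x | V x ≤ c})
    (Θ : EuclideanSpace ℝ (Fin N) → ℝ) (hΘmeas : Measurable Θ) (hΘpos : ∀ x, 0 ≤ Θ x)
    (Q : EuclideanSpace ℝ (Fin N) → ℝ) (hQ : Integrable Q μ)
    (hLV : ∀ x, kolmogorovOp N A B V x ≤ Q x - Θ x) :
    Integrable Θ μ ∧ ∫ x, Θ x ∂μ ≤ ∫ x, Q x ∂μ :=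
  lyapunov_integrability_of_infinitesimally_invariant_general N A hAmeas hApos B hBmeas μ hAloc
    hBloc hinv V hV hVlev Θ hΘmeas hΘpos Q hQ hLV
end

section
/- Let q ∈ [2,∞) and let x : [0,1] → ℝ be continuously differentiable with x(0) = x(1) = 0. Then ( sup_{r ∈ [0,1]} |x(r)| )^q ≤ q · ( ∫₀¹ x'(r)² |x(r)|^{q−2} dr )^{1/2} · ( ∫₀¹ |x(r)|^q dr )^{1/2}. -/
/-!
Let `t` be a maximum point of `|x|` on `[0,1]`. Since `x 0 = 0`, the fundamental theorem of
calculus applied to `|x|^q`, whose derivative is `q |x|^(q-2) x x'`, gives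
`|x t|^q ≤ q ∫₀¹ (|x'| |x|^((q-2)/2)) · |x|^(q/2)`, and Cauchy–Schwarz bounds the right-hand side.
-/

open Set MeasureTheory

theorem ContinuousOn.memLp_restrict_of_isCompact {α : Type*} [TopologicalSpace α]
    [MeasurableSpace α] [OpensMeasurableSpace α] {μ : Measure α} [IsFiniteMeasureOnCompacts μ]
    {u : α → ℝ} {s : Set α} (hu : ContinuousOn u s) (hs : IsCompact s) (hms : MeasurableSet s)
    (p : ENNReal) : MemLp u p (μ.restrict s) := by
  have : IsFiniteMeasure (μ.restrict s) := ⟨by simpa using hs.measure_lt_top⟩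
  obtain ⟨C, hC⟩ := hs.exists_bound_of_continuousOn hu
  exact MemLp.of_bound (hu.aestronglyMeasurable_of_isCompact hs hms) C
    ((ae_restrict_iff' hms).2 (Filter.Eventually.of_forall hC))

theorem integral_mul_le_sqrt_mul_sqrt_of_nonneg {α : Type*} [MeasurableSpace α]
    {μ : Measure α} {f g : α → ℝ} (hf0 : 0 ≤ᵐ[μ] f) (hg0 : 0 ≤ᵐ[μ] g)
    (hf : MemLp f 2 μ) (hg : MemLp g 2 μ) :
    ∫ a, f a * g a ∂μ ≤ √(∫ a, f a ^ 2 ∂μ) * √(∫ a, g a ^ 2 ∂μ) := by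
  have := integral_mul_le_Lp_mul_Lq_of_nonneg Real.HolderConjugate.two_two hf0 hg0
    (by simpa using hf) (by simpa using hg)
  simpa [Real.sqrt_eq_rpow] using this

theorem abs_le_integral_Ioo_abs_deriv_of_eq_zero {f f' : ℝ → ℝ} {a b t : ℝ}
    (hderiv : ∀ r ∈ Icc a b, HasDerivWithinAt f (f' r) (Icc a b) r)
    (hcont : ContinuousOn f' (Icc a b)) (ha : f a = 0) (ht : t ∈ Icc a b) :
    |f t| ≤ ∫ r in Ioo a b, |f' r| := by
  have hsub : Icc a t ⊆ Icc a b := Icc_subset_Icc le_rfl ht.2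
  have hft : f t = ∫ r in a..t, f' r := by
    rw [intervalIntegral.integral_eq_sub_of_hasDerivAt_of_le ht.1
      (fun r hr => (hderiv r (hsub hr)).continuousWithinAt.mono hsub)
      (fun r hr => (hderiv r (hsub (Ioo_subset_Icc_self hr))).hasDerivAt
        (Icc_mem_nhds hr.1 (hr.2.trans_le ht.2)))
      ((hcont.mono hsub).intervalIntegrable_of_Icc ht.1), ha, sub_zero]
  calc |f t| ≤ ∫ r in a..t, |f' r| := hft ▸ intervalIntegral.abs_integral_le_integral_abs ht.1
    _ ≤ ∫ r in a..b, |f' r| :=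
      intervalIntegral.integral_mono_interval le_rfl ht.1 ht.2
        (Filter.Eventually.of_forall fun r => abs_nonneg _)
        (hcont.abs.intervalIntegrable_of_Icc (ht.1.trans ht.2))
    _ = ∫ r in Ioo a b, |f' r| := by
      rw [intervalIntegral.integral_of_le (ht.1.trans ht.2), integral_Ioc_eq_integral_Ioo]

theorem Real.mul_rpow_sub_two {a q : ℝ} (ha : 0 ≤ a) (hq : q ≠ 0) :
    a * a ^ (q - 2) = a ^ ((q - 2) / 2) * a ^ (q / 2) := by
  rcases ha.eq_or_lt with rfl | ha
  · simp [Real.zero_rpow (div_ne_zero hq two_ne_zero)]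
  · calc a * a ^ (q - 2) = a ^ (1 + (q - 2)) := by rw [Real.rpow_add ha, Real.rpow_one]
      _ = a ^ ((q - 2) / 2) * a ^ (q / 2) := by rw [← Real.rpow_add ha]; ring_nf

theorem Real.rpow_div_two_sq {a : ℝ} (ha : 0 ≤ a) (p : ℝ) : (a ^ (p / 2)) ^ 2 = a ^ p := by
  rw [← Real.rpow_mul_natCast ha]
  norm_num

theorem sup_pow_le_of_boundary_zero_general (q : ℝ) (hq : 2 ≤ q)
    (x x' : ℝ → ℝ)
    (hderiv : ∀ r ∈ Icc (0:ℝ) 1, HasDerivWithinAt x (x' r) (Icc (0:ℝ) 1) r)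
    (hcont : ContinuousOn x' (Icc (0:ℝ) 1))
    (hx0 : x 0 = 0) :
    (⨆ r : Icc (0:ℝ) 1, |x r|) ^ q ≤
      q * Real.sqrt (∫ r in Ioo (0:ℝ) 1, (x' r) ^ 2 * |x r| ^ (q - 2)) *
        Real.sqrt (∫ r in Ioo (0:ℝ) 1, |x r| ^ q) := by
  have hxc : ContinuousOn x (Icc 0 1) := fun r hr => (hderiv r hr).continuousWithinAt
  have hpow {p : ℝ} (hp : 0 ≤ p) : ContinuousOn (fun r => |x r| ^ p) (Icc 0 1) :=
    hxc.abs.rpow_const fun _ _ => Or.inr hp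
  have hL2 {u : ℝ → ℝ} (hu : ContinuousOn u (Icc 0 1)) : MemLp u 2 (volume.restrict (Ioo 0 1)) :=
    (hu.memLp_restrict_of_isCompact isCompact_Icc measurableSet_Icc 2).mono_measure
      (Measure.restrict_mono Ioo_subset_Icc_self le_rfl)
  obtain ⟨t, ht, hmax⟩ := isCompact_Icc.exists_isMaxOn (nonempty_Icc.2 zero_le_one) hxc.abs
  have hFTC : |(|x t| ^ q)| ≤ ∫ r in Ioo 0 1, |q * |x r| ^ (q - 2) * x r * x' r| :=
    abs_le_integral_Ioo_abs_deriv_of_eq_zero (f := fun r => |x r| ^ q)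
      (fun r hr => (hasDerivAt_abs_rpow (x r) (by linarith)).comp_hasDerivWithinAt r (hderiv r hr))
      (((continuousOn_const.mul (hpow (by linarith))).mul hxc).mul hcont)
      (by simp [hx0, Real.zero_rpow (by linarith : q ≠ 0)]) ht
  have hCS := integral_mul_le_sqrt_mul_sqrt_of_nonneg (μ := volume.restrict (Ioo 0 1))
    (f := fun r => |x' r| * |x r| ^ ((q - 2) / 2)) (g := fun r => |x r| ^ (q / 2))
    (Filter.Eventually.of_forall fun r => by positivity)
    (Filter.Eventually.of_forall fun r => by positivity)
    (hL2 (hcont.abs.mul (hpow (by linarith)))) (hL2 (hpow (by linarith)))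
  rw [hmax.iSup_eq ht]
  calc |x t| ^ q = |(|x t| ^ q)| := (abs_of_nonneg (by positivity)).symm
    _ ≤ ∫ r in Ioo 0 1, |q * |x r| ^ (q - 2) * x r * x' r| := hFTC
    _ = q * ∫ r in Ioo 0 1, |x' r| * |x r| ^ ((q - 2) / 2) * |x r| ^ (q / 2) := by
      rw [← integral_const_mul]
      congr 1 with r
      rw [abs_mul, abs_mul, abs_mul, abs_of_nonneg (by linarith : (0:ℝ) ≤ q),
        abs_of_nonneg (by positivity : 0 ≤ |x r| ^ (q - 2)), mul_assoc (|x' r|),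
        ← Real.mul_rpow_sub_two (abs_nonneg _) (by linarith)]
      ring
    _ ≤ q * (√(∫ r in Ioo 0 1, (|x' r| * |x r| ^ ((q - 2) / 2)) ^ 2) *
          √(∫ r in Ioo 0 1, (|x r| ^ (q / 2)) ^ 2)) :=
      mul_le_mul_of_nonneg_left hCS (by linarith)
    _ = _ := by
      simp only [mul_pow, sq_abs, Real.rpow_div_two_sq (abs_nonneg _)]
      ring

/-- Let `q ∈ [2,∞)` and let `x : [0,1] → ℝ` be continuously
differentiable with `x 0 = x 1 = 0`.  Then
`(sup_{r ∈ [0,1]} |x r|)^q ≤ q (∫₀¹ x'(r)² |x r|^{q-2} dr)^{1/2} (∫₀¹ |x r|^q dr)^{1/2}`. -/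
theorem sup_pow_le_of_boundary_zero (q : ℝ) (hq : 2 ≤ q)
    (x x' : ℝ → ℝ)
    (hderiv : ∀ r ∈ Icc (0:ℝ) 1, HasDerivWithinAt x (x' r) (Icc (0:ℝ) 1) r)
    (hcont : ContinuousOn x' (Icc (0:ℝ) 1))
    (hx0 : x 0 = 0) (hx1 : x 1 = 0) :
    (⨆ r : Icc (0:ℝ) 1, |x r|) ^ q ≤
      q * Real.sqrt (∫ r in Ioo (0:ℝ) 1, (x' r) ^ 2 * |x r| ^ (q - 2)) *
        Real.sqrt (∫ r in Ioo (0:ℝ) 1, |x r| ^ q) :=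
  sup_pow_le_of_boundary_zero_general q hq x x' hderiv hcont hx0
end

section
/- Let q ∈ [2,∞). There exists a constant c₁(q) > 0 depending only on q with the following property: whenever h₀, h₁ ∈ L¹((0,1);[0,∞)) and φ : (0,1) × ℝ → ℝ is measurable in the first variable, continuous in the second, and satisfies φ(r,ξ)·sign(ξ) ≤ h₀(r) + h₁(r)|ξ| for a.e. r ∈ (0,1) and all ξ ∈ ℝ, then for every ε > 0 and every continuously differentiable x : [0,1] → ℝ with x(0) = x(1) = 0 such that r ↦ φ(r,x(r)) x(r)|x(r)|^{q−2} is Lebesgue integrable: ∫₀¹ φ(r,x(r)) x(r)|x(r)|^{q−2} dr ≤ ε ∫₀¹ x'(r)² |x(r)|^{q−2} dr + c₁(q) ( ‖h₁‖₁² ε^{-1} + ‖h₀‖₁^{2q/(q+1)} ε^{-(q−1)/(q+1)} ) (1 + ‖x‖_q^q). -/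
open Set MeasureTheory

/-!
Let `M = max |x| = |x r₀|`. By (Φ2), `φ(r, x) x |x|^(q-2) = φ(r, x) sign(x) |x|^(q-1)` is at most
`h₀ M^(q-1) + h₁ M^q`, so the left-hand side is at most `H₀ M^(q-1) + H₁ M^q` with `Hᵢ = ‖hᵢ‖₁`.
Since `x 0 = 0`, `M^q = ∫₀^r₀ q |x|^(q-2) x x' ≤ q √A √B` with `A = ∫ x'² |x|^(q-2)` and
`B = ‖x‖_q^q`; this Cauchy–Schwarz bound comes from integrating `2uv ≤ δu² + δ⁻¹v²` and
optimising over `δ`. Young's inequality then absorbs `A` into `ε A`: with exponents `2, 2` for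
`H₁ M^q ≤ q H₁ √A √B`, and with exponents `2q/(q-1), 2q/(q+1)` for
`H₀ M^(q-1) ≤ H₀ (q √A √B)^((q-1)/q)`. What remains are powers `B^s` with `s ≤ 1`, each at
most `1 + B`.
-/

lemma two_mul_mul_le_mul_sq_add_inv_mul_sq {δ : ℝ} (hδ : 0 < δ) (a b : ℝ) :
    2 * (a * b) ≤ δ * a ^ 2 + δ⁻¹ * b ^ 2 := by
  have h := mul_nonneg (inv_nonneg.2 hδ.le) (sq_nonneg (δ * a - b))
  have : δ⁻¹ * (δ * a - b) ^ 2 = δ * a ^ 2 - 2 * (a * b) + δ⁻¹ * b ^ 2 := by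
    field_simp
    ring
  linarith

lemma rpow_le_one_add {y r : ℝ} (hy : 0 ≤ y) (hr₀ : 0 ≤ r) (hr₁ : r ≤ 1) : y ^ r ≤ 1 + y := by
  rcases le_total y 1 with h | h
  · linarith [Real.rpow_le_one hy h hr₀]
  · linarith [Real.rpow_le_self_of_one_le h hr₁]

lemma mul_abs_rpow_sub_two (q v : ℝ) : v * |v| ^ (q - 2) = Real.sign v * |v| ^ (q - 1) := by
  rcases eq_or_ne v 0 with rfl | hv
  · simp
  rw [show q - 1 = q - 2 + 1 by ring, Real.rpow_add_one (abs_ne_zero.2 hv)]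
  rcases hv.lt_or_gt with h | h
  · rw [Real.sign_of_neg h, abs_of_neg h]; ring
  · rw [Real.sign_of_pos h, abs_of_pos h]; ring

lemma abs_rpow_eq_abs_rpow_sub_two_mul_sq {q : ℝ} (hq : q ≠ 0) (v : ℝ) :
    |v| ^ q = |v| ^ (q - 2) * v ^ 2 := by
  rw [← sq_abs, ← Real.rpow_natCast, ← Real.rpow_add' (abs_nonneg v) (by simpa),
    Nat.cast_ofNat, sub_add_cancel]

lemma mul_abs_rpow_sub_two_mul_le {q δ : ℝ} (hq : 0 < q) (hδ : 0 < δ) (u v : ℝ) :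
    q * |v| ^ (q - 2) * v * u ≤ q / 2 * (δ * (u ^ 2 * |v| ^ (q - 2)) + δ⁻¹ * |v| ^ q) := by
  have hP : 0 ≤ q / 2 * |v| ^ (q - 2) := by positivity
  calc q * |v| ^ (q - 2) * v * u = q / 2 * |v| ^ (q - 2) * (2 * (u * v)) := by ring
    _ ≤ q / 2 * |v| ^ (q - 2) * (δ * u ^ 2 + δ⁻¹ * v ^ 2) :=
        mul_le_mul_of_nonneg_left (two_mul_mul_le_mul_sq_add_inv_mul_sq hδ u v) hP
    _ = _ := by rw [abs_rpow_eq_abs_rpow_sub_two_mul_sq hq.ne']; ring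

lemma mul_mul_abs_rpow_sub_two_le {q y ξ h₀ h₁ M : ℝ} (hq : 1 ≤ q)
    (hΦ : y * Real.sign ξ ≤ h₀ + h₁ * |ξ|) (hh₀ : 0 ≤ h₀) (hh₁ : 0 ≤ h₁) (hξM : |ξ| ≤ M) :
    y * (ξ * |ξ| ^ (q - 2)) ≤ h₀ * M ^ (q - 1) + h₁ * M ^ q := by
  have hM : 0 ≤ M := (abs_nonneg ξ).trans hξM
  calc y * (ξ * |ξ| ^ (q - 2)) = y * Real.sign ξ * |ξ| ^ (q - 1) := by
        rw [mul_abs_rpow_sub_two]; ring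
    _ ≤ (h₀ + h₁ * |ξ|) * |ξ| ^ (q - 1) := by gcongr
    _ ≤ (h₀ + h₁ * M) * M ^ (q - 1) := by gcongr
    _ = h₀ * M ^ (q - 1) + h₁ * M ^ q := by
        rw [add_mul, mul_assoc, ← Real.rpow_one_add' hM (by linarith), add_sub_cancel]

lemma integral_mul_mul_abs_rpow_sub_two_le {α : Type*} [MeasurableSpace α] {μ : Measure α}
    {q M : ℝ} {g x h₀ h₁ : α → ℝ} (hq : 1 ≤ q)
    (hΦ : ∀ᵐ r ∂μ, g r * Real.sign (x r) ≤ h₀ r + h₁ r * |x r|)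
    (hh₀ : ∀ᵐ r ∂μ, 0 ≤ h₀ r) (hh₁ : ∀ᵐ r ∂μ, 0 ≤ h₁ r) (hxM : ∀ᵐ r ∂μ, |x r| ≤ M)
    (hi₀ : Integrable h₀ μ) (hi₁ : Integrable h₁ μ)
    (hg : Integrable (fun r => g r * (x r * |x r| ^ (q - 2))) μ) :
    ∫ r, g r * (x r * |x r| ^ (q - 2)) ∂μ
      ≤ (∫ r, h₀ r ∂μ) * M ^ (q - 1) + (∫ r, h₁ r ∂μ) * M ^ q := by
  calc ∫ r, g r * (x r * |x r| ^ (q - 2)) ∂μ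
      ≤ ∫ r, (h₀ r * M ^ (q - 1) + h₁ r * M ^ q) ∂μ := by
        refine integral_mono_ae hg ((hi₀.mul_const _).add (hi₁.mul_const _)) ?_
        filter_upwards [hΦ, hh₀, hh₁, hxM] with r hΦr hh₀r hh₁r hxr
        exact mul_mul_abs_rpow_sub_two_le hq hΦr hh₀r hh₁r hxr
    _ = _ := by
        rw [integral_add (hi₀.mul_const _) (hi₁.mul_const _), integral_mul_const,
          integral_mul_const]

lemma nonpos_of_forall_le_inv_mul {a B : ℝ} (h : ∀ δ > 0, a ≤ δ⁻¹ * B) : a ≤ 0 := by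
  by_contra! ha
  have := h ((|B| + 1) / a) (by positivity)
  rw [inv_div, div_mul_eq_mul_div, le_div_iff₀ (by positivity)] at this
  nlinarith [le_abs_self B]

lemma le_two_mul_sqrt_mul_sqrt_of_forall_le {a A B : ℝ} (hA : 0 ≤ A) (hB : 0 ≤ B)
    (h : ∀ δ > 0, a ≤ δ * A + δ⁻¹ * B) : a ≤ 2 * (√A * √B) := by
  rcases hA.eq_or_lt with rfl | hA
  · simpa using nonpos_of_forall_le_inv_mul fun δ hδ => by simpa using h δ hδ
  rcases hB.eq_or_lt with rfl | hB
  · simpa using nonpos_of_forall_le_inv_mul (B := A) fun δ hδ => by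
      simpa using h δ⁻¹ (inv_pos.2 hδ)
  calc a ≤ √B / √A * A + (√B / √A)⁻¹ * B := h _ (by positivity)
    _ = 2 * (√A * √B) := by
        have := Real.sqrt_pos.2 hA
        field_simp
        linear_combination -(√B ^ 2) * Real.sq_sqrt hA.le - √A ^ 2 * Real.sq_sqrt hB.le

lemma young_inequality_of_nonneg_weighted {p p' a b δ : ℝ} (hpp' : p.HolderConjugate p')
    (ha : 0 ≤ a) (hb : 0 ≤ b) (hδ : 0 < δ) :
    a * b ≤ δ * a ^ p + (δ * p) ^ (-(p' / p)) / p' * b ^ p' := by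
  have hp := hpp'.pos
  have hp' := hpp'.symm.pos
  set c := (δ * p) ^ p⁻¹
  have hc : 0 < c := by positivity
  have hcp : c ^ p = δ * p := by
    rw [← Real.rpow_mul (by positivity), inv_mul_cancel₀ hp.ne', Real.rpow_one]
  have hcp' : c⁻¹ ^ p' = (δ * p) ^ (-(p' / p)) := by
    rw [Real.inv_rpow hc.le, ← Real.rpow_neg hc.le, ← Real.rpow_mul (by positivity)]
    ring_nf
  have := Real.young_inequality_of_nonneg (mul_nonneg hc.le ha)
    (mul_nonneg (inv_nonneg.2 hc.le) hb) hpp'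
  rw [Real.mul_rpow hc.le ha, Real.mul_rpow (inv_nonneg.2 hc.le) hb, hcp, hcp',
    mul_mul_mul_comm, mul_inv_cancel₀ hc.ne', one_mul] at this
  calc a * b ≤ δ * p * a ^ p / p + (δ * p) ^ (-(p' / p)) * b ^ p' / p' := this
    _ = _ := by field_simp

lemma holderConjugate_two_mul_div_sub_one {q : ℝ} (hq : 1 < q) :
    (2 * q / (q - 1)).HolderConjugate (2 * q / (q + 1)) := by
  have hq₁ : q - 1 ≠ 0 := by linarith
  rw [Real.holderConjugate_iff, lt_div_iff₀ (by linarith : 0 < q - 1)]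
  refine ⟨by linarith, ?_⟩
  field_simp
  ring

lemma rpow_sub_one_le_of_rpow_le {q M X : ℝ} (hq : 1 ≤ q) (hM : 0 ≤ M) (hMX : M ^ q ≤ X) :
    M ^ (q - 1) ≤ X ^ ((q - 1) / q) := by
  calc M ^ (q - 1) = (M ^ q) ^ ((q - 1) / q) := by
        rw [← Real.rpow_mul hM, mul_div_cancel₀ _ (by linarith)]
    _ ≤ X ^ ((q - 1) / q) := by gcongr

lemma exists_mul_rpow_sub_one_le {q : ℝ} (hq : 1 < q) :
    ∃ C > 0, ∀ ε S T H M : ℝ, 0 < ε → 0 ≤ S → 0 ≤ T → 0 ≤ H → 0 ≤ M → M ^ q ≤ q * (S * T) →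
      H * M ^ (q - 1) ≤ ε / 2 * S ^ 2
        + C * (H ^ (2 * q / (q + 1)) * ε ^ (-(q - 1) / (q + 1)))
          * (T ^ 2) ^ ((q - 1) / (q + 1)) := by
  have hq₀ : 0 < q := by linarith
  have hq₁ : q - 1 ≠ 0 := by linarith
  have hpp' := holderConjugate_two_mul_div_sub_one hq
  set θ := (q - 1) / q
  set p := 2 * q / (q - 1)
  set p' := 2 * q / (q + 1)
  set r := (q - 1) / (q + 1)
  have hθp : θ * p = 2 := by simp only [θ, p]; field_simp
  have hθp' : θ * p' = 2 * r := by simp only [θ, p', r]; field_simp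
  have hp'p : p' / p = r := by simp only [p, p', r]; field_simp
  refine ⟨(p / 2) ^ (-r) / p' * q ^ (θ * p'), by positivity,
    fun ε S T H M hε hS hT hH hM hMq => ?_⟩
  have hMθ : M ^ (q - 1) ≤ q ^ θ * S ^ θ * T ^ θ := by
    rw [mul_assoc, ← Real.mul_rpow hS hT, ← Real.mul_rpow hq₀.le (by positivity)]
    exact rpow_sub_one_le_of_rpow_le hq.le hM hMq
  have hSθ : (S ^ θ) ^ p = S ^ 2 := by
    rw [← Real.rpow_mul hS, hθp, Real.rpow_two]
  have hTθ : (T ^ θ) ^ p' = (T ^ 2) ^ r := by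
    rw [← Real.rpow_mul hT, ← Real.rpow_two, ← Real.rpow_mul hT, hθp']
  have hε' : (ε / 2 * p) ^ (-(p' / p)) = (p / 2) ^ (-r) * ε ^ (-(q - 1) / (q + 1)) := by
    rw [show ε / 2 * p = p / 2 * ε by ring, Real.mul_rpow (by positivity) hε.le, neg_div,
      hp'p]
  calc H * M ^ (q - 1) ≤ S ^ θ * (H * (q ^ θ * T ^ θ)) := by
        calc H * M ^ (q - 1) ≤ H * (q ^ θ * S ^ θ * T ^ θ) := by gcongr
          _ = _ := by ring
    _ ≤ ε / 2 * (S ^ θ) ^ p + (ε / 2 * p) ^ (-(p' / p)) / p' * (H * (q ^ θ * T ^ θ)) ^ p' :=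
        young_inequality_of_nonneg_weighted hpp' (by positivity) (by positivity) (by positivity)
    _ = _ := by
        rw [hSθ, hε', Real.mul_rpow hH (by positivity),
          Real.mul_rpow (by positivity) (by positivity), hTθ, ← Real.rpow_mul hq₀.le]
        ring

lemma mul_rpow_le_of_rpow_le_mul {q ε S T H M : ℝ} (hε : 0 < ε) (hH : 0 ≤ H)
    (hMq : M ^ q ≤ q * (S * T)) :
    H * M ^ q ≤ ε / 2 * S ^ 2 + q ^ 2 / 2 * (H ^ 2 * ε⁻¹) * T ^ 2 := by
  calc H * M ^ q ≤ H * (q * (S * T)) := by gcongr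
    _ = 2 * (S * (q * H * T)) / 2 := by ring
    _ ≤ (ε * S ^ 2 + ε⁻¹ * (q * H * T) ^ 2) / 2 := by
        gcongr
        exact two_mul_mul_le_mul_sq_add_inv_mul_sq hε _ _
    _ = _ := by ring

lemma exists_mul_rpow_sub_one_add_mul_rpow_le {q : ℝ} (hq : 1 < q) :
    ∃ c > 0, ∀ ε S T H₀ H₁ M : ℝ, 0 < ε → 0 ≤ S → 0 ≤ T → 0 ≤ H₀ → 0 ≤ H₁ → 0 ≤ M →
      M ^ q ≤ q * (S * T) →
      H₀ * M ^ (q - 1) + H₁ * M ^ q ≤ ε * S ^ 2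
        + c * (H₁ ^ 2 * ε⁻¹ + H₀ ^ (2 * q / (q + 1)) * ε ^ (-(q - 1) / (q + 1))) * (1 + T ^ 2) := by
  obtain ⟨C, hC, hH₀⟩ := exists_mul_rpow_sub_one_le hq
  refine ⟨C + q ^ 2 / 2, by positivity, fun ε S T H₀ H₁ M hε hS hT hH₀' hH₁' hM hMq => ?_⟩
  have h₀ := hH₀ ε S T H₀ M hε hS hT hH₀' hM hMq
  have h₁ := mul_rpow_le_of_rpow_le_mul hε hH₁' hMq
  have hT₀ : (T ^ 2) ^ ((q - 1) / (q + 1)) ≤ 1 + T ^ 2 :=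
    rpow_le_one_add (sq_nonneg T) (div_nonneg (by linarith) (by linarith))
      ((div_le_one (by linarith)).2 (by linarith))
  have hT₁ : T ^ 2 ≤ 1 + T ^ 2 := by linarith
  set X₀ := H₀ ^ (2 * q / (q + 1)) * ε ^ (-(q - 1) / (q + 1))
  set X₁ := H₁ ^ 2 * ε⁻¹
  have hX₀ : 0 ≤ X₀ := by positivity
  have hX₁ : 0 ≤ X₁ := by positivity
  calc H₀ * M ^ (q - 1) + H₁ * M ^ q
      ≤ (ε / 2 * S ^ 2 + C * X₀ * (1 + T ^ 2))
        + (ε / 2 * S ^ 2 + q ^ 2 / 2 * X₁ * (1 + T ^ 2)) := by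
        gcongr
        · exact h₀.trans (by gcongr)
        · exact h₁.trans (by gcongr)
    _ ≤ _ := by
        have : 0 ≤ (C * X₁ + q ^ 2 / 2 * X₀) * (1 + T ^ 2) := by positivity
        linarith

section

variable {a b q : ℝ} {x x' : ℝ → ℝ}

lemma ContinuousOn.mul_abs_rpow_sub_two_mul_mul {s : Set ℝ} (hq : 2 ≤ q) (hx : ContinuousOn x s)
    (hx' : ContinuousOn x' s) :
    ContinuousOn (fun r => q * |x r| ^ (q - 2) * x r * x' r) s :=
  ((continuousOn_const.mul (hx.abs.rpow_const fun _ _ => Or.inr (by linarith))).mul hx).mul hx'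

lemma abs_rpow_eq_intervalIntegral (hq : 2 ≤ q)
    (hx : ∀ r ∈ Icc a b, HasDerivWithinAt x (x' r) (Icc a b) r) (hx' : ContinuousOn x' (Icc a b))
    (hxa : x a = 0) {t : ℝ} (ht : t ∈ Icc a b) :
    |x t| ^ q = ∫ s in a..t, q * |x s| ^ (q - 2) * x s * x' s := by
  have hxc : ContinuousOn x (Icc a t) :=
    fun r hr => (hx r (Icc_subset_Icc_right ht.2 hr)).continuousWithinAt.mono
      (Icc_subset_Icc_right ht.2)
  have hderiv : ∀ s ∈ Ioo a t,
      HasDerivAt (fun r => |x r| ^ q) (q * |x s| ^ (q - 2) * x s * x' s) s := by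
    intro s hs
    have hs' : s ∈ Ioo a b := ⟨hs.1, hs.2.trans_le ht.2⟩
    exact (hasDerivAt_abs_rpow (x s) (by linarith)).comp s
      ((hx s (Ioo_subset_Icc_self hs')).hasDerivAt (Icc_mem_nhds hs'.1 hs'.2))
  have hint : IntervalIntegrable (fun s => q * |x s| ^ (q - 2) * x s * x' s) volume a t :=
    (hxc.mul_abs_rpow_sub_two_mul_mul hq
      (hx'.mono (Icc_subset_Icc_right ht.2))).intervalIntegrable_of_Icc ht.1
  rw [intervalIntegral.integral_eq_sub_of_hasDerivAt_of_le ht.1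
    (hxc.abs.rpow_const fun _ _ => Or.inr (by linarith)) hderiv hint, hxa, abs_zero,
    Real.zero_rpow (by linarith), sub_zero]

lemma abs_rpow_le_of_hasDerivWithinAt (hq : 2 ≤ q)
    (hx : ∀ r ∈ Icc a b, HasDerivWithinAt x (x' r) (Icc a b) r) (hx' : ContinuousOn x' (Icc a b))
    (hxa : x a = 0) {t : ℝ} (ht : t ∈ Icc a b) {δ : ℝ} (hδ : 0 < δ) :
    |x t| ^ q ≤ δ * (q / 2 * ∫ r in Ioo a b, x' r ^ 2 * |x r| ^ (q - 2))
      + δ⁻¹ * (q / 2 * ∫ r in Ioo a b, |x r| ^ q) := by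
  have hq0 : 0 < q := by linarith
  have hxc : ContinuousOn x (Icc a b) := fun r hr => (hx r hr).continuousWithinAt
  have hA : ContinuousOn (fun r => x' r ^ 2 * |x r| ^ (q - 2)) (Icc a b) :=
    (hx'.pow 2).mul (hxc.abs.rpow_const fun _ _ => Or.inr (by linarith))
  have hB : ContinuousOn (fun r => |x r| ^ q) (Icc a b) :=
    hxc.abs.rpow_const fun _ _ => Or.inr hq0.le
  have hdx : IntegrableOn (fun s => q * |x s| ^ (q - 2) * x s * x' s) (Icc a b) :=
    (hxc.mul_abs_rpow_sub_two_mul_mul hq hx').integrableOn_Icc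
  have hAi : IntegrableOn (fun r => x' r ^ 2 * |x r| ^ (q - 2)) (Ioo a b) :=
    hA.integrableOn_Icc.mono_set Ioo_subset_Icc_self
  have hBi : IntegrableOn (fun r => |x r| ^ q) (Ioo a b) :=
    hB.integrableOn_Icc.mono_set Ioo_subset_Icc_self
  set G := fun r => q / 2 * (δ * (x' r ^ 2 * |x r| ^ (q - 2)) + δ⁻¹ * |x r| ^ q)
  have hG : IntegrableOn G (Icc a b) :=
    (continuousOn_const.mul
      ((continuousOn_const.mul hA).add (continuousOn_const.mul hB))).integrableOn_Icc
  calc |x t| ^ q = ∫ s in a..t, q * |x s| ^ (q - 2) * x s * x' s :=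
        abs_rpow_eq_intervalIntegral hq hx hx' hxa ht
    _ = ∫ s in Ioc a t, q * |x s| ^ (q - 2) * x s * x' s := intervalIntegral.integral_of_le ht.1
    _ ≤ ∫ s in Ioc a t, G s :=
        setIntegral_mono_on (hdx.mono_set (Ioc_subset_Icc_self.trans (Icc_subset_Icc_right ht.2)))
          (hG.mono_set (Ioc_subset_Icc_self.trans (Icc_subset_Icc_right ht.2))) measurableSet_Ioc
          fun s _ => mul_abs_rpow_sub_two_mul_le hq0 hδ (x' s) (x s)
    _ ≤ ∫ s in Ioc a b, G s :=
        setIntegral_mono_set (hG.mono_set Ioc_subset_Icc_self)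
          (Filter.Eventually.of_forall fun s => by positivity)
          (Ioc_subset_Ioc_right ht.2).eventuallyLE
    _ = ∫ s in Ioo a b, G s := integral_Ioc_eq_integral_Ioo
    _ = _ := by
        rw [integral_const_mul, integral_add (hAi.const_mul _) (hBi.const_mul _),
          integral_const_mul, integral_const_mul]
        ring

lemma abs_rpow_le_mul_sqrt_mul_sqrt (hq : 2 ≤ q)
    (hx : ∀ r ∈ Icc a b, HasDerivWithinAt x (x' r) (Icc a b) r) (hx' : ContinuousOn x' (Icc a b))
    (hxa : x a = 0) {t : ℝ} (ht : t ∈ Icc a b) :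
    |x t| ^ q ≤
      q * (√(∫ r in Ioo a b, x' r ^ 2 * |x r| ^ (q - 2)) * √(∫ r in Ioo a b, |x r| ^ q)) := by
  have hq2 : 0 ≤ q / 2 := by linarith
  set A := ∫ r in Ioo a b, x' r ^ 2 * |x r| ^ (q - 2)
  set B := ∫ r in Ioo a b, |x r| ^ q
  have hA : 0 ≤ A := integral_nonneg fun _ => by positivity
  have hB : 0 ≤ B := integral_nonneg fun _ => by positivity
  have := le_two_mul_sqrt_mul_sqrt_of_forall_le (mul_nonneg hq2 hA) (mul_nonneg hq2 hB)
    fun δ hδ => abs_rpow_le_of_hasDerivWithinAt hq hx hx' hxa ht hδ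
  rw [Real.sqrt_mul hq2, Real.sqrt_mul hq2] at this
  convert this using 1
  linear_combination (-2 * √A * √B) * Real.mul_self_sqrt hq2

end

/-- For every `q ∈ [2,∞)` there is a constant `c₁(q) > 0` such that for
all `h₀, h₁ ∈ L¹((0,1);[0,∞))` and `φ` satisfying `φ(r,ξ) sign ξ ≤ h₀(r) + h₁(r)|ξ|`
(condition (Φ2)), every `ε > 0` and every `C¹` function `x : [0,1] → ℝ` vanishing at the
endpoints with `r ↦ φ(r,x r) x r |x r|^{q-2}` integrable:
`∫₀¹ φ(r,x r) x r |x r|^{q-2} dr ≤ ε ∫₀¹ x'(r)² |x r|^{q-2} dr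
  + c₁(q) (‖h₁‖₁² ε⁻¹ + ‖h₀‖₁^{2q/(q+1)} ε^{-(q-1)/(q+1)}) (1 + ‖x‖_q^q)`. -/
theorem integral_drift_pairing_pow_le (q : ℝ) (hq : 2 ≤ q) :
    ∃ c₁ : ℝ, 0 < c₁ ∧
      ∀ (h₀ h₁ : ℝ → ℝ),
        IntegrableOn h₀ (Ioo (0:ℝ) 1) volume →
        IntegrableOn h₁ (Ioo (0:ℝ) 1) volume →
        (∀ r ∈ Ioo (0:ℝ) 1, 0 ≤ h₀ r) → (∀ r ∈ Ioo (0:ℝ) 1, 0 ≤ h₁ r) →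
        ∀ (φ : ℝ → ℝ → ℝ),
          (∀ ξ : ℝ, Measurable fun r => φ r ξ) →
          (∀ r ∈ Ioo (0:ℝ) 1, Continuous (φ r)) →
          (∀ᵐ r ∂(volume.restrict (Ioo (0:ℝ) 1)), ∀ ξ : ℝ,
            φ r ξ * Real.sign ξ ≤ h₀ r + h₁ r * |ξ|) →
          ∀ (ε : ℝ), 0 < ε →
            ∀ (x x' : ℝ → ℝ),
              (∀ r ∈ Icc (0:ℝ) 1, HasDerivWithinAt x (x' r) (Icc (0:ℝ) 1) r) →
              ContinuousOn x' (Icc (0:ℝ) 1) →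
              x 0 = 0 → x 1 = 0 →
              IntegrableOn (fun r => φ r (x r) * (x r * |x r| ^ (q - 2)))
                (Ioo (0:ℝ) 1) volume →
              ∫ r in Ioo (0:ℝ) 1, φ r (x r) * (x r * |x r| ^ (q - 2)) ≤
                ε * (∫ r in Ioo (0:ℝ) 1, (x' r) ^ 2 * |x r| ^ (q - 2))
                  + c₁ * ((∫ r in Ioo (0:ℝ) 1, h₁ r) ^ 2 * ε⁻¹
                      + (∫ r in Ioo (0:ℝ) 1, h₀ r) ^ (2 * q / (q + 1))
                          * ε ^ (-(q - 1) / (q + 1)))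
                    * (1 + ∫ r in Ioo (0:ℝ) 1, |x r| ^ q) := by
  obtain ⟨c₁, hc₁, hscalar⟩ := exists_mul_rpow_sub_one_add_mul_rpow_le (by linarith : 1 < q)
  refine ⟨c₁, hc₁, fun h₀ h₁ hi₀ hi₁ hh₀ hh₁ φ _ _ hΦ ε hε x x' hx hx' hx0 _ hint => ?_⟩
  obtain ⟨r₀, hr₀, hmax⟩ := isCompact_Icc.exists_isMaxOn (nonempty_Icc.2 zero_le_one)
    (fun r hr => (hx r hr).continuousWithinAt.abs)
  have hdrift := integral_mul_mul_abs_rpow_sub_two_le (by linarith) (hΦ.mono fun r h => h (x r))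
    (ae_restrict_of_forall_mem measurableSet_Ioo hh₀)
    (ae_restrict_of_forall_mem measurableSet_Ioo hh₁)
    (ae_restrict_of_forall_mem measurableSet_Ioo fun r hr => hmax (Ioo_subset_Icc_self hr))
    hi₀ hi₁ hint
  have hmax_le := abs_rpow_le_mul_sqrt_mul_sqrt hq hx hx' hx0 hr₀
  have := hscalar ε _ _ (∫ r in Ioo (0:ℝ) 1, h₀ r) (∫ r in Ioo (0:ℝ) 1, h₁ r) _ hε
    (Real.sqrt_nonneg _) (Real.sqrt_nonneg _)
    (setIntegral_nonneg measurableSet_Ioo hh₀) (setIntegral_nonneg measurableSet_Ioo hh₁)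
    (abs_nonneg _) hmax_le
  rw [Real.sq_sqrt (integral_nonneg fun _ => by positivity),
    Real.sq_sqrt (integral_nonneg fun _ => by positivity)] at this
  exact hdrift.trans this
end

section
/- Let ψ : ℝ → ℝ be twice continuously differentiable with |ψ''(ξ)| ≤ C + √|ξ| · ω(|ξ|) for all ξ ∈ ℝ, where C ∈ [0,∞) and ω : [0,∞) → [0,∞) is bounded and Borel measurable with ω(s) → 0 as s → ∞. Then there exists a function C : (0,∞) → [0,∞) such that for every ε > 0 and all continuously differentiable x, y : [0,1] → ℝ with x(0) = x(1) = y(0) = y(1) = 0: (1/2) ∫₀¹ y(r)² x'(r) ψ''(x(r)) dr ≤ (1/2)‖y'‖₂² + ( ε‖x'‖₂² + C(ε) ) ‖y‖₂². -/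
/-!
On `[0,1]` a `C¹` function vanishing at `0` satisfies `|x| ≤ ‖x'‖₂` and, applying the
fundamental theorem of calculus to `y²`, the Agmon inequality `y² ≤ 2 ‖y‖₂ ‖y'‖₂`.
Condition (Ψ) gives `|ψ''(ξ)| ≤ A_δ + δ √|ξ|` for every `δ > 0`, hence
`|ψ''∘x| ≤ A_δ + δ ‖x'‖₂^{1/2}`, while Cauchy–Schwarz and Agmon bound `∫ y² |x'|` by
`√2 ‖y‖₂^{3/2} ‖y'‖₂^{1/2} ‖x'‖₂`. Young's inequality splits the resulting products into
`‖y'‖₂²`, `ε ‖x'‖₂² ‖y‖₂²` and `C(ε) ‖y‖₂²`, with `C(ε) = A_δ⁴ / (4ε²)` for `δ = min 1 (ε/2)`.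
-/

open Set MeasureTheory Filter Topology

section Interval

variable {a b : ℝ} {f f' g : ℝ → ℝ}

lemma ContinuousOn.memLp_restrict_Ioo (hf : ContinuousOn f (Icc a b)) (p : ENNReal) :
    MemLp f p (volume.restrict (Ioo a b)) := by
  obtain ⟨M, hM⟩ := isCompact_Icc.exists_bound_of_continuousOn hf
  refine .of_bound ((hf.mono Ioo_subset_Icc_self).aestronglyMeasurable measurableSet_Ioo) M ?_
  filter_upwards [self_mem_ae_restrict measurableSet_Ioo] with r hr
  exact hM r (Ioo_subset_Icc_self hr)

lemma integral_mul_le_sqrt_mul_sqrt_of_nonneg_s15 (hf : ContinuousOn f (Icc a b))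
    (hg : ContinuousOn g (Icc a b)) (hf0 : ∀ r, 0 ≤ f r) (hg0 : ∀ r, 0 ≤ g r) :
    ∫ r in Ioo a b, f r * g r ≤ √(∫ r in Ioo a b, f r ^ 2) * √(∫ r in Ioo a b, g r ^ 2) := by
  have h := integral_mul_le_Lp_mul_Lq_of_nonneg Real.HolderConjugate.two_two
    (ae_of_all _ hf0) (ae_of_all _ hg0) (hf.memLp_restrict_Ioo _) (hg.memLp_restrict_Ioo _)
  simpa only [Real.rpow_two, Real.sqrt_eq_rpow] using h

lemma abs_le_integral_abs_deriv (hf : ∀ r ∈ Icc a b, HasDerivWithinAt f (f' r) (Icc a b) r)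
    (hf' : ContinuousOn f' (Icc a b)) (hfa : f a = 0) {r : ℝ} (hr : r ∈ Icc a b) :
    |f r| ≤ ∫ t in Ioo a b, |f' t| := by
  have hfc : ContinuousOn f (Icc a b) := fun t ht => (hf t ht).continuousWithinAt
  have hftc : ∫ t in a..r, f' t = f r - f a :=
    intervalIntegral.integral_eq_sub_of_hasDeriv_right_of_le hr.1
      (hfc.mono (Icc_subset_Icc_right hr.2))
      (fun t ht => (hf t ⟨ht.1.le, ht.2.le.trans hr.2⟩).mono_of_mem_nhdsWithin
        (Icc_mem_nhdsGT_of_mem ⟨ht.1.le, ht.2.trans_le hr.2⟩))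
      ((hf'.mono (Icc_subset_Icc_right hr.2)).intervalIntegrable_of_Icc hr.1)
  calc |f r| = |∫ t in a..r, f' t| := by rw [hftc, hfa, sub_zero]
    _ ≤ ∫ t in a..r, |f' t| := intervalIntegral.abs_integral_le_integral_abs hr.1
    _ ≤ ∫ t in a..b, |f' t| :=
      intervalIntegral.integral_mono_interval le_rfl hr.1 hr.2 (ae_of_all _ fun t => abs_nonneg _)
        (hf'.abs.intervalIntegrable_of_Icc (hr.1.trans hr.2))
    _ = ∫ t in Ioo a b, |f' t| := by
      rw [intervalIntegral.integral_of_le (hr.1.trans hr.2), integral_Ioc_eq_integral_Ioo]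

lemma abs_le_sqrt_mul_sqrt_integral_sq_deriv
    (hf : ∀ r ∈ Icc a b, HasDerivWithinAt f (f' r) (Icc a b) r)
    (hf' : ContinuousOn f' (Icc a b)) (hfa : f a = 0) {r : ℝ} (hr : r ∈ Icc a b) :
    |f r| ≤ √(b - a) * √(∫ t in Ioo a b, f' t ^ 2) := by
  have hcs := integral_mul_le_sqrt_mul_sqrt_of_nonneg_s15 continuousOn_const hf'.abs
    (fun _ => zero_le_one) (fun t => abs_nonneg (f' t))
  simp only [one_mul, one_pow, sq_abs, setIntegral_const, smul_eq_mul, mul_one,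
    Real.volume_real_Ioo_of_le (hr.1.trans hr.2)] at hcs
  exact (abs_le_integral_abs_deriv hf hf' hfa hr).trans hcs

lemma sq_le_two_mul_sqrt_integral_sq_mul_sqrt_integral_sq_deriv
    (hf : ∀ r ∈ Icc a b, HasDerivWithinAt f (f' r) (Icc a b) r)
    (hf' : ContinuousOn f' (Icc a b)) (hfa : f a = 0) {r : ℝ} (hr : r ∈ Icc a b) :
    f r ^ 2 ≤ 2 * (√(∫ t in Ioo a b, f t ^ 2) * √(∫ t in Ioo a b, f' t ^ 2)) := by
  have hfc : ContinuousOn f (Icc a b) := fun t ht => (hf t ht).continuousWithinAt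
  have hsq := abs_le_integral_abs_deriv (f := fun t => f t * f t)
    (fun t ht => (hf t ht).mul (hf t ht))
    ((hf'.mul hfc).add (hfc.mul hf')) (by simp [hfa]) hr
  have hcs := integral_mul_le_sqrt_mul_sqrt_of_nonneg_s15 hfc.abs hf'.abs
    (fun t => abs_nonneg (f t)) (fun t => abs_nonneg (f' t))
  simp only [sq_abs] at hcs
  calc f r ^ 2 = |f r * f r| := by rw [abs_mul_self, sq]
    _ ≤ ∫ t in Ioo a b, 2 * (|f t| * |f' t|) := by
      refine hsq.trans_eq (integral_congr_ae (ae_of_all _ fun t => ?_))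
      dsimp only
      rw [show f' t * f t + f t * f' t = 2 * (f t * f' t) by ring, abs_mul, abs_two, abs_mul]
    _ ≤ 2 * (√(∫ t in Ioo a b, f t ^ 2) * √(∫ t in Ioo a b, f' t ^ 2)) := by
      rw [integral_const_mul]; gcongr

lemma integral_pow_four_le (hf : ∀ r ∈ Icc a b, HasDerivWithinAt f (f' r) (Icc a b) r)
    (hf' : ContinuousOn f' (Icc a b)) (hfa : f a = 0) :
    ∫ t in Ioo a b, f t ^ 4 ≤
      2 * (√(∫ t in Ioo a b, f t ^ 2) * √(∫ t in Ioo a b, f' t ^ 2)) * ∫ t in Ioo a b, f t ^ 2 := by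
  have hfc : ContinuousOn f (Icc a b) := fun t ht => (hf t ht).continuousWithinAt
  rw [← integral_const_mul]
  refine setIntegral_mono_on ((hfc.pow 4).integrableOn_Icc.mono_set Ioo_subset_Icc_self)
    ((continuousOn_const.mul (hfc.pow 2)).integrableOn_Icc.mono_set Ioo_subset_Icc_self)
    measurableSet_Ioo fun t ht => ?_
  rw [show f t ^ 4 = f t ^ 2 * f t ^ 2 by ring]
  exact mul_le_mul_of_nonneg_right
    (sq_le_two_mul_sqrt_integral_sq_mul_sqrt_integral_sq_deriv hf hf' hfa (Ioo_subset_Icc_self ht))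
    (sq_nonneg _)

end Interval

lemma burgers_young {ε δ A u a b : ℝ} (hε : 0 < ε) (hδ0 : 0 ≤ δ) (hδ1 : δ ≤ 1) (hδε : δ ≤ ε / 2)
    (hu : 0 ≤ u) (ha : 0 ≤ a) (hb : 0 ≤ b) :
    (A + δ * u) * (a ^ 3 * b * u ^ 2) ≤ b ^ 4 / 2 + (ε * u ^ 4 + A ^ 4 / (4 * ε ^ 2)) * a ^ 4 := by
  have hA_split : A * (u ^ 2 * a ^ 3 * b) ≤ ε / 2 * (u * a) ^ 4 + A ^ 2 / (2 * ε) * (a * b) ^ 2 := by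
    have : 0 ≤ (ε * (u * a) ^ 2 - A * (a * b)) ^ 2 / (2 * ε) := by positivity
    have e : (ε * (u * a) ^ 2 - A * (a * b)) ^ 2 / (2 * ε)
        = ε / 2 * (u * a) ^ 4 + A ^ 2 / (2 * ε) * (a * b) ^ 2 - A * (u ^ 2 * a ^ 3 * b) := by
      field_simp; ring
    linarith
  have hA_absorb : A ^ 2 / (2 * ε) * (a * b) ^ 2 ≤ b ^ 4 / 4 + A ^ 4 / (4 * ε ^ 2) * a ^ 4 := by
    have : 0 ≤ (ε * b ^ 2 - A ^ 2 * a ^ 2) ^ 2 / (4 * ε ^ 2) := by positivity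
    have e : (ε * b ^ 2 - A ^ 2 * a ^ 2) ^ 2 / (4 * ε ^ 2)
        = b ^ 4 / 4 + A ^ 4 / (4 * ε ^ 2) * a ^ 4 - A ^ 2 / (2 * ε) * (a * b) ^ 2 := by
      field_simp; ring
    linarith
  have hδ_split : δ * ((u * a) ^ 3 * b) ≤ ε / 2 * (u * a) ^ 4 + b ^ 4 / 4 := by
    have hv : 0 ≤ u * a := mul_nonneg hu ha
    have amgm : (u * a) ^ 3 * b ≤ 3 / 4 * (u * a) ^ 4 + b ^ 4 / 4 := by
      have : 0 ≤ (u * a - b) ^ 2 * (3 * (u * a) ^ 2 + 2 * (u * a) * b + b ^ 2) := by positivity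
      nlinarith
    have hv4 : 0 ≤ (u * a) ^ 4 := by positivity
    nlinarith [mul_le_mul_of_nonneg_left amgm hδ0, mul_le_mul_of_nonneg_right hδε hv4,
      mul_le_mul_of_nonneg_right hδ1 (pow_nonneg hb 4)]
  nlinarith

lemma exists_abs_le_add_mul_sqrt {g ω : ℝ → ℝ} {C Cω : ℝ} (hω0 : ∀ s, 0 ≤ ω s)
    (hωCω : ∀ s, ω s ≤ Cω) (hω : Tendsto ω atTop (𝓝 0))
    (hg : ∀ ξ, |g ξ| ≤ C + √|ξ| * ω |ξ|) {δ : ℝ} (hδ : 0 < δ) :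
    ∃ A, ∀ ξ, |g ξ| ≤ A + δ * √|ξ| := by
  obtain ⟨R, hR⟩ := eventually_atTop.mp (hω.eventually (ge_mem_nhds hδ))
  refine ⟨C + √R * Cω, fun ξ => (hg ξ).trans ?_⟩
  have hCω : 0 ≤ Cω := (hω0 0).trans (hωCω 0)
  rcases le_total |ξ| R with hξ | hξ
  · have : √|ξ| * ω |ξ| ≤ √R * Cω :=
      mul_le_mul (Real.sqrt_le_sqrt hξ) (hωCω _) (hω0 _) (Real.sqrt_nonneg _)
    nlinarith [Real.sqrt_nonneg |ξ|]
  · have : √|ξ| * ω |ξ| ≤ δ * √|ξ| := by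
      rw [mul_comm δ]; exact mul_le_mul_of_nonneg_left (hR _ hξ) (Real.sqrt_nonneg _)
    nlinarith [Real.sqrt_nonneg R]

lemma exists_pow_four_eq {q : ℝ} (hq : 0 ≤ q) : ∃ w, 0 ≤ w ∧ √q = w ^ 2 ∧ q = w ^ 4 :=
  ⟨√√q, Real.sqrt_nonneg _, (Real.sq_sqrt (Real.sqrt_nonneg _)).symm, by
    rw [show (4 : ℕ) = 2 * 2 from rfl, pow_mul, Real.sq_sqrt (Real.sqrt_nonneg _), Real.sq_sqrt hq]⟩

section UnitInterval

variable {x x' y y' g : ℝ → ℝ}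

lemma integral_sq_mul_deriv_mul_comp_le {A δ : ℝ} (hg : ∀ ξ, |g ξ| ≤ A + δ * √|ξ|) (hδ : 0 ≤ δ)
    (hx : ∀ r ∈ Icc (0:ℝ) 1, HasDerivWithinAt x (x' r) (Icc 0 1) r)
    (hx' : ContinuousOn x' (Icc 0 1))
    (hy : ∀ r ∈ Icc (0:ℝ) 1, HasDerivWithinAt y (y' r) (Icc 0 1) r)
    (hy' : ContinuousOn y' (Icc 0 1)) (hx0 : x 0 = 0) (hy0 : y 0 = 0) :
    ∫ r in Ioo (0:ℝ) 1, y r ^ 2 * x' r * g (x r) ≤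
      (A + δ * √√(∫ r in Ioo (0:ℝ) 1, x' r ^ 2)) *
        (√(2 * (√(∫ r in Ioo (0:ℝ) 1, y r ^ 2) * √(∫ r in Ioo (0:ℝ) 1, y' r ^ 2)) *
            ∫ r in Ioo (0:ℝ) 1, y r ^ 2) *
          √(∫ r in Ioo (0:ℝ) 1, x' r ^ 2)) := by
  set B := A + δ * √√(∫ r in Ioo (0:ℝ) 1, x' r ^ 2)
  have hyc : ContinuousOn y (Icc 0 1) := fun t ht => (hy t ht).continuousWithinAt
  have hgx : ∀ r ∈ Icc (0:ℝ) 1, |g (x r)| ≤ B := fun r hr => by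
    have hxr := abs_le_sqrt_mul_sqrt_integral_sq_deriv hx hx' hx0 hr
    rw [sub_zero, Real.sqrt_one, one_mul] at hxr
    exact (hg _).trans (add_le_add_right (mul_le_mul_of_nonneg_left (Real.sqrt_le_sqrt hxr) hδ) A)
  have hB : 0 ≤ B := (abs_nonneg _).trans (hgx 0 ⟨le_rfl, zero_le_one⟩)
  have hcs := integral_mul_le_sqrt_mul_sqrt_of_nonneg_s15 (f := fun t => y t ^ 2) (hyc.pow 2) hx'.abs
    (fun t => sq_nonneg (y t)) (fun t => abs_nonneg (x' t))
  simp only [sq_abs, ← pow_mul] at hcs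
  calc ∫ r in Ioo (0:ℝ) 1, y r ^ 2 * x' r * g (x r)
      ≤ ‖∫ r in Ioo (0:ℝ) 1, y r ^ 2 * x' r * g (x r)‖ := Real.le_norm_self _
    _ ≤ ∫ r in Ioo (0:ℝ) 1, B * (y r ^ 2 * |x' r|) := by
      refine norm_integral_le_of_norm_le
        ((continuousOn_const.mul ((hyc.pow 2).mul hx'.abs)).integrableOn_Icc.mono_set
          Ioo_subset_Icc_self)
        ((ae_restrict_iff' measurableSet_Ioo).mpr (ae_of_all _ fun r hr => ?_))
      rw [Real.norm_eq_abs, abs_mul, abs_mul, abs_of_nonneg (sq_nonneg _), mul_comm B]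
      exact mul_le_mul_of_nonneg_left (hgx r (Ioo_subset_Icc_self hr)) (by positivity)
    _ = B * ∫ r in Ioo (0:ℝ) 1, y r ^ 2 * |x' r| := integral_const_mul _ _
    _ ≤ _ := by
      gcongr
      exact hcs.trans (by gcongr; exact integral_pow_four_le hy hy' hy0)

lemma half_integral_sq_mul_deriv_mul_comp_le {A δ ε : ℝ} (hg : ∀ ξ, |g ξ| ≤ A + δ * √|ξ|)
    (hε : 0 < ε) (hδ0 : 0 ≤ δ) (hδ1 : δ ≤ 1) (hδε : δ ≤ ε / 2)
    (hx : ∀ r ∈ Icc (0:ℝ) 1, HasDerivWithinAt x (x' r) (Icc 0 1) r)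
    (hx' : ContinuousOn x' (Icc 0 1))
    (hy : ∀ r ∈ Icc (0:ℝ) 1, HasDerivWithinAt y (y' r) (Icc 0 1) r)
    (hy' : ContinuousOn y' (Icc 0 1)) (hx0 : x 0 = 0) (hy0 : y 0 = 0) :
    1 / 2 * ∫ r in Ioo (0:ℝ) 1, y r ^ 2 * x' r * g (x r) ≤
      1 / 2 * (∫ r in Ioo (0:ℝ) 1, y' r ^ 2) +
        (ε * (∫ r in Ioo (0:ℝ) 1, x' r ^ 2) + A ^ 4 / (4 * ε ^ 2)) * ∫ r in Ioo (0:ℝ) 1, y r ^ 2 := by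
  have hint := integral_sq_mul_deriv_mul_comp_le hg hδ0 hx hx' hy hy' hx0 hy0
  have hA : 0 ≤ A := by simpa using (abs_nonneg _).trans (hg 0)
  obtain ⟨u, hu, hu2, hu4⟩ := exists_pow_four_eq (setIntegral_nonneg measurableSet_Ioo
    fun r _ => sq_nonneg (x' r))
  obtain ⟨a, ha, ha2, ha4⟩ := exists_pow_four_eq (setIntegral_nonneg measurableSet_Ioo
    fun r _ => sq_nonneg (y r))
  obtain ⟨b, hb, hb2, hb4⟩ := exists_pow_four_eq (setIntegral_nonneg measurableSet_Ioo
    fun r _ => sq_nonneg (y' r))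
  have hroot : √(2 * (a ^ 2 * b ^ 2) * a ^ 4) = √2 * (a ^ 3 * b) := by
    rw [show 2 * (a ^ 2 * b ^ 2) * a ^ 4 = (√2 * (a ^ 3 * b)) ^ 2 by
      rw [mul_pow, Real.sq_sqrt zero_le_two]; ring, Real.sqrt_sq (by positivity)]
  rw [hu2, ha2, hb2, ha4, Real.sqrt_sq hu, hroot] at hint
  have hsqrt2 : √2 ≤ 2 := by
    rw [Real.sqrt_le_left zero_le_two]; norm_num
  rw [hu4, ha4, hb4]
  calc 1 / 2 * ∫ r in Ioo (0:ℝ) 1, y r ^ 2 * x' r * g (x r)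
      ≤ 1 / 2 * ((A + δ * u) * (√2 * (a ^ 3 * b) * u ^ 2)) := by gcongr
    _ ≤ (A + δ * u) * (a ^ 3 * b * u ^ 2) := by
      have : 0 ≤ (A + δ * u) * (a ^ 3 * b * u ^ 2) := by positivity
      nlinarith
    _ ≤ b ^ 4 / 2 + (ε * u ^ 4 + A ^ 4 / (4 * ε ^ 2)) * a ^ 4 :=
      burgers_young hε hδ0 hδ1 hδε hu ha hb
    _ = _ := by ring

end UnitInterval

theorem directional_derivative_burgers_bound_general
    (ψ : ℝ → ℝ)
    (C : ℝ)
    (ω : ℝ → ℝ) (hωpos : ∀ s, 0 ≤ ω s)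
    (hωbdd : ∃ Cω : ℝ, ∀ s, ω s ≤ Cω)
    (hωlim : Filter.Tendsto ω Filter.atTop (nhds 0))
    (hψ'' : ∀ ξ : ℝ, |deriv (deriv ψ) ξ| ≤ C + Real.sqrt |ξ| * ω |ξ|) :
    ∃ Cε : ℝ → ℝ, (∀ ε : ℝ, 0 < ε → 0 ≤ Cε ε) ∧
      ∀ (ε : ℝ), 0 < ε →
        ∀ (x x' y y' : ℝ → ℝ),
          (∀ r ∈ Icc (0:ℝ) 1, HasDerivWithinAt x (x' r) (Icc (0:ℝ) 1) r) →
          ContinuousOn x' (Icc (0:ℝ) 1) →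
          (∀ r ∈ Icc (0:ℝ) 1, HasDerivWithinAt y (y' r) (Icc (0:ℝ) 1) r) →
          ContinuousOn y' (Icc (0:ℝ) 1) →
          x 0 = 0 → x 1 = 0 → y 0 = 0 → y 1 = 0 →
          (1 / 2) * ∫ r in Ioo (0:ℝ) 1, (y r) ^ 2 * x' r * deriv (deriv ψ) (x r) ≤
            (1 / 2) * (∫ r in Ioo (0:ℝ) 1, (y' r) ^ 2)
              + (ε * (∫ r in Ioo (0:ℝ) 1, (x' r) ^ 2) + Cε ε)
                  * ∫ r in Ioo (0:ℝ) 1, (y r) ^ 2 := by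
  obtain ⟨Cω, hCω⟩ := hωbdd
  choose! A hA using fun δ (hδ : 0 < δ) => exists_abs_le_add_mul_sqrt hωpos hCω hωlim hψ'' hδ
  refine ⟨fun ε => A (min 1 (ε / 2)) ^ 4 / (4 * ε ^ 2), fun ε _ => by positivity,
    fun ε hε x x' y y' hx hx' hy hy' hx0 _ hy0 _ => ?_⟩
  have hδ : 0 < min 1 (ε / 2) := lt_min one_pos (half_pos hε)
  exact half_integral_sq_mul_deriv_mul_comp_le (hA _ hδ) hε hδ.le (min_le_left _ _)
    (min_le_right _ _) hx hx' hy hy' hx0 hy0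

/-- Let `ψ : ℝ → ℝ` be `C²` with `|ψ''(ξ)| ≤ C + √|ξ| ω(|ξ|)` where
`ω` is bounded, Borel measurable and vanishes at infinity (condition (Ψ)).  Then there is
a function `C : (0,∞) → [0,∞)` such that for every `ε > 0` and all `C¹` functions
`x, y : [0,1] → ℝ` vanishing at the endpoints:
`(1/2) ∫₀¹ y(r)² x'(r) ψ''(x r) dr ≤ (1/2)‖y'‖₂² + (ε ‖x'‖₂² + C(ε)) ‖y‖₂²`. -/
theorem directional_derivative_burgers_bound
    (ψ : ℝ → ℝ) (hψ : ContDiff ℝ 2 ψ)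
    (C : ℝ) (hC : 0 ≤ C)
    (ω : ℝ → ℝ) (hωmeas : Measurable ω) (hωpos : ∀ s, 0 ≤ ω s)
    (hωbdd : ∃ Cω : ℝ, ∀ s, ω s ≤ Cω)
    (hωlim : Filter.Tendsto ω Filter.atTop (nhds 0))
    (hψ'' : ∀ ξ : ℝ, |deriv (deriv ψ) ξ| ≤ C + Real.sqrt |ξ| * ω |ξ|) :
    ∃ Cε : ℝ → ℝ, (∀ ε : ℝ, 0 < ε → 0 ≤ Cε ε) ∧
      ∀ (ε : ℝ), 0 < ε →
        ∀ (x x' y y' : ℝ → ℝ),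
          (∀ r ∈ Icc (0:ℝ) 1, HasDerivWithinAt x (x' r) (Icc (0:ℝ) 1) r) →
          ContinuousOn x' (Icc (0:ℝ) 1) →
          (∀ r ∈ Icc (0:ℝ) 1, HasDerivWithinAt y (y' r) (Icc (0:ℝ) 1) r) →
          ContinuousOn y' (Icc (0:ℝ) 1) →
          x 0 = 0 → x 1 = 0 → y 0 = 0 → y 1 = 0 →
          (1 / 2) * ∫ r in Ioo (0:ℝ) 1, (y r) ^ 2 * x' r * deriv (deriv ψ) (x r) ≤
            (1 / 2) * (∫ r in Ioo (0:ℝ) 1, (y' r) ^ 2)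
              + (ε * (∫ r in Ioo (0:ℝ) 1, (x' r) ^ 2) + Cε ε)
                  * ∫ r in Ioo (0:ℝ) 1, (y r) ^ 2 :=
  directional_derivative_burgers_bound_general ψ C ω hωpos hωbdd hωlim hψ''
end

section
/- Let q₁ ∈ [2,∞], q₂ ∈ [1,∞), g ∈ L^{q₁}((0,1);[0,∞)), and let φ : (0,1) × ℝ → ℝ be measurable in the first variable and continuous in the second with |φ(r,ξ)| ≤ g(r)(1 + |ξ|^{q₂}) for all r ∈ (0,1) and ξ ∈ ℝ. Then for every p ∈ [2,∞) and every continuously differentiable x : [0,1] → ℝ with x(0) = x(1) = 0: ( ∫₀¹ φ(r,x(r))² dr )^{1/2} ≤ 2 ‖g‖_{q₁} ((p+2)/2)^{(2q₂−2+4/q₁)/(p+2)} (1 + ‖x‖₂^{1−2/q₁}) [ (1 + ‖x'‖₂²)(1 + ‖x‖_p^p) ]^{(q₂−1+2/q₁)/(p+2)}. -/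
/-!
Integrating the derivative of `|x|^((p+2)/2)` from `0`, where `x` vanishes, and applying
Cauchy–Schwarz gives the Agmon-type bound `‖x‖_∞^((p+2)/2) ≤ (p+2)/2 · ‖x‖_p^(p/2) ‖x'‖₂`.
Split `|x|^q₂ = |x|^σ |x|^β` with `β = 1 - 2/q₁` and `σ = q₂ - 1 + 2/q₁`: the sup bound turns
`|x|^σ` into a constant `K`, so `|φ(r, x r)| ≤ g r (1 + K |x r|^β)`. Hölder's inequality for
`1/2 = 1/q₁ + β/2` and Minkowski's inequality then give `‖φ(·, x)‖₂ ≤ ‖g‖_q₁ (1 + K ‖x‖₂^β)`,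
because `‖ |x|^β ‖_(2/β) = ‖x‖₂^β`.
-/

open Set MeasureTheory
open scoped ENNReal

theorem ENNReal.toReal_inv_le_inv_two {q : ℝ≥0∞} (hq : 2 ≤ q) : q⁻¹.toReal ≤ 2⁻¹ := by
  simpa using ENNReal.toReal_mono (by simp) (ENNReal.inv_le_inv.2 hq)

/-- The partner exponent is `2q/(q-2)`; for `q = 2` it is `2 / 0 = ∞`. -/
theorem ENNReal.holderTriple_div_ofReal_one_sub {q : ℝ≥0∞} (hq : 2 ≤ q) :
    ENNReal.HolderTriple q (2 / ENNReal.ofReal (1 - 2 * q⁻¹.toReal)) 2 := by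
  set a := q⁻¹.toReal
  have hqa : q⁻¹ = ENNReal.ofReal a :=
    (ENNReal.ofReal_toReal (ENNReal.inv_ne_top.2 (two_pos.trans_le hq).ne')).symm
  have ha : a ≤ 2⁻¹ := ENNReal.toReal_inv_le_inv_two hq
  constructor
  rw [ENNReal.inv_div (.inl ENNReal.ofReal_ne_top) (.inr two_ne_zero), hqa,
    ← ENNReal.ofReal_ofNat 2, ← ENNReal.ofReal_div_of_pos two_pos,
    ← ENNReal.ofReal_add (by positivity) (by linarith), ← ENNReal.ofReal_inv_of_pos two_pos]
  ring_nf

theorem ContinuousOn.memLp_restrict_of_subset_isCompact {X E : Type*} [TopologicalSpace X]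
    [MeasurableSpace X] [OpensMeasurableSpace X] {μ : Measure X} [IsFiniteMeasureOnCompacts μ]
    [NormedAddCommGroup E] {f : X → E} {K t : Set X} (hf : ContinuousOn f K) (hK : IsCompact K)
    (ht : MeasurableSet t) (htK : t ⊆ K) (p : ℝ≥0∞) : MemLp f p (μ.restrict t) := by
  have : IsFiniteMeasure (μ.restrict t) :=
    isFiniteMeasure_restrict.2 ((measure_mono htK).trans_lt hK.measure_lt_top).ne
  obtain ⟨C, hC⟩ := hK.exists_bound_of_continuousOn hf
  exact .of_bound (hf.aestronglyMeasurable_of_subset_isCompact hK ht htK) C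
    ((ae_restrict_iff' ht).2 (.of_forall fun y hy => hC y (htK hy)))

namespace MeasureTheory

variable {α : Type*} [MeasurableSpace α] {μ : Measure α}

theorem integral_mul_le_sqrt_mul_sqrt {f g : α → ℝ} (hf0 : 0 ≤ᵐ[μ] f) (hg0 : 0 ≤ᵐ[μ] g)
    (hf : MemLp f 2 μ) (hg : MemLp g 2 μ) :
    ∫ a, f a * g a ∂μ ≤ √(∫ a, f a ^ 2 ∂μ) * √(∫ a, g a ^ 2 ∂μ) := by
  have h := integral_mul_le_Lp_mul_Lq_of_nonneg Real.HolderConjugate.two_two hf0 hg0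
    (by simpa using hf) (by simpa using hg)
  simpa only [Real.sqrt_eq_rpow, Real.rpow_two] using h

theorem MemLp.eLpNorm_two_eq_ofReal_sqrt {f : α → ℝ} (hf : MemLp f 2 μ) :
    eLpNorm f 2 μ = ENNReal.ofReal √(∫ a, f a ^ 2 ∂μ) := by
  rw [hf.eLpNorm_eq_integral_rpow_norm two_ne_zero ENNReal.ofNat_ne_top, Real.sqrt_eq_rpow]
  simp [Real.norm_eq_abs, sq_abs, one_div]

theorem sqrt_integral_sq_le_of_abs_le {f G : α → ℝ} (hG : MemLp G 2 μ)
    (hfG : ∀ᵐ a ∂μ, |f a| ≤ G a) : √(∫ a, f a ^ 2 ∂μ) ≤ (eLpNorm G 2 μ).toReal := by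
  rw [hG.eLpNorm_two_eq_ofReal_sqrt, ENNReal.toReal_ofReal (Real.sqrt_nonneg _)]
  refine Real.sqrt_le_sqrt (integral_mono_of_nonneg (.of_forall fun a => sq_nonneg _)
    hG.integrable_sq (hfG.mono fun a ha => ?_))
  simpa only [sq_abs] using pow_le_pow_left₀ (abs_nonneg _) ha 2

theorem eLpNorm_abs_rpow_le [IsProbabilityMeasure μ] (f : α → ℝ) {β : ℝ} (hβ : 0 ≤ β)
    (p : ℝ≥0∞) :
    eLpNorm (fun a => |f a| ^ β) (p / ENNReal.ofReal β) μ ≤ eLpNorm f p μ ^ β := by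
  rcases hβ.eq_or_lt with rfl | hβ
  · simpa using eLpNorm_le_of_ae_bound (μ := μ) (p := p / ENNReal.ofReal 0)
      (f := fun _ : α => (1 : ℝ)) (C := 1) (.of_forall fun _ => by simp)
  · have hdiv : p / ENNReal.ofReal β * ENNReal.ofReal β = p :=
      ENNReal.div_mul_cancel (by simpa using hβ) ENNReal.ofReal_ne_top
    exact (eLpNorm_norm_rpow f hβ).trans_le (by rw [hdiv])

theorem eLpNorm_mul_one_add_abs_rpow_le [IsProbabilityMeasure μ] {q : ℝ≥0∞} (hq : 2 ≤ q)
    {g x : α → ℝ} (hg : AEStronglyMeasurable g μ) (hx : AEStronglyMeasurable x μ) {K : ℝ}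
    (hK : 0 ≤ K) :
    eLpNorm (fun a => g a * (1 + K * |x a| ^ (1 - 2 * q⁻¹.toReal))) 2 μ ≤
      eLpNorm g q μ * (1 + ENNReal.ofReal K * eLpNorm x 2 μ ^ (1 - 2 * q⁻¹.toReal)) := by
  set β := 1 - 2 * q⁻¹.toReal
  have hβ : 0 ≤ β := by linarith [ENNReal.toReal_inv_le_inv_two hq]
  set t := 2 / ENNReal.ofReal β
  have : ENNReal.HolderTriple q t 2 := ENNReal.holderTriple_div_ofReal_one_sub hq
  have ht : 1 ≤ t := one_le_two.trans (ENNReal.HolderTriple.le t q 2)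
  have hpow : AEStronglyMeasurable (fun a => K * |x a| ^ β) μ :=
    ((hx.aemeasurable.abs.pow_const β).const_mul K).aestronglyMeasurable
  have hone : eLpNorm (fun _ => (1 : ℝ)) t μ ≤ 1 := by
    simpa using eLpNorm_le_of_ae_bound (μ := μ) (p := t) (f := fun _ : α => (1 : ℝ)) (C := 1)
      (.of_forall fun _ => by simp)
  have hpow_le : eLpNorm (fun a => K * |x a| ^ β) t μ ≤
      ENNReal.ofReal K * eLpNorm x 2 μ ^ β := by
    rw [show (fun a => K * |x a| ^ β) = K • fun a => |x a| ^ β from rfl,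
      eLpNorm_const_smul, Real.enorm_eq_ofReal hK]
    exact mul_le_mul_right (eLpNorm_abs_rpow_le x hβ 2) _
  calc eLpNorm (fun a => g a * (1 + K * |x a| ^ β)) 2 μ
      ≤ eLpNorm g q μ * eLpNorm (fun a => 1 + K * |x a| ^ β) t μ :=
        eLpNorm_smul_le_mul_eLpNorm (φ := g) (aestronglyMeasurable_const.add hpow) hg
    _ ≤ eLpNorm g q μ * (eLpNorm (fun _ => (1 : ℝ)) t μ +
          eLpNorm (fun a => K * |x a| ^ β) t μ) :=
        mul_le_mul_right (eLpNorm_add_le aestronglyMeasurable_const hpow ht) _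
    _ ≤ eLpNorm g q μ * (1 + ENNReal.ofReal K * eLpNorm x 2 μ ^ β) :=
        mul_le_mul_right (add_le_add hone hpow_le) _

theorem sqrt_integral_sq_le_of_abs_le_mul_one_add [IsProbabilityMeasure μ] {q : ℝ≥0∞}
    (hq : 2 ≤ q) {f g x : α → ℝ} (hg : MemLp g q μ) (hx : MemLp x 2 μ) {K : ℝ} (hK : 0 ≤ K)
    (hf : ∀ᵐ a ∂μ, |f a| ≤ g a * (1 + K * |x a| ^ (1 - 2 * q⁻¹.toReal))) :
    √(∫ a, f a ^ 2 ∂μ) ≤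
      (eLpNorm g q μ).toReal * (1 + K * √(∫ a, x a ^ 2 ∂μ) ^ (1 - 2 * q⁻¹.toReal)) := by
  set β := 1 - 2 * q⁻¹.toReal
  set X := √(∫ a, x a ^ 2 ∂μ)
  have hβ : 0 ≤ β := by linarith [ENNReal.toReal_inv_le_inv_two hq]
  have hG : eLpNorm (fun a => g a * (1 + K * |x a| ^ β)) 2 μ ≤
      eLpNorm g q μ * ENNReal.ofReal (1 + K * X ^ β) := by
    have := eLpNorm_mul_one_add_abs_rpow_le hq hg.1 hx.1 hK
    rwa [hx.eLpNorm_two_eq_ofReal_sqrt, ENNReal.ofReal_rpow_of_nonneg (Real.sqrt_nonneg _) hβ,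
      ← ENNReal.ofReal_mul hK, ← ENNReal.ofReal_one,
      ← ENNReal.ofReal_add zero_le_one (by positivity)] at this
  have hGm : AEStronglyMeasurable (fun a => g a * (1 + K * |x a| ^ β)) μ :=
    hg.1.mul (aestronglyMeasurable_const.add
      ((hx.1.aemeasurable.abs.pow_const β).const_mul _).aestronglyMeasurable)
  have hGfin : eLpNorm g q μ * ENNReal.ofReal (1 + K * X ^ β) ≠ ∞ :=
    ENNReal.mul_ne_top hg.eLpNorm_ne_top ENNReal.ofReal_ne_top
  calc √(∫ a, f a ^ 2 ∂μ)
      ≤ (eLpNorm (fun a => g a * (1 + K * |x a| ^ β)) 2 μ).toReal :=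
        sqrt_integral_sq_le_of_abs_le ⟨hGm, hG.trans_lt hGfin.lt_top⟩ hf
    _ ≤ (eLpNorm g q μ).toReal * (1 + K * X ^ β) := by
        simpa [ENNReal.toReal_mul, ENNReal.toReal_ofReal (by positivity : 0 ≤ 1 + K * X ^ β)]
          using ENNReal.toReal_mono hGfin hG

end MeasureTheory

theorem HasDerivWithinAt.abs_rpow {x : ℝ → ℝ} {x' s t : ℝ} {S : Set ℝ}
    (hx : HasDerivWithinAt x x' S t) (hs : 2 ≤ s) :
    HasDerivWithinAt (fun t => |x t| ^ s) (s * |x t| ^ (s - 2) * x t * x') S t := by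
  have hsq : ∀ y : ℝ, |y| ^ s = (y ^ 2) ^ (s / 2) := fun y => by
    rw [← sq_abs, ← Real.rpow_natCast, ← Real.rpow_mul (abs_nonneg y)]
    norm_num [mul_div_cancel₀]
  have hsq' : (x t ^ 2) ^ (s / 2 - 1) = |x t| ^ (s - 2) := by
    rw [← sq_abs, ← Real.rpow_natCast, ← Real.rpow_mul (abs_nonneg _)]
    congr 1; push_cast; ring
  simp only [hsq]
  convert (hx.fun_pow 2).rpow_const (p := s / 2) (Or.inr (by linarith)) using 1
  rw [hsq']
  push_cast
  ring

theorem abs_rpow_le_integral_of_hasDerivWithinAt {a b s : ℝ} (hs : 2 ≤ s) {x x' : ℝ → ℝ}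
    (hderiv : ∀ t ∈ Icc a b, HasDerivWithinAt x (x' t) (Icc a b) t)
    (hcont : ContinuousOn x' (Icc a b)) (hxa : x a = 0) {r : ℝ} (hr : r ∈ Icc a b) :
    |x r| ^ s ≤ s * ∫ t in Ioo a b, |x t| ^ (s - 1) * |x' t| := by
  have hxc : ContinuousOn x (Icc a b) := fun t ht => (hderiv t ht).continuousWithinAt
  have hrab : Icc a r ⊆ Icc a b := Icc_subset_Icc_right hr.2
  set u' : ℝ → ℝ := fun t => s * |x t| ^ (s - 2) * x t * x' t
  set v : ℝ → ℝ := fun t => s * (|x t| ^ (s - 1) * |x' t|)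
  have hu'_cont : ContinuousOn u' (Icc a b) :=
    ((continuousOn_const.mul (hxc.abs.rpow_const fun _ _ => Or.inr (by linarith))).mul
      hxc).mul hcont
  have hv_cont : ContinuousOn v (Icc a b) :=
    continuousOn_const.mul
      ((hxc.abs.rpow_const fun _ _ => Or.inr (by linarith)).mul hcont.abs)
  have hu'_le : ∀ t, u' t ≤ v t := fun t => by
    refine (le_abs_self _).trans_eq ?_
    have : |x t| ^ (s - 2) * |x t| = |x t| ^ (s - 1) := by
      rw [← Real.rpow_add_one' (abs_nonneg _) (by linarith)]; ring_nf
    simp only [u', v, abs_mul, abs_of_nonneg (show 0 ≤ s by linarith),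
      abs_of_nonneg (Real.rpow_nonneg (abs_nonneg (x t)) _), ← this]
    ring
  have hftc : ∫ t in a..r, u' t = |x r| ^ s := by
    rw [intervalIntegral.integral_eq_sub_of_hasDeriv_right_of_le hr.1
      ((hxc.mono hrab).abs.rpow_const fun _ _ => Or.inr (by linarith))
      (fun t ht => ((hderiv t (hrab (Ioo_subset_Icc_self ht))).abs_rpow hs).hasDerivAt
        (Icc_mem_nhds ht.1 (ht.2.trans_le hr.2)) |>.hasDerivWithinAt)
      ((hu'_cont.mono hrab).intervalIntegrable_of_Icc hr.1)]
    simp [hxa, Real.zero_rpow (by linarith : s ≠ 0)]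
  calc |x r| ^ s = ∫ t in a..r, u' t := hftc.symm
    _ ≤ ∫ t in a..r, v t :=
        intervalIntegral.integral_mono_on hr.1
          ((hu'_cont.mono hrab).intervalIntegrable_of_Icc hr.1)
          ((hv_cont.mono hrab).intervalIntegrable_of_Icc hr.1) fun t _ => hu'_le t
    _ ≤ ∫ t in a..b, v t :=
        intervalIntegral.integral_mono_interval le_rfl hr.1 hr.2
          (.of_forall fun t => by positivity)
          (hv_cont.intervalIntegrable_of_Icc (hr.1.trans hr.2))
    _ = s * ∫ t in Ioo a b, |x t| ^ (s - 1) * |x' t| := by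
        rw [intervalIntegral.integral_of_le (hr.1.trans hr.2), integral_Ioc_eq_integral_Ioo,
          integral_const_mul]

theorem abs_rpow_le_mul_sqrt_integral {a b p : ℝ} (hp : 2 ≤ p) {x x' : ℝ → ℝ}
    (hderiv : ∀ t ∈ Icc a b, HasDerivWithinAt x (x' t) (Icc a b) t)
    (hcont : ContinuousOn x' (Icc a b)) (hxa : x a = 0) {r : ℝ} (hr : r ∈ Icc a b) :
    |x r| ^ ((p + 2) / 2) ≤
      (p + 2) / 2 * √(∫ t in Ioo a b, |x t| ^ p) * √(∫ t in Ioo a b, x' t ^ 2) := by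
  have hxc : ContinuousOn x (Icc a b) := fun t ht => (hderiv t ht).continuousWithinAt
  have hmemLp {f : ℝ → ℝ} (hf : ContinuousOn f (Icc a b)) :
      MemLp f 2 (volume.restrict (Ioo a b)) :=
    hf.memLp_restrict_of_subset_isCompact isCompact_Icc measurableSet_Ioo Ioo_subset_Icc_self 2
  have hCS := integral_mul_le_sqrt_mul_sqrt (μ := volume.restrict (Ioo a b))
    (.of_forall fun t => Real.rpow_nonneg (abs_nonneg (x t)) (p / 2))
    (.of_forall fun t => abs_nonneg (x' t))
    (hmemLp (hxc.abs.rpow_const fun _ _ => Or.inr (by linarith))) (hmemLp hcont.abs)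
  have hsq : ∀ t, (|x t| ^ (p / 2)) ^ 2 = |x t| ^ p := fun t => by
    rw [← Real.rpow_natCast, ← Real.rpow_mul (abs_nonneg _)]; norm_num
  simp only [hsq, sq_abs] at hCS
  calc |x r| ^ ((p + 2) / 2)
      ≤ (p + 2) / 2 * ∫ t in Ioo a b, |x t| ^ ((p + 2) / 2 - 1) * |x' t| :=
        abs_rpow_le_integral_of_hasDerivWithinAt (by linarith) hderiv hcont hxa hr
    _ ≤ (p + 2) / 2 * (√(∫ t in Ioo a b, |x t| ^ p) * √(∫ t in Ioo a b, x' t ^ 2)) := by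
        rw [show (p + 2) / 2 - 1 = p / 2 by ring]
        gcongr
    _ = _ := by ring

theorem Real.rpow_le_of_rpow_le_mul_sqrt {u A P D s σ : ℝ} (hu : 0 ≤ u) (hA : 0 ≤ A)
    (hP : 0 ≤ P) (hD : 0 ≤ D) (hs : 0 < s) (hσ : 0 ≤ σ) (h : u ^ s ≤ A * √P * √D) :
    u ^ σ ≤ A ^ (σ / s) * ((1 + D) * (1 + P)) ^ (σ / (2 * s)) := by
  have hσs : 0 ≤ σ / s := div_nonneg hσ hs.le
  calc u ^ σ = (u ^ s) ^ (σ / s) := by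
        rw [← Real.rpow_mul hu, mul_div_cancel₀ _ hs.ne']
    _ ≤ (A * √(P * D)) ^ (σ / s) := by
        rw [Real.sqrt_mul hP, ← mul_assoc]
        exact Real.rpow_le_rpow (by positivity) h hσs
    _ = A ^ (σ / s) * (P * D) ^ (σ / (2 * s)) := by
        rw [Real.mul_rpow hA (Real.sqrt_nonneg _), Real.sqrt_eq_rpow,
          ← Real.rpow_mul (by positivity)]
        congr 2
        field_simp
    _ ≤ A ^ (σ / s) * ((1 + D) * (1 + P)) ^ (σ / (2 * s)) := by
        refine mul_le_mul_of_nonneg_left ?_ (by positivity)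
        exact Real.rpow_le_rpow (by positivity) (by nlinarith) (by positivity)

theorem abs_rpow_le_mul_one_add_integral_rpow {a b p σ : ℝ} (hp : 2 ≤ p) (hσ : 0 ≤ σ)
    {x x' : ℝ → ℝ} (hderiv : ∀ t ∈ Icc a b, HasDerivWithinAt x (x' t) (Icc a b) t)
    (hcont : ContinuousOn x' (Icc a b)) (hxa : x a = 0) {r : ℝ} (hr : r ∈ Icc a b) :
    |x r| ^ σ ≤ ((p + 2) / 2) ^ (2 * σ / (p + 2)) *
      ((1 + ∫ t in Ioo a b, x' t ^ 2) * (1 + ∫ t in Ioo a b, |x t| ^ p)) ^ (σ / (p + 2)) := by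
  convert Real.rpow_le_of_rpow_le_mul_sqrt (abs_nonneg _) (by positivity)
    (integral_nonneg fun t => by positivity) (integral_nonneg fun t => by positivity)
    (by positivity) hσ (abs_rpow_le_mul_sqrt_integral hp hderiv hcont hxa hr) using 3 <;>
    field_simp

instance : IsProbabilityMeasure (volume.restrict (Ioo (0:ℝ) 1)) :=
  ⟨by simp [Real.volume_Ioo]⟩

theorem nemytskii_L2_bound_general
    (q₁ : ℝ≥0∞) (hq₁ : 2 ≤ q₁) (q₂ : ℝ) (hq₂ : 1 ≤ q₂)
    (g : ℝ → ℝ) (hg : MemLp g q₁ (volume.restrict (Ioo (0:ℝ) 1)))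
    (φ : ℝ → ℝ → ℝ)
    (hφle : ∀ r ∈ Ioo (0:ℝ) 1, ∀ ξ : ℝ, |φ r ξ| ≤ g r * (1 + |ξ| ^ q₂))
    (p : ℝ) (hp : 2 ≤ p)
    (x x' : ℝ → ℝ)
    (hderiv : ∀ r ∈ Icc (0:ℝ) 1, HasDerivWithinAt x (x' r) (Icc (0:ℝ) 1) r)
    (hcont : ContinuousOn x' (Icc (0:ℝ) 1))
    (hx0 : x 0 = 0) :
    Real.sqrt (∫ r in Ioo (0:ℝ) 1, (φ r (x r)) ^ 2) ≤
      2 * (eLpNorm g q₁ (volume.restrict (Ioo (0:ℝ) 1))).toReal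
        * ((p + 2) / 2) ^ ((2 * q₂ - 2 + 4 * (q₁⁻¹).toReal) / (p + 2))
        * (1 + Real.sqrt (∫ r in Ioo (0:ℝ) 1, (x r) ^ 2) ^ (1 - 2 * (q₁⁻¹).toReal))
        * ((1 + ∫ r in Ioo (0:ℝ) 1, (x' r) ^ 2) * (1 + ∫ r in Ioo (0:ℝ) 1, |x r| ^ p))
            ^ ((q₂ - 1 + 2 * (q₁⁻¹).toReal) / (p + 2)) := by
  set μ := volume.restrict (Ioo (0:ℝ) 1)
  set a := (q₁⁻¹).toReal
  set β := 1 - 2 * a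
  set σ := q₂ - 1 + 2 * a
  set M := ((p + 2) / 2) ^ ((2 * q₂ - 2 + 4 * a) / (p + 2))
  set N := ((1 + ∫ r in Ioo (0:ℝ) 1, (x' r) ^ 2) * (1 + ∫ r in Ioo (0:ℝ) 1, |x r| ^ p))
    ^ (σ / (p + 2))
  set X := √(∫ r in Ioo (0:ℝ) 1, (x r) ^ 2)
  have ha : 0 ≤ a := ENNReal.toReal_nonneg
  have hσ : 0 ≤ σ := by linarith
  have hM : 1 ≤ M := Real.one_le_rpow (by linarith) (div_nonneg (by linarith) (by linarith))
  have hN : 1 ≤ N := Real.one_le_rpow (one_le_mul_of_one_le_of_one_le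
      (le_add_of_nonneg_right (integral_nonneg fun r => by positivity))
      (le_add_of_nonneg_right (integral_nonneg fun r => by positivity))) (by positivity)
  have hbound : ∀ r ∈ Icc (0:ℝ) 1, |x r| ^ σ ≤ M * N := fun r hr => by
    convert abs_rpow_le_mul_one_add_integral_rpow hp hσ hderiv hcont hx0 hr using 3
    ring
  have hdom : ∀ᵐ r ∂μ, |φ r (x r)| ≤ g r * (1 + M * N * |x r| ^ β) := by
    filter_upwards [ae_restrict_mem measurableSet_Ioo] with r hr
    have hg0 : 0 ≤ g r :=
      nonneg_of_mul_nonneg_left ((abs_nonneg _).trans (hφle r hr 0)) (by positivity)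
    calc |φ r (x r)| ≤ g r * (1 + |x r| ^ σ * |x r| ^ β) := by
          rw [← Real.rpow_add' (abs_nonneg _) (by linarith)]
          convert hφle r hr (x r) using 4; ring
      _ ≤ g r * (1 + M * N * |x r| ^ β) := by
          gcongr
          exact hbound r (Ioo_subset_Icc_self hr)
  have hxc : ContinuousOn x (Icc 0 1) := fun t ht => (hderiv t ht).continuousWithinAt
  have hx : MemLp x 2 μ :=
    hxc.memLp_restrict_of_subset_isCompact isCompact_Icc measurableSet_Ioo Ioo_subset_Icc_self 2
  have hMN : 1 ≤ M * N := one_le_mul_of_one_le_of_one_le hM hN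
  calc √(∫ r in Ioo (0:ℝ) 1, (φ r (x r)) ^ 2)
      ≤ (eLpNorm g q₁ μ).toReal * (1 + M * N * X ^ β) :=
        sqrt_integral_sq_le_of_abs_le_mul_one_add hq₁ hg hx (by positivity) hdom
    _ ≤ (eLpNorm g q₁ μ).toReal * (2 * M * (1 + X ^ β) * N) := by
        have hXβ : 0 ≤ X ^ β := by positivity
        gcongr
        nlinarith
    _ = _ := by ring

/-- Under condition (Φ1), i.e. `|φ(r,ξ)| ≤ g(r)(1 + |ξ|^{q₂})` with
`g ∈ L^{q₁}(0,1)`, `q₁ ∈ [2,∞]`, `q₂ ∈ [1,∞)`, for every `p ∈ [2,∞)` and every `C¹`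
function `x : [0,1] → ℝ` vanishing at the endpoints:
`‖φ(·, x(·))‖₂ ≤ 2‖g‖_{q₁} ((p+2)/2)^{(2q₂-2+4/q₁)/(p+2)} (1 + ‖x‖₂^{1-2/q₁})
  [(1+‖x'‖₂²)(1+‖x‖_p^p)]^{(q₂-1+2/q₁)/(p+2)}`. -/
theorem nemytskii_L2_bound
    (q₁ : ℝ≥0∞) (hq₁ : 2 ≤ q₁) (q₂ : ℝ) (hq₂ : 1 ≤ q₂)
    (g : ℝ → ℝ) (hg : MemLp g q₁ (volume.restrict (Ioo (0:ℝ) 1)))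
    (hgpos : ∀ r ∈ Ioo (0:ℝ) 1, 0 ≤ g r)
    (φ : ℝ → ℝ → ℝ)
    (hφmeas : ∀ ξ : ℝ, Measurable fun r => φ r ξ)
    (hφcont : ∀ r ∈ Ioo (0:ℝ) 1, Continuous (φ r))
    (hφle : ∀ r ∈ Ioo (0:ℝ) 1, ∀ ξ : ℝ, |φ r ξ| ≤ g r * (1 + |ξ| ^ q₂))
    (p : ℝ) (hp : 2 ≤ p)
    (x x' : ℝ → ℝ)
    (hderiv : ∀ r ∈ Icc (0:ℝ) 1, HasDerivWithinAt x (x' r) (Icc (0:ℝ) 1) r)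
    (hcont : ContinuousOn x' (Icc (0:ℝ) 1))
    (hx0 : x 0 = 0) (hx1 : x 1 = 0) :
    Real.sqrt (∫ r in Ioo (0:ℝ) 1, (φ r (x r)) ^ 2) ≤
      2 * (eLpNorm g q₁ (volume.restrict (Ioo (0:ℝ) 1))).toReal
        * ((p + 2) / 2) ^ ((2 * q₂ - 2 + 4 * (q₁⁻¹).toReal) / (p + 2))
        * (1 + Real.sqrt (∫ r in Ioo (0:ℝ) 1, (x r) ^ 2) ^ (1 - 2 * (q₁⁻¹).toReal))
        * ((1 + ∫ r in Ioo (0:ℝ) 1, (x' r) ^ 2) * (1 + ∫ r in Ioo (0:ℝ) 1, |x r| ^ p))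
            ^ ((q₂ - 1 + 2 * (q₁⁻¹).toReal) / (p + 2)) :=
  nemytskii_L2_bound_general q₁ hq₁ q₂ hq₂ g hg φ hφle p hp x x' hderiv hcont hx0
end

section
/- Let 2 ≤ p ≤ p' < ∞ and 0 < κ ≤ κ'. Then there exists c_p ∈ (0,∞), depending only on p, such that Θ_{p,κ}(x) ≤ c_p Θ_{p',κ'}(x) for every continuously differentiable x : [0,1] → ℝ with x(0) = x(1) = 0. -/
/-!
The exponential factor of `Θ_{p,κ}` grows with `κ` because `‖x‖₂² ≥ 0`. For the bracket, the
elementary bound `a^q ≤ 1 + a^{q'}` (`a ≥ 0`, `0 ≤ q ≤ q'`) gives `‖x‖_p^p ≤ 1 + ‖x‖_{p'}^{p'}` and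
`∫ x'² |x|^{p-2} ≤ ‖x'‖₂² + ∫ x'² |x|^{p'-2}`; the surplus terms are absorbed by `c_p = 2 + (p/2)²`.
For `p = 2` it suffices that every bracket dominates `1 + ‖x'‖₂²`.
-/

open Set MeasureTheory

/-- The Lyapunov weight `Θ_{p,κ}` of the paper, evaluated on a `C¹` path `x` with
derivative `x'`:  `Θ_{2,κ}(x) = exp(κ‖x‖₂²)(1 + ‖x'‖₂²)` and, for `p > 2`,
`Θ_{p,κ}(x) = exp(κ‖x‖₂²)[(1+‖x‖_p^p)(1+‖x'‖₂²) + (p/2)² ∫₀¹ x'(r)²|x r|^{p-2} dr]`. -/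
noncomputable def ThetaWeight (p κ : ℝ) (x x' : ℝ → ℝ) : ℝ :=
  if p = 2 then
    Real.exp (κ * ∫ r in Ioo (0:ℝ) 1, (x r) ^ 2) *
      (1 + ∫ r in Ioo (0:ℝ) 1, (x' r) ^ 2)
  else
    Real.exp (κ * ∫ r in Ioo (0:ℝ) 1, (x r) ^ 2) *
      ((1 + ∫ r in Ioo (0:ℝ) 1, |x r| ^ p) * (1 + ∫ r in Ioo (0:ℝ) 1, (x' r) ^ 2)
        + (p / 2) ^ 2 * ∫ r in Ioo (0:ℝ) 1, (x' r) ^ 2 * |x r| ^ (p - 2))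

lemma Real.rpow_le_one_add_rpow {a q q' : ℝ} (ha : 0 ≤ a) (hq : 0 ≤ q) (hqq' : q ≤ q') :
    a ^ q ≤ 1 + a ^ q' := by
  rcases le_or_gt a 1 with h | h
  · linarith [Real.rpow_le_one ha h hq, Real.rpow_nonneg ha q']
  · linarith [Real.rpow_le_rpow_of_exponent_le h.le hqq']

lemma MeasureTheory.integral_mul_abs_rpow_le {α : Type*} [MeasurableSpace α] {μ : Measure α}
    {f g : α → ℝ} {q q' : ℝ} (hg : 0 ≤ g) (hq : 0 ≤ q) (hqq' : q ≤ q')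
    (hg_int : Integrable g μ) (hq_int : Integrable (fun a => g a * |f a| ^ q) μ)
    (hq'_int : Integrable (fun a => g a * |f a| ^ q') μ) :
    ∫ a, g a * |f a| ^ q ∂μ ≤ ∫ a, g a ∂μ + ∫ a, g a * |f a| ^ q' ∂μ := by
  rw [← integral_add hg_int hq'_int]
  refine integral_mono hq_int (hg_int.add hq'_int) fun a => ?_
  have := Real.rpow_le_one_add_rpow (abs_nonneg (f a)) hq hqq'
  simpa [mul_add] using mul_le_mul_of_nonneg_left this (hg a)

lemma integral_Ioo_abs_rpow_le {x : ℝ → ℝ} {q q' : ℝ} (hx : ContinuousOn x (Icc 0 1))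
    (hq : 0 ≤ q) (hqq' : q ≤ q') :
    ∫ r in Ioo (0:ℝ) 1, |x r| ^ q ≤ 1 + ∫ r in Ioo (0:ℝ) 1, |x r| ^ q' := by
  have hint : ∀ s : ℝ, 0 ≤ s → IntegrableOn (fun r => |x r| ^ s) (Ioo (0:ℝ) 1) := fun s hs =>
    (hx.abs.rpow_const (p := s) fun _ _ => Or.inr hs).integrableOn_Icc.mono_set Ioo_subset_Icc_self
  simpa using integral_mul_abs_rpow_le (g := fun _ => 1) (fun _ => zero_le_one) hq hqq'
    (integrable_const 1) ((hint q hq).const_mul 1) ((hint q' (hq.trans hqq')).const_mul 1)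

lemma integral_Ioo_sq_mul_abs_rpow_le {x x' : ℝ → ℝ} {q q' : ℝ} (hx : ContinuousOn x (Icc 0 1))
    (hx' : ContinuousOn x' (Icc 0 1)) (hq : 0 ≤ q) (hqq' : q ≤ q') :
    ∫ r in Ioo (0:ℝ) 1, x' r ^ 2 * |x r| ^ q ≤
      (∫ r in Ioo (0:ℝ) 1, x' r ^ 2) + ∫ r in Ioo (0:ℝ) 1, x' r ^ 2 * |x r| ^ q' := by
  have hint : ∀ s : ℝ, 0 ≤ s → IntegrableOn (fun r => x' r ^ 2 * |x r| ^ s) (Ioo (0:ℝ) 1) :=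
    fun s hs => ((hx'.pow 2).mul (hx.abs.rpow_const (p := s) fun _ _ => Or.inr hs)
      ).integrableOn_Icc.mono_set Ioo_subset_Icc_self
  exact integral_mul_abs_rpow_le (fun r => sq_nonneg (x' r)) hq hqq'
    ((hx'.pow 2).integrableOn_Icc.mono_set Ioo_subset_Icc_self) (hint q hq)
    (hint q' (hq.trans hqq'))

noncomputable def thetaFactor (p : ℝ) (x x' : ℝ → ℝ) : ℝ :=
  if p = 2 then 1 + ∫ r in Ioo (0:ℝ) 1, (x' r) ^ 2
  else (1 + ∫ r in Ioo (0:ℝ) 1, |x r| ^ p) * (1 + ∫ r in Ioo (0:ℝ) 1, (x' r) ^ 2)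
    + (p / 2) ^ 2 * ∫ r in Ioo (0:ℝ) 1, (x' r) ^ 2 * |x r| ^ (p - 2)

lemma ThetaWeight_eq_exp_mul_thetaFactor (p κ : ℝ) (x x' : ℝ → ℝ) :
    ThetaWeight p κ x x' =
      Real.exp (κ * ∫ r in Ioo (0:ℝ) 1, (x r) ^ 2) * thetaFactor p x x' := by
  unfold ThetaWeight thetaFactor
  split_ifs <;> rfl

lemma one_add_integral_sq_le_thetaFactor (p : ℝ) (x x' : ℝ → ℝ) :
    1 + ∫ r in Ioo (0:ℝ) 1, (x' r) ^ 2 ≤ thetaFactor p x x' := by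
  have hA : 0 ≤ ∫ r in Ioo (0:ℝ) 1, |x r| ^ p :=
    integral_nonneg fun r => Real.rpow_nonneg (abs_nonneg _) _
  have hB : 0 ≤ ∫ r in Ioo (0:ℝ) 1, (x' r) ^ 2 := integral_nonneg fun r => sq_nonneg _
  have hI : 0 ≤ ∫ r in Ioo (0:ℝ) 1, (x' r) ^ 2 * |x r| ^ (p - 2) :=
    integral_nonneg fun r => mul_nonneg (sq_nonneg _) (Real.rpow_nonneg (abs_nonneg _) _)
  unfold thetaFactor
  split_ifs
  · rfl
  · nlinarith [mul_nonneg hA hB, mul_nonneg (sq_nonneg (p / 2)) hI]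

lemma thetaFactor_nonneg (p : ℝ) (x x' : ℝ → ℝ) : 0 ≤ thetaFactor p x x' :=
  le_trans (by positivity) (one_add_integral_sq_le_thetaFactor p x x')

lemma thetaBracket_le {p p' A A' B I I' : ℝ} (hp : 2 ≤ p) (hpp' : p ≤ p') (hA' : 0 ≤ A')
    (hB : 0 ≤ B) (hI' : 0 ≤ I') (hA : A ≤ 1 + A') (hI : I ≤ B + I') :
    (1 + A) * (1 + B) + (p / 2) ^ 2 * I ≤
      (2 + (p / 2) ^ 2) * ((1 + A') * (1 + B) + (p' / 2) ^ 2 * I') := by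
  have hq : 1 ≤ (p / 2) ^ 2 := by nlinarith
  have hqq' : (p / 2) ^ 2 ≤ (p' / 2) ^ 2 := by gcongr
  have hq0 : 0 ≤ 1 + (p / 2) ^ 2 := by positivity
  calc (1 + A) * (1 + B) + (p / 2) ^ 2 * I
      ≤ (2 + A') * (1 + B) + (p / 2) ^ 2 * (B + I') := by
        gcongr ?_ * _ + _ * ?_; linarith
    _ ≤ _ := by
        nlinarith [mul_nonneg (mul_nonneg hq0 hA') (by linarith : 0 ≤ 1 + B),
          mul_le_mul_of_nonneg_right hqq' hI', mul_nonneg hq0 (mul_nonneg (sq_nonneg (p' / 2)) hI')]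

lemma thetaFactor_le {p p' : ℝ} (hp : 2 ≤ p) (hpp' : p ≤ p') {x x' : ℝ → ℝ}
    (hx : ContinuousOn x (Icc 0 1)) (hx' : ContinuousOn x' (Icc 0 1)) :
    thetaFactor p x x' ≤ (2 + (p / 2) ^ 2) * thetaFactor p' x x' := by
  rcases hp.eq_or_lt with rfl | hp2
  · calc thetaFactor 2 x x' ≤ thetaFactor p' x x' := by
          simpa [thetaFactor] using one_add_integral_sq_le_thetaFactor p' x x'
      _ ≤ _ := le_mul_of_one_le_left (thetaFactor_nonneg _ _ _) (by nlinarith)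
  · rw [thetaFactor, thetaFactor, if_neg hp2.ne', if_neg (hp2.trans_le hpp').ne']
    exact thetaBracket_le hp hpp' (integral_nonneg fun r => Real.rpow_nonneg (abs_nonneg _) _)
      (integral_nonneg fun r => sq_nonneg _)
      (integral_nonneg fun r => mul_nonneg (sq_nonneg _) (Real.rpow_nonneg (abs_nonneg _) _))
      (integral_Ioo_abs_rpow_le hx (by linarith) hpp')
      (integral_Ioo_sq_mul_abs_rpow_le hx hx' (by linarith) (by linarith))

/-- For `2 ≤ p ≤ p' < ∞` and `0 < κ ≤ κ'` there is a constant
`c_p ∈ (0,∞)` depending only on `p` such that `Θ_{p,κ}(x) ≤ c_p Θ_{p',κ'}(x)` for every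
continuously differentiable `x : [0,1] → ℝ` with `x 0 = x 1 = 0`. -/
theorem ThetaWeight_mono (p : ℝ) (hp : 2 ≤ p) :
    ∃ c : ℝ, 0 < c ∧
      ∀ (p' κ κ' : ℝ), p ≤ p' → 0 < κ → κ ≤ κ' →
        ∀ (x x' : ℝ → ℝ),
          (∀ r ∈ Icc (0:ℝ) 1, HasDerivWithinAt x (x' r) (Icc (0:ℝ) 1) r) →
          ContinuousOn x' (Icc (0:ℝ) 1) →
          x 0 = 0 → x 1 = 0 →
          ThetaWeight p κ x x' ≤ c * ThetaWeight p' κ' x x' := by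
  refine ⟨2 + (p / 2) ^ 2, by positivity, ?_⟩
  intro p' κ κ' hpp' _ hκκ' x x' hderiv hx' _ _
  have hx : ContinuousOn x (Icc 0 1) := fun r hr => (hderiv r hr).continuousWithinAt
  have hexp : Real.exp (κ * ∫ r in Ioo (0:ℝ) 1, (x r) ^ 2) ≤
      Real.exp (κ' * ∫ r in Ioo (0:ℝ) 1, (x r) ^ 2) :=
    Real.exp_le_exp.2 (mul_le_mul_of_nonneg_right hκκ' (integral_nonneg fun r => sq_nonneg _))
  rw [ThetaWeight_eq_exp_mul_thetaFactor, ThetaWeight_eq_exp_mul_thetaFactor, mul_left_comm]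
  exact mul_le_mul hexp (thetaFactor_le hp hpp' hx hx') (thetaFactor_nonneg p x x')
    (Real.exp_nonneg _)
end
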